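/- arXiv:1905.04653 — 6 statements merged into one kernel-verified Lean document; each statement's English description precedes it below -/
import Mathlib

section
/- For every positive integer n, there exists a 2-coloring of the edges of the complete graph K_{3n-2} with no monochromatic connected matching of size n. Specifically, partition the vertices into sets U1 of size 2n-1 and U2 of size n-1, color all edges between U1 and U2 red and all other edges blue; then neither color class contains a connected matching with n edges. -/
open SimpleGraph

variable {V : Type*}

/-- `M` is a matching: a finite set of ordered pairs of adjacent vertices
with pairwise disjoint endpoints. -/
def IsMatchingSet (G : SimpleGraph V) (M : Finset (V × V)) : Prop :=
  (∀ e ∈ M, G.Adj e.1 e.2) ∧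
  ∀ e ∈ M, ∀ f ∈ M, e ≠ f →
    e.1 ≠ f.1 ∧ e.1 ≠ f.2 ∧ e.2 ≠ f.1 ∧ e.2 ≠ f.2

/-- `M` is a connected matching in `G`: a matching all of whose edges lie in
one connected component of `G`. -/
def ConnMatching (G : SimpleGraph V) (M : Finset (V × V)) : Prop :=
  IsMatchingSet G M ∧ ∀ e ∈ M, ∀ f ∈ M, G.Reachable e.1 f.1

/-- Vertex `v` is covered by the matching `M`. -/
def Covers (M : Finset (V × V)) (v : V) : Prop :=
  ∃ e ∈ M, v = e.1 ∨ v = e.2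

/-- The color-`i` subgraph of `G` under the edge-coloring `c`. -/
def colorSub (G : SimpleGraph V) {k : ℕ} (c : Sym2 V → Fin k) (i : Fin k) :
    SimpleGraph V :=
  SimpleGraph.fromRel (fun u v => G.Adj u v ∧ c s(u, v) = i)

/-- `K_{3n-2}` admits a 2-edge-coloring (red between `U₁` of size `2n-1` and
`U₂` of size `n-1`, blue elsewhere) with no monochromatic connected matching
of size `n`. -/
theorem stmt0 (n : ℕ) (hn : 1 ≤ n)
    (red blue : SimpleGraph (Fin (3 * n - 2)))
    (hred : red = SimpleGraph.fromRel
      (fun u v => u.val < 2 * n - 1 ∧ ¬ v.val < 2 * n - 1))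
    (hblue : blue = SimpleGraph.fromRel
      (fun u v => (u.val < 2 * n - 1 ↔ v.val < 2 * n - 1))) :
    (¬ ∃ M, ConnMatching red M ∧ M.card = n) ∧
    (¬ ∃ M, ConnMatching blue M ∧ M.card = n) := by
  subst hred hblue
  constructor
  · rintro ⟨M, ⟨⟨hadj, hdisj⟩, -⟩, hcard⟩
    -- map each edge to its endpoint in U₂ (shifted), an injection into `range (n-1)`
    set g : Fin (3 * n - 2) × Fin (3 * n - 2) → ℕ :=
      fun e => (if e.1.val < 2 * n - 1 then e.2.val else e.1.val) - (2 * n - 1) with hg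
    have hB : ∀ e ∈ M,
        2 * n - 1 ≤ (if e.1.val < 2 * n - 1 then e.2.val else e.1.val) := by
      intro e he
      have h := hadj e he
      rw [SimpleGraph.fromRel_adj] at h
      obtain ⟨-, h2⟩ := h
      rcases h2 with h2 | h2 <;> split_ifs with h1 <;> omega
    have hle : M.card ≤ (Finset.range (n - 1)).card := by
      apply Finset.card_le_card_of_injOn g
      · intro e he
        simp only [Finset.mem_coe, Finset.mem_range, hg]
        have hBe := hB e he
        have h1 : e.1.val < 3 * n - 2 := e.1.isLt
        have h2 : e.2.val < 3 * n - 2 := e.2.isLt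
        split_ifs at hBe ⊢ <;> omega
      · intro e he f hf hef
        by_contra hne
        obtain ⟨a, b, c, d⟩ := hdisj e he f hf hne
        have a' : e.1.val ≠ f.1.val := fun h => a (Fin.ext h)
        have b' : e.1.val ≠ f.2.val := fun h => b (Fin.ext h)
        have c' : e.2.val ≠ f.1.val := fun h => c (Fin.ext h)
        have d' : e.2.val ≠ f.2.val := fun h => d (Fin.ext h)
        have hBe := hB e he
        have hBf := hB f hf
        simp only [hg] at hef
        split_ifs at hBe hBf hef <;> omega
    rw [Finset.card_range] at hle
    omega
  · rintro ⟨M, ⟨⟨hadj, hdisj⟩, hconn⟩, hcard⟩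
    obtain ⟨e₀, he₀⟩ : M.Nonempty := Finset.card_pos.mp (by omega)
    have hside : ∀ u v : Fin (3 * n - 2),
        (SimpleGraph.fromRel
          (fun u v : Fin (3 * n - 2) => (u.val < 2 * n - 1 ↔ v.val < 2 * n - 1))).Reachable u v →
        (u.val < 2 * n - 1 ↔ v.val < 2 * n - 1) := by
      intro u v h
      obtain ⟨w⟩ := h
      induction w with
      | nil => exact Iff.rfl
      | cons h p ih =>
        rw [SimpleGraph.fromRel_adj] at h
        refine Iff.trans ?_ ih
        tauto
    set S : Finset (Fin (3 * n - 2)) :=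
      Finset.univ.filter (fun v => (v.val < 2 * n - 1 ↔ e₀.1.val < 2 * n - 1)) with hS
    have hsub : ∀ e ∈ M, e.1 ∈ S ∧ e.2 ∈ S := by
      intro e he
      have h1 := hside _ _ (hconn e he e₀ he₀)
      have h2 := hadj e he
      rw [SimpleGraph.fromRel_adj] at h2
      obtain ⟨-, h2⟩ := h2
      constructor <;> simp only [hS, Finset.mem_filter, Finset.mem_univ, true_and] <;> tauto
    have hcard2 : (M.biUnion (fun e => {e.1, e.2})).card = 2 * n := by
      rw [Finset.card_biUnion]
      · have hc : ∀ e ∈ M, ({e.1, e.2} : Finset (Fin (3 * n - 2))).card = 2 := by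
          intro e he
          have h := hadj e he
          rw [SimpleGraph.fromRel_adj] at h
          rw [Finset.card_insert_of_notMem (by simpa using h.1), Finset.card_singleton]
        rw [Finset.sum_congr rfl hc, Finset.sum_const, hcard, smul_eq_mul]
        ring
      · intro e he f hf hne
        obtain ⟨a, b, c, d⟩ := hdisj e he f hf hne
        unfold Function.onFun
        rw [Finset.disjoint_left]
        intro x hx hx'
        simp only [Finset.mem_insert, Finset.mem_singleton] at hx hx'
        rcases hx with rfl | rfl <;> rcases hx' with h' | h'
        · exact a h'
        · exact b h'
        · exact c h'
        · exact d h'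
    have hsubS : M.biUnion (fun e => {e.1, e.2}) ⊆ S := by
      intro x hx
      simp only [Finset.mem_biUnion, Finset.mem_insert, Finset.mem_singleton] at hx
      obtain ⟨e, he, rfl | rfl⟩ := hx
      · exact (hsub e he).1
      · exact (hsub e he).2
    have h2n : 2 * n ≤ S.card := hcard2 ▸ Finset.card_le_card hsubS
    have hSle : S.card ≤ 2 * n - 1 := by
      by_cases hb : e₀.1.val < 2 * n - 1
      · calc S.card ≤ (Finset.range (2 * n - 1)).card := by
              apply Finset.card_le_card_of_injOn (fun v => v.val)
              · intro v hv
                simp only [hS, Finset.mem_coe, Finset.mem_filter, Finset.mem_univ, true_and] at hv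
                simp only [Finset.mem_coe, Finset.mem_range]
                tauto
              · intro u _ v _ h
                exact Fin.ext h
          _ = 2 * n - 1 := Finset.card_range _
      · calc S.card ≤ (Finset.range (2 * n - 1)).card := by
              apply Finset.card_le_card_of_injOn (fun v => v.val - (2 * n - 1))
              · intro v hv
                simp only [hS, Finset.mem_coe, Finset.mem_filter, Finset.mem_univ, true_and] at hv
                have := v.isLt
                simp only [Finset.mem_coe, Finset.mem_range]
                omega
              · intro u hu v hv h
                simp only [hS, Finset.coe_filter, Set.mem_setOf_eq, Finset.mem_univ,
                  true_and] at hu hv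
                have hu' : ¬ u.val < 2 * n - 1 := fun h' => hb (hu.mp h')
                have hv' : ¬ v.val < 2 * n - 1 := fun h' => hb (hv.mp h')
                simp only at h
                exact Fin.ext (by omega)
          _ = 2 * n - 1 := Finset.card_range _
    omega
end

section
/- Let n ≥ 1 and let H be the graph obtained from the complete graph on N = n1 + 2n - 2 vertices by deleting all edges inside a vertex set U1 of size n1. Then H admits a 2-edge-coloring with no monochromatic connected matching of size n: partition V(H) - U1 into sets U2, U3 each of size n-1, color all edges incident with U2 red and all remaining edges of H blue; then neither color class contains a connected matching with n edges. -/
open SimpleGraph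

variable {V : Type*}

/-- The graph obtained from `K_{n₁+2n-2}` by deleting the edges inside a set
`U₁` of size `n₁` admits a 2-edge-coloring (red the edges incident with a set
`U₂` of size `n-1`, blue the rest) with no monochromatic connected matching of
size `n`. -/
theorem stmt1 (n n1 : ℕ) (hn : 1 ≤ n)
    (red blue : SimpleGraph (Fin (n1 + 2 * n - 2)))
    (hred : red = SimpleGraph.fromRel (fun u v =>
      ¬ (u.val < n1 ∧ v.val < n1) ∧
      ((n1 ≤ u.val ∧ u.val < n1 + (n - 1)) ∨ (n1 ≤ v.val ∧ v.val < n1 + (n - 1)))))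
    (hblue : blue = SimpleGraph.fromRel (fun u v =>
      ¬ (u.val < n1 ∧ v.val < n1) ∧
      ¬ (n1 ≤ u.val ∧ u.val < n1 + (n - 1)) ∧
      ¬ (n1 ≤ v.val ∧ v.val < n1 + (n - 1)))) :
    (¬ ∃ M, ConnMatching red M ∧ M.card = n) ∧
    (¬ ∃ M, ConnMatching blue M ∧ M.card = n) := by
  have key : ∀ (G : SimpleGraph (Fin (n1 + 2 * n - 2))) (M : Finset (Fin (n1 + 2 * n - 2) × Fin (n1 + 2 * n - 2)))
      (P : Fin (n1 + 2 * n - 2) → Prop) [DecidablePred P],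
      IsMatchingSet G M → (∀ e ∈ M, P e.1 ∨ P e.2) →
      M.card ≤ (Finset.univ.filter P).card := by
    intro G M P _ hM hP
    apply Finset.card_le_card_of_injOn (fun e => if P e.1 then e.1 else e.2)
    · intro e he
      simp only [Finset.mem_filter, Finset.mem_univ, true_and]
      rcases hP e he with h | h
      · simp [h]
      · by_cases h1 : P e.1 <;> simp [h1, h]
    · intro e he f hf hef
      by_contra hne
      obtain ⟨h1, h2, h3, h4⟩ := hM.2 e he f hf hne
      by_cases pe : P e.1 <;> by_cases pf : P f.1 <;>
        simp_all
  have injval : ∀ (P : Fin (n1 + 2 * n - 2) → Prop) [DecidablePred P] (a b : ℕ),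
      (∀ v : Fin (n1 + 2 * n - 2), P v → a ≤ v.val ∧ v.val < b) →
      (Finset.univ.filter P).card ≤ b - a := by
    intro P _ a b h
    have := Finset.card_le_card_of_injOn (f := Fin.val)
      (t := Finset.Ico a b) (s := Finset.univ.filter P)
      (by intro v hv
          simp only [Finset.mem_coe, Finset.mem_filter, Finset.mem_univ, true_and] at hv
          simp [Finset.mem_Ico]; exact h v hv)
      (by intro x _ y _ hxy; exact Fin.val_injective hxy)
    simpa using this
  constructor
  · rintro ⟨M, ⟨hM, -⟩, hcard⟩
    have h1 : M.card ≤ (Finset.univ.filter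
        (fun v : Fin (n1 + 2 * n - 2) => n1 ≤ v.val ∧ v.val < n1 + (n - 1))).card := by
      apply key red M _ hM
      intro e he
      have := hM.1 e he
      rw [hred] at this
      rw [SimpleGraph.fromRel_adj] at this
      rcases this.2 with ⟨-, h | h⟩ | ⟨-, h | h⟩
      · exact Or.inl h
      · exact Or.inr h
      · exact Or.inr h
      · exact Or.inl h
    have h2 := injval (fun v : Fin (n1 + 2 * n - 2) => n1 ≤ v.val ∧ v.val < n1 + (n - 1))
      n1 (n1 + (n - 1)) (fun v hv => hv)
    omega
  · rintro ⟨M, ⟨hM, -⟩, hcard⟩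
    have h1 : M.card ≤ (Finset.univ.filter
        (fun v : Fin (n1 + 2 * n - 2) => n1 + (n - 1) ≤ v.val)).card := by
      apply key blue M _ hM
      intro e he
      have := hM.1 e he
      rw [hblue] at this
      rw [SimpleGraph.fromRel_adj] at this
      have b1 := e.1.isLt
      have b2 := e.2.isLt
      rcases this.2 with ⟨h0, hu, hv⟩ | ⟨h0, hu, hv⟩ <;>
        [skip; skip] <;>
        · simp only [not_and, not_lt, not_le] at h0 hu hv ⊢
          omega
    have h2 := injval (fun v : Fin (n1 + 2 * n - 2) => n1 + (n - 1) ≤ v.val)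
      (n1 + (n - 1)) (n1 + 2 * n - 2) (fun v hv => ⟨hv, v.isLt⟩)
    omega
end

section
/- Let x1 ≥ x2 ≥ 1 and s ≥ 2, and let G be a complete s-partite graph with parts of sizes n1, ..., ns such that N = n1 + ... + ns ≥ 2x1 + x2 - 1 and N - ni ≥ x1 + x2 - 1 for every i. Then for every partition E(G) = E1 ∪ E2 of the edges of G, either G[E1] contains a connected matching of size at least x1 or G[E2] contains a connected matching of size at least x2. -/
open SimpleGraph

variable {V : Type*}

namespace CMProof

attribute [local instance 10] Classical.propDecidable
set_option linter.unusedSectionVars false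

open Finset

variable [Fintype V] [DecidableEq V]

/-- support of a partial matching function -/
noncomputable def msupp (f : V → Option V) : Finset V := Finset.univ.filter (fun x => (f x).isSome)

lemma mem_msupp {f : V → Option V} {x : V} : x ∈ msupp f ↔ ∃ y, f x = some y := by
  simp [msupp, Option.isSome_iff_exists]

lemma not_mem_msupp {f : V → Option V} {x : V} : x ∉ msupp f ↔ f x = none := by
  rw [mem_msupp]; push_neg
  constructor
  · intro h
    cases hfx : f x with
    | none => rfl
    | some y => exact absurd hfx (h y)
  · intro h y hy; rw [h] at hy; exact absurd hy (by simp)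

/-- partial-involution matching with edges in relation `R` and vertices in `D` -/
def IsMFun (R : V → V → Prop) (D : Finset V) (f : V → Option V) : Prop :=
  ∀ ⦃x y⦄, f x = some y → x ∈ D ∧ y ∈ D ∧ R x y ∧ y ≠ x ∧ f y = some x

lemma IsMFun.msupp_subset {R : V → V → Prop} {D : Finset V} {f : V → Option V}
    (hf : IsMFun R D f) : msupp f ⊆ D := by
  intro x hx
  obtain ⟨y, hy⟩ := mem_msupp.1 hx
  exact (hf hy).1

lemma IsMFun.mono {R : V → V → Prop} {D D' : Finset V} {f : V → Option V}
    (hf : IsMFun R D f) (hDD : D ⊆ D') : IsMFun R D' f := by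
  intro x y hxy
  obtain ⟨h1, h2, h3, h4, h5⟩ := hf hxy
  exact ⟨hDD h1, hDD h2, h3, h4, h5⟩

lemma isMFun_none (R : V → V → Prop) (D : Finset V) :
    IsMFun R D (fun _ => none) := by
  intro x y hxy; simp at hxy

lemma msupp_none : msupp (fun _ => (none : Option V)) = ∅ := by
  ext x; simp [mem_msupp]

/-- extend a matching by a fresh edge -/
lemma IsMFun.extend {R : V → V → Prop} {D : Finset V} {f : V → Option V}
    (hf : IsMFun R D f) {x y : V}
    (hx : f x = none) (hy : f y = none) (hxy : x ≠ y)
    (hR : R x y) (hR' : R y x) (hxD : x ∈ D) (hyD : y ∈ D) :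
    IsMFun R D (fun z => if z = x then some y else if z = y then some x else f z) ∧
    msupp (fun z => if z = x then some y else if z = y then some x else f z)
      = insert x (insert y (msupp f)) := by
  constructor
  · intro a b hab
    by_cases hax : a = x
    · subst hax
      obtain rfl : y = b := by simpa using hab
      refine ⟨hxD, hyD, hR, hxy.symm, ?_⟩
      simp [if_neg (Ne.symm hxy)]
    · by_cases hay : a = y
      · subst hay
        obtain rfl : x = b := by simpa [hax] using hab
        refine ⟨hyD, hxD, hR', hxy, ?_⟩
        simp
      · simp only [if_neg hax, if_neg hay] at hab
        obtain ⟨h1, h2, h3, h4, h5⟩ := hf hab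
        have hbx : b ≠ x := by
          rintro rfl
          rw [hx] at h5; exact absurd h5 (by simp)
        have hby : b ≠ y := by
          rintro rfl
          rw [hy] at h5; exact absurd h5 (by simp)
        refine ⟨h1, h2, h3, h4, ?_⟩
        simp only [if_neg hbx, if_neg hby]; exact h5
  · ext z
    by_cases hzx : z = x
    · subst hzx; simp [mem_msupp]
    by_cases hzy : z = y
    · subst hzy; simp [mem_msupp, if_neg (Ne.symm hxy)]
    · simp [mem_msupp, hzx, hzy]

lemma IsMFun.even_card {R : V → V → Prop} {D : Finset V} {f : V → Option V}
    (hf : IsMFun R D f) : Even (msupp f).card := by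
  generalize hn : (msupp f).card = n
  induction n using Nat.strong_induction_on generalizing f with
  | _ n ih =>
    rcases Nat.eq_zero_or_pos n with h0 | hpos
    · simp [h0]
    · have hne : (msupp f).Nonempty := by rw [← Finset.card_pos, hn]; exact hpos
      obtain ⟨x, hx⟩ := hne
      obtain ⟨y, hy⟩ := mem_msupp.1 hx
      obtain ⟨_, _, _, hyx, hfy⟩ := hf hy
      have hymem : y ∈ msupp f := mem_msupp.2 ⟨x, hfy⟩
      have hn2 : 2 ≤ n := by
        rw [← hn]
        have : ({x, y} : Finset V) ⊆ msupp f := by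
          intro z hz; rcases Finset.mem_insert.1 hz with rfl | hz
          · exact hx
          · rcases Finset.mem_singleton.1 hz with rfl; exact hymem
        calc 2 = ({x, y} : Finset V).card := (Finset.card_pair (Ne.symm hyx)).symm
          _ ≤ _ := Finset.card_le_card this
      set f' : V → Option V := fun z => if z = x ∨ z = y then none else f z with hf'def
      have hf' : IsMFun R D f' := by
        intro a b hab
        simp only [hf'def] at hab
        by_cases h : a = x ∨ a = y
        · simp [h] at hab
        · rw [if_neg h] at hab
          push_neg at h
          obtain ⟨h1, h2, h3, h4, h5⟩ := hf hab
          have hbx : b ≠ x := by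
            rintro rfl
            rw [hy] at h5; injection h5 with h5'; exact h.2 h5'.symm
          have hby : b ≠ y := by
            rintro rfl
            rw [hfy] at h5; injection h5 with h5'; exact h.1 h5'.symm
          refine ⟨h1, h2, h3, h4, ?_⟩
          simp only [hf'def]
          rw [if_neg (by push_neg; exact ⟨hbx, hby⟩)]
          exact h5
      have hsupp' : msupp f' = msupp f \ {x, y} := by
        ext z
        simp only [hf'def, mem_msupp, Finset.mem_sdiff, Finset.mem_insert, Finset.mem_singleton]
        by_cases h : z = x ∨ z = y
        · simp [h]
        · simp [h]
      have hcard' : (msupp f').card = n - 2 := by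
        rw [hsupp', Finset.card_sdiff_of_subset]
        · rw [hn, Finset.card_pair (Ne.symm hyx)]
        · intro z hz; rcases Finset.mem_insert.1 hz with rfl | hz
          · exact hx
          · rcases Finset.mem_singleton.1 hz with rfl; exact hymem
      have hev := ih (n - 2) (by omega) hf' hcard'
      rw [Nat.even_iff] at hev ⊢
      omega

/-- maximize a ℕ-measure over a nonempty family -/
lemma exists_max_meas {α : Sort*} (P : α → Prop) (h : ∃ a, P a) (meas : α → ℕ) (B : ℕ)
    (hB : ∀ a, P a → meas a ≤ B) :
    ∃ a, P a ∧ ∀ b, P b → meas b ≤ meas a := by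
  obtain ⟨a0, ha0⟩ := h
  set S : Finset ℕ := (Finset.range (B + 1)).filter (fun n => ∃ a, P a ∧ meas a = n) with hS
  have hne : S.Nonempty := ⟨meas a0, by
    simp only [hS, Finset.mem_filter, Finset.mem_range]
    exact ⟨Nat.lt_succ_of_le (hB a0 ha0), a0, ha0, rfl⟩⟩
  obtain ⟨a, ha, hmax⟩ : ∃ a, P a ∧ meas a = S.max' hne := by
    have := S.max'_mem hne
    simp only [hS, Finset.mem_filter] at this
    exact this.2
  refine ⟨a, ha, fun b hb => ?_⟩
  rw [hmax]
  apply S.le_max'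
  simp only [hS, Finset.mem_filter, Finset.mem_range]
  exact ⟨Nat.lt_succ_of_le (hB b hb), b, hb, rfl⟩

lemma exists_maxMF (R : V → V → Prop) (D : Finset V) :
    ∃ f, IsMFun R D f ∧ ∀ g, IsMFun R D g → (msupp g).card ≤ (msupp f).card := by
  apply exists_max_meas (IsMFun R D) ⟨fun _ => none, isMFun_none R D⟩
    (fun f => (msupp f).card) (Fintype.card V)
  intro f _
  exact Finset.card_le_univ _

/-- convert a functional matching with mutually reachable support into a `ConnMatching` -/
lemma exists_connMatching (S : SimpleGraph V) {D : Finset V} {f : V → Option V}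
    (hf : IsMFun S.Adj D f)
    (hreach : ∀ x ∈ msupp f, ∀ y ∈ msupp f, S.Reachable x y) {k : ℕ}
    (hk : 2 * k ≤ (msupp f).card) :
    ∃ M : Finset (V × V), ConnMatching S M ∧ k ≤ M.card := by
  set E : Finset (Sym2 V) := (msupp f).image (fun x => s(x, (f x).getD x)) with hE
  set M : Finset (V × V) := E.image Quot.out with hM
  have sym2_mk_out : ∀ q : Sym2 V, s((Quot.out q).1, (Quot.out q).2) = q := by
    intro q; exact Quot.out_eq q
  have hedge : ∀ e ∈ M, f e.1 = some e.2 := by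
    intro e he
    simp only [hM, Finset.mem_image] at he
    obtain ⟨q, hq, hqe⟩ := he
    simp only [hE, Finset.mem_image] at hq
    obtain ⟨x, hx, hxq⟩ := hq
    obtain ⟨y, hfx⟩ := mem_msupp.1 hx
    rw [hfx] at hxq
    simp only [Option.getD_some] at hxq
    have he2 : s(e.1, e.2) = s(x, y) := by
      rw [← hqe, ← hxq]
      exact sym2_mk_out s(x, y)
    rcases Sym2.eq_iff.1 he2 with ⟨h1, h2⟩ | ⟨h1, h2⟩
    · rw [h1, h2]; exact hfx
    · rw [h1, h2]; exact (hf hfx).2.2.2.2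
  have hcanon : ∀ e ∈ M, (s(e.1, e.2) : Sym2 V).out = e := by
    intro e he
    simp only [hM, Finset.mem_image] at he
    obtain ⟨q, _, hqe⟩ := he
    have : (s(e.1, e.2) : Sym2 V) = q := by
      rw [← hqe]; exact sym2_mk_out q
    rw [this, hqe]
  have hmem_supp : ∀ e ∈ M, e.1 ∈ msupp f ∧ e.2 ∈ msupp f := by
    intro e he
    have h1 := hedge e he
    exact ⟨mem_msupp.2 ⟨_, h1⟩, mem_msupp.2 ⟨_, (hf h1).2.2.2.2⟩⟩
  refine ⟨M, ⟨⟨fun e he => (hf (hedge e he)).2.2.1, ?_⟩, ?_⟩, ?_⟩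
  · intro e he g hg hne
    have he1 := hedge e he
    have hg1 := hedge g hg
    have key : e.1 = g.2 → False := by
      intro h
      have : f g.2 = some g.1 := (hf hg1).2.2.2.2
      rw [← h, he1] at this
      injection this with h2
      have : (s(e.1, e.2) : Sym2 V) = s(g.1, g.2) := by
        rw [Sym2.eq_iff]; right; exact ⟨h, h2⟩
      have := congrArg Quot.out this
      rw [hcanon e he, hcanon g hg] at this
      exact hne this
    have key2 : e.2 = g.2 → False := by
      intro h
      have : f e.2 = some e.1 := (hf he1).2.2.2.2
      rw [h, (hf hg1).2.2.2.2] at this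
      injection this with h2
      exact hne (Prod.ext_iff.2 ⟨h2.symm, h⟩)
    refine ⟨?_, fun h => key h, ?_, fun h => key2 h⟩
    · intro h
      rw [h, hg1] at he1
      injection he1 with h2
      exact hne (Prod.ext_iff.2 ⟨h, h2.symm⟩)
    · intro h
      have : f e.2 = some e.1 := (hf he1).2.2.2.2
      rw [h, hg1] at this
      injection this with h2
      have : (s(e.1, e.2) : Sym2 V) = s(g.1, g.2) := by
        rw [Sym2.eq_iff]; right; exact ⟨h2.symm, h⟩
      have := congrArg Quot.out this
      rw [hcanon e he, hcanon g hg] at this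
      exact hne this
  · intro e he g hg
    exact hreach e.1 (hmem_supp e he).1 g.1 (hmem_supp g hg).1
  · have hsub : msupp f ⊆ M.biUnion (fun e => {e.1, e.2}) := by
      intro x hx
      obtain ⟨y, hfx⟩ := mem_msupp.1 hx
      have hq : (s(x, y) : Sym2 V) ∈ E := by
        simp only [hE, Finset.mem_image]
        exact ⟨x, hx, by simp [hfx]⟩
      have ho400 : (s(x, y) : Sym2 V).out ∈ M := by
        simp only [hM, Finset.mem_image]; exact ⟨_, hq, rfl⟩
      set e := (s(x, y) : Sym2 V).out with hee
      have : (s(e.1, e.2) : Sym2 V) = s(x, y) := by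
        rw [hee]; exact Quot.out_eq _
      rw [Finset.mem_biUnion]
      refine ⟨e, ho400, ?_⟩
      rcases Sym2.eq_iff.1 this with ⟨h1, _⟩ | ⟨_, h2⟩
      · simp [← h1]
      · simp [← h2]
    have h1 : (msupp f).card ≤ 2 * M.card := by
      calc (msupp f).card ≤ (M.biUnion (fun e => {e.1, e.2})).card := Finset.card_le_card hsub
        _ ≤ ∑ e ∈ M, ({e.1, e.2} : Finset V).card := Finset.card_biUnion_le
        _ ≤ ∑ _e ∈ M, 2 := Finset.sum_le_sum (fun e _ => Finset.card_insert_le _ _)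
        _ = 2 * M.card := by rw [Finset.sum_const, smul_eq_mul, mul_comm]
    omega

/-- complete bipartite matching builder -/
lemma bip_match (R : V → V → Prop) (X Y : Finset V)
    (hd : ∀ x ∈ X, x ∉ Y) (hadj : ∀ x ∈ X, ∀ y ∈ Y, R x y ∧ R y x) :
    ∃ f, IsMFun R (X ∪ Y) f ∧ 2 * min X.card Y.card ≤ (msupp f).card := by
  generalize hn : X.card = n
  induction n using Nat.strong_induction_on generalizing X Y with
  | _ n ih =>
    rcases Finset.eq_empty_or_nonempty X with rfl | ⟨x, hx⟩
    · refine ⟨fun _ => none, isMFun_none _ _, ?_⟩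
      have hn0 : n = 0 := by simpa using hn.symm
      simp [msupp_none, hn0]
    rcases Finset.eq_empty_or_nonempty Y with rfl | ⟨y, hy⟩
    · exact ⟨fun _ => none, isMFun_none _ _, by simp [msupp_none]⟩
    · obtain ⟨f, hf, hcard⟩ := ih (n - 1) (by
        have : 0 < n := by rw [← hn]; exact Finset.card_pos.2 ⟨x, hx⟩
        omega) (X.erase x) (Y.erase y)
        (fun a ha => fun hmem => hd a (Finset.mem_of_mem_erase ha) (Finset.mem_of_mem_erase hmem))
        (fun a ha b hb => hadj a (Finset.mem_of_mem_erase ha) b (Finset.mem_of_mem_erase hb))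
        (by rw [Finset.card_erase_of_mem hx, hn])
      have hfx : f x = none := by
        rw [← not_mem_msupp]
        intro hmem
        have := hf.msupp_subset hmem
        rcases Finset.mem_union.1 this with h | h
        · exact (Finset.notMem_erase x X) h
        · exact hd x hx (Finset.mem_of_mem_erase h)
      have hfy : f y = none := by
        rw [← not_mem_msupp]
        intro hmem
        have := hf.msupp_subset hmem
        rcases Finset.mem_union.1 this with h | h
        · exact hd y (Finset.mem_of_mem_erase h) hy
        · exact (Finset.notMem_erase y Y) h
      have hxy : x ≠ y := fun h => hd x hx (h ▸ hy)
      have hf' := (hf.mono (by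
        intro z hz
        rcases Finset.mem_union.1 hz with h | h
        · exact Finset.mem_union_left _ (Finset.mem_of_mem_erase h)
        · exact Finset.mem_union_right _ (Finset.mem_of_mem_erase h))).extend hfx hfy hxy
        (hadj x hx y hy).1 (hadj x hx y hy).2 (Finset.mem_union_left _ hx)
        (Finset.mem_union_right _ hy)
      refine ⟨_, hf'.1, ?_⟩
      rw [hf'.2]
      have hxn : x ∉ insert y (msupp f) := by
        rw [Finset.mem_insert]
        push_neg
        refine ⟨hxy, ?_⟩
        rw [not_mem_msupp]; exact hfx
      have hyn : y ∉ msupp f := by rw [not_mem_msupp]; exact hfy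
      rw [Finset.card_insert_of_notMem hxn, Finset.card_insert_of_notMem hyn]
      have h1 : min (X.erase x).card (Y.erase y).card + 1 ≥ min X.card Y.card := by
        rw [Finset.card_erase_of_mem hx, Finset.card_erase_of_mem hy]
        have hx1 : 1 ≤ X.card := Finset.card_pos.2 ⟨x, hx⟩
        have hy1 : 1 ≤ Y.card := Finset.card_pos.2 ⟨y, hy⟩
        omega
      omega

section Reach

variable (R : V → V → Prop) (U : Finset V)

def stepRel : V → V → Prop := fun a b => a ∈ U ∧ b ∈ U ∧ R a b

def ReachIn (a b : V) : Prop := Relation.ReflTransGen (stepRel R U) a b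

variable {R U}

lemma stepRel.symm (hR : Symmetric R) : Symmetric (stepRel R U) :=
  fun _ _ h => ⟨h.2.1, h.1, hR h.2.2⟩

lemma ReachIn.symm (hR : Symmetric R) {a b : V} (h : ReachIn R U a b) : ReachIn R U b a :=
  by haveI : Std.Symm (stepRel R U) := ⟨fun _ _ h => stepRel.symm hR h⟩; exact (Std.Symm.symm _ _ (h : Relation.ReflTransGen (stepRel R U) a b) : Relation.ReflTransGen (stepRel R U) b a)

lemma ReachIn.mono {U' : Finset V} (hUU : U ⊆ U') {a b : V} (h : ReachIn R U a b) :
    ReachIn R U' a b :=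
  Relation.ReflTransGen.mono (fun a b (hs : stepRel R U a b) => (⟨hUU hs.1, hUU hs.2.1, hs.2.2⟩ : stepRel R U' a b)) _ _ h

lemma ReachIn.to_rtg {a b : V} (h : ReachIn R U a b) : Relation.ReflTransGen R a b :=
  Relation.ReflTransGen.mono (fun a b (hs : stepRel R U a b) => (hs.2.2 : R a b)) _ _ h

noncomputable def compFin (R : V → V → Prop) (U : Finset V) (x : V) : Finset V :=
  U.filter (ReachIn R U x)

lemma compFin_subset {x : V} : compFin R U x ⊆ U := Finset.filter_subset _ _

lemma mem_compFin_self {x : V} (hx : x ∈ U) : x ∈ compFin R U x :=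
  Finset.mem_filter.2 ⟨hx, Relation.ReflTransGen.refl⟩

lemma reachIn_of_mem_compFin {x y : V} (h : y ∈ compFin R U x) : ReachIn R U x y :=
  (Finset.mem_filter.1 h).2

lemma mem_compFin {x y : V} : y ∈ compFin R U x ↔ y ∈ U ∧ ReachIn R U x y :=
  Finset.mem_filter

lemma compFin_eq_of_reachIn (hR : Symmetric R) {x y : V} (h : ReachIn R U x y) :
    compFin R U x = compFin R U y := by
  ext z
  simp only [mem_compFin]
  exact ⟨fun hz => ⟨hz.1, (h.symm hR).trans hz.2⟩, fun hz => ⟨hz.1, h.trans hz.2⟩⟩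

lemma compFin_eq_of_mem (hR : Symmetric R) {x y : V} (h : y ∈ compFin R U x) :
    compFin R U x = compFin R U y :=
  compFin_eq_of_reachIn hR (reachIn_of_mem_compFin h)

lemma mem_compFin_of_adj {u x y : V} (hx : x ∈ compFin R U u) (hy : y ∈ U) (hR : R x y) :
    y ∈ compFin R U u := by
  rw [mem_compFin] at hx ⊢
  exact ⟨hy, hx.2.tail ⟨(compFin_subset (x := u)) (mem_compFin.2 hx), hy, hR⟩⟩

lemma reachIn_compFin_self (hR : Symmetric R) {x y : V} (hx : x ∈ U) (h : ReachIn R U x y) :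
    ReachIn R (compFin R U x) x y := by
  induction h with
  | refl => exact Relation.ReflTransGen.refl
  | tail hab hbc ih =>
    rename_i b c
    have hb : b ∈ compFin R U x := mem_compFin.2 ⟨hbc.1, hab⟩
    have hc : c ∈ compFin R U x := mem_compFin.2 ⟨hbc.2.1, hab.tail hbc⟩
    exact ih.tail ⟨hb, hc, hbc.2.2⟩

/-- length-indexed walks inside `U` -/
def WalkN (R : V → V → Prop) (U : Finset V) : ℕ → V → V → Prop
  | 0, a, b => a = b ∧ a ∈ U
  | (n+1), a, c => a ∈ U ∧ ∃ b, R a b ∧ WalkN R U n b c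

lemma walkN_zero {a b : V} : WalkN R U 0 a b ↔ (a = b ∧ a ∈ U) := Iff.rfl

lemma walkN_succ {n : ℕ} {a c : V} :
    WalkN R U (n + 1) a c ↔ (a ∈ U ∧ ∃ b, R a b ∧ WalkN R U n b c) := Iff.rfl

lemma WalkN.mem_left {n : ℕ} {a b : V} (h : WalkN R U n a b) : a ∈ U := by
  cases n with
  | zero => exact (walkN_zero.1 h).2
  | succ n => exact (walkN_succ.1 h).1

lemma WalkN.tail' {n : ℕ} {a b c : V} (h : WalkN R U n a b) (hbc : stepRel R U b c) :
    WalkN R U (n + 1) a c := by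
  induction n generalizing a with
  | zero =>
    obtain ⟨rfl, ha⟩ := walkN_zero.1 h
    exact walkN_succ.2 ⟨ha, c, hbc.2.2, walkN_zero.2 ⟨rfl, hbc.2.1⟩⟩
  | succ n ih =>
    obtain ⟨ha, b', hb', hw⟩ := walkN_succ.1 h
    exact walkN_succ.2 ⟨ha, b', hb', ih hw⟩

lemma exists_walkN {a b : V} (ha : a ∈ U) (h : ReachIn R U a b) : ∃ n, WalkN R U n a b := by
  induction h with
  | refl => exact ⟨0, rfl, ha⟩
  | tail hab hbc ih =>
    obtain ⟨n, hn⟩ := ih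
    exact ⟨n + 1, hn.tail' hbc⟩

lemma reachIn_of_walkN {n : ℕ} {a b : V} (h : WalkN R U n a b) : ReachIn R U a b := by
  induction n generalizing a with
  | zero => obtain ⟨rfl, _⟩ := walkN_zero.1 h; exact Relation.ReflTransGen.refl
  | succ n ih =>
    obtain ⟨ha, b', hb', hw⟩ := walkN_succ.1 h
    exact Relation.ReflTransGen.head ⟨ha, hw.mem_left, hb'⟩ (ih hw)

/-- the finset of connected components -/
noncomputable def compsOf (R : V → V → Prop) (U : Finset V) : Finset (Finset V) :=
  U.image (compFin R U)

lemma compsOf_disjoint (hR : Symmetric R) {C C' : Finset V}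
    (hC : C ∈ compsOf R U) (hC' : C' ∈ compsOf R U) (hne : C ≠ C') : Disjoint C C' := by
  obtain ⟨x, _, rfl⟩ := Finset.mem_image.1 hC
  obtain ⟨y, _, rfl⟩ := Finset.mem_image.1 hC'
  rw [Finset.disjoint_left]
  intro z hz hz'
  exact hne ((compFin_eq_of_mem hR hz).trans (compFin_eq_of_mem hR hz').symm)

lemma compsOf_biUnion : (compsOf R U).biUnion id = U := by
  ext z
  simp only [Finset.mem_biUnion, compsOf, Finset.mem_image, id]
  constructor
  · rintro ⟨C, ⟨x, _, rfl⟩, hz⟩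
    exact (compFin_subset) hz
  · intro hz
    exact ⟨compFin R U z, ⟨z, hz, rfl⟩, mem_compFin_self hz⟩

lemma compsOf_sum_card (hR : Symmetric R) : ∑ C ∈ compsOf R U, C.card = U.card := by
  have h1 : ((compsOf R U).biUnion id).card = ∑ C ∈ compsOf R U, (id C).card :=
    Finset.card_biUnion (fun C hC C' hC' hne => compsOf_disjoint hR hC hC' hne)
  rw [compsOf_biUnion] at h1
  simpa using h1.symm

noncomputable def oddComps (R : V → V → Prop) (U : Finset V) : Finset (Finset V) :=
  (compsOf R U).filter (fun C => Odd C.card)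

lemma oddComps_card_le (hR : Symmetric R) : (oddComps R U).card ≤ U.card := by
  calc (oddComps R U).card = ∑ _C ∈ oddComps R U, 1 := by simp
    _ ≤ ∑ C ∈ oddComps R U, C.card := by
        apply Finset.sum_le_sum
        intro C hC
        obtain ⟨m, hm⟩ := (Finset.mem_filter.1 hC).2
        omega
    _ ≤ ∑ C ∈ compsOf R U, C.card := by
        apply Finset.sum_le_sum_of_subset (Finset.filter_subset _ _)
    _ = U.card := compsOf_sum_card hR

end Reach

section RestrictGlue

variable {R : V → V → Prop} {D C : Finset V} {f g : V → Option V}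

/-- restrict a matching to a closed subset -/
lemma IsMFun.restrict (hf : IsMFun R D f)
    (hcl : ∀ x y, f x = some y → x ∈ C → y ∈ C) :
    IsMFun R C (fun x => if x ∈ C then f x else none) ∧
    msupp (fun x => if x ∈ C then f x else none) = msupp f ∩ C := by
  constructor
  · intro x y hxy
    dsimp only at hxy ⊢
    by_cases hx : x ∈ C
    · rw [if_pos hx] at hxy
      have hy : y ∈ C := hcl x y hxy hx
      obtain ⟨_, _, h3, h4, h5⟩ := hf hxy
      exact ⟨hx, hy, h3, h4, by rw [if_pos hy]; exact h5⟩
    · rw [if_neg hx] at hxy; exact absurd hxy (by simp)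
  · ext z
    simp only [mem_msupp, Finset.mem_inter]
    by_cases hz : z ∈ C <;> simp [hz, mem_msupp]

/-- glue a matching on a closed subset with one outside -/
lemma IsMFun.glue (hf : IsMFun R D f) (hg : IsMFun R C g)
    (hcl : ∀ x y, f x = some y → x ∈ C → y ∈ C) :
    IsMFun R (D ∪ C) (fun x => if x ∈ C then g x else f x) ∧
    msupp (fun x => if x ∈ C then g x else f x) = (msupp f \ C) ∪ msupp g := by
  have hgC : ∀ x, x ∈ msupp g → x ∈ C := fun x hx => hg.msupp_subset hx
  constructor
  · intro x y hxy
    dsimp only at hxy ⊢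
    by_cases hx : x ∈ C
    · rw [if_pos hx] at hxy
      obtain ⟨h1, h2, h3, h4, h5⟩ := hg hxy
      exact ⟨Finset.mem_union_right _ h1, Finset.mem_union_right _ h2, h3, h4,
        by rw [if_pos h2]; exact h5⟩
    · rw [if_neg hx] at hxy
      obtain ⟨h1, h2, h3, h4, h5⟩ := hf hxy
      have hy : y ∉ C := by
        intro hy
        exact hx (hcl y x h5 hy)
      exact ⟨Finset.mem_union_left _ h1, Finset.mem_union_left _ h2, h3, h4,
        by rw [if_neg hy]; exact h5⟩
  · ext z
    simp only [mem_msupp, Finset.mem_union, Finset.mem_sdiff]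
    by_cases hz : z ∈ C
    · simp only [if_pos hz]
      constructor
      · intro h; right; exact h
      · rintro (⟨h1, h2⟩ | h)
        · exact absurd hz h2
        · exact h
    · simp only [if_neg hz]
      constructor
      · intro h; left; exact ⟨h, hz⟩
      · rintro (⟨h1, _⟩ | h)
        · exact h1
        · exact absurd (hgC z (mem_msupp.2 h)) hz

lemma glue_card (hf : IsMFun R D f) (hg : IsMFun R C g)
    (hcl : ∀ x y, f x = some y → x ∈ C → y ∈ C) :
    (msupp (fun x => if x ∈ C then g x else f x)).card
      = (msupp f).card - (msupp f ∩ C).card + (msupp g).card := by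
  rw [(hf.glue hg hcl).2, Finset.card_union_of_disjoint (by
    rw [Finset.disjoint_left]
    intro z hz hzg
    exact (Finset.mem_sdiff.1 hz).2 (hg.msupp_subset hzg))]
  congr 1
  have : msupp f \ C = msupp f \ (msupp f ∩ C) := by
    ext z; simp only [Finset.mem_sdiff, Finset.mem_inter]; tauto
  rw [this, Finset.card_sdiff_of_subset Finset.inter_subset_left]

end RestrictGlue

section AltPath

variable {f g : V → Option V} {u : V}

/-- step function: even steps use `g`, odd steps use `f` -/
def stepFn (f g : V → Option V) (n : ℕ) : V → Option V := if n % 2 = 0 then g else f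

/-- alternating sequence starting at `u`, first step via `g` -/
def aseq (f g : V → Option V) (u : V) : ℕ → Option V
  | 0 => some u
  | n + 1 => (aseq f g u n).bind (stepFn f g n)

lemma aseq_zero : aseq f g u 0 = some u := rfl

lemma aseq_succ (n : ℕ) : aseq f g u (n + 1) = (aseq f g u n).bind (stepFn f g n) := rfl

variable (hfi : ∀ ⦃x y⦄, f x = some y → f y = some x)
variable (hgi : ∀ ⦃x y⦄, g x = some y → g y = some x)
variable (hfn : ∀ x, f x ≠ some x) (hgn : ∀ x, g x ≠ some x)

section StepFacts
include hfi hgi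

lemma stepFn_invol (n : ℕ) : ∀ ⦃x y⦄, stepFn f g n x = some y → stepFn f g n y = some x := by
  intro x y h
  unfold stepFn at h ⊢
  by_cases hn : n % 2 = 0
  · rw [if_pos hn] at h ⊢; exact hgi h
  · rw [if_neg hn] at h ⊢; exact hfi h

lemma stepFn_inj (n : ℕ) {a b c : V} (ha : stepFn f g n a = some c)
    (hb : stepFn f g n b = some c) : a = b := by
  have h1 := stepFn_invol hfi hgi n ha
  have h2 := stepFn_invol hfi hgi n hb
  rw [h1] at h2; injection h2

end StepFacts

lemma stepFn_nfp (hfn : ∀ x, f x ≠ some x) (hgn : ∀ x, g x ≠ some x) (n : ℕ) (x : V) :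
    stepFn f g n x ≠ some x := by
  unfold stepFn
  by_cases hn : n % 2 = 0
  · rw [if_pos hn]; exact hgn x
  · rw [if_neg hn]; exact hfn x

lemma stepFn_congr {n m : ℕ} (h : n % 2 = m % 2) : stepFn f g n = stepFn f g m := by
  unfold stepFn; rw [h]

lemma aseq_succ_elim {n : ℕ} {x : V} (h : aseq f g u (n + 1) = some x) :
    ∃ y, aseq f g u n = some y ∧ stepFn f g n y = some x := by
  rw [aseq_succ] at h
  cases hy : aseq f g u n with
  | none => rw [hy] at h; exact absurd h (by simp)
  | some y => rw [hy] at h; exact ⟨y, rfl, h⟩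

include hfi hgi hfn hgn

lemma aseq_inj (hu : f u = none) :
    ∀ j i, i < j → ∀ x, aseq f g u i = some x → aseq f g u j = some x → False := by
  intro j
  induction j using Nat.strong_induction_on with
  | _ j IH =>
    intro i hij x hi hj
    obtain ⟨m, rfl⟩ : ∃ m, j = m + 1 := ⟨j - 1, by omega⟩
    obtain ⟨yj, hyj, hstj⟩ := aseq_succ_elim hj
    rcases Nat.eq_zero_or_pos i with rfl | hipos
    · have hxu : u = x := by
        have := hi; rw [aseq_zero] at this; injection this
      subst hxu
      by_cases hm : m % 2 = 0
      · have hgyj : g yj = some u := by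
          have := hstj; unfold stepFn at this; rw [if_pos hm] at this; exact this
        have hgu : g u = some yj := hgi hgyj
        have h1 : aseq f g u 1 = some yj := by
          rw [aseq_succ, aseq_zero, Option.bind_some]
          unfold stepFn; rw [if_pos (by norm_num)]; exact hgu
        rcases Nat.lt_or_ge 1 m with h1m | h1m
        · exact IH m (by omega) 1 h1m yj h1 hyj
        · have hm0 : m = 0 := by omega
          subst hm0
          have : yj = u := by rw [aseq_zero] at hyj; injection hyj with h'; exact h'.symm
          subst this
          exact hgn yj hgyj
      · have : f yj = some u := by
          have := hstj; unfold stepFn at this; rw [if_neg hm] at this; exact this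
        have := hfi this
        rw [hu] at this; exact absurd this (by simp)
    · obtain ⟨k, rfl⟩ : ∃ k, i = k + 1 := ⟨i - 1, by omega⟩
      obtain ⟨yi, hyi, hsti⟩ := aseq_succ_elim hi
      by_cases hpar : k % 2 = m % 2
      · have hsti' : stepFn f g m yi = some x := by rw [← stepFn_congr hpar]; exact hsti
        have heq : yi = yj := stepFn_inj hfi hgi m hsti' hstj
        exact IH m (by omega) k (by omega) yi hyi (heq ▸ hyj)
      · rcases Nat.lt_trichotomy (k + 2) m with hlt | heq2 | hgt
        · have hpar2 : (k + 1) % 2 = m % 2 := by omega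
          have hxm : stepFn f g m x = some yj := stepFn_invol hfi hgi m hstj
          have hnext : aseq f g u (k + 2) = some yj := by
            rw [aseq_succ, hi, Option.bind_some, stepFn_congr hpar2]
            exact hxm
          exact IH m (by omega) (k + 2) hlt yj hnext hyj
        · omega
        · have hmeq : m = k + 1 := by omega
          subst hmeq
          have : yj = x := by rw [hi] at hyj; injection hyj with h'; exact h'.symm
          subst this
          exact stepFn_nfp hfn hgn (k + 1) yj hstj

lemma aseq_exists_none (hu : f u = none) : ∃ n, aseq f g u n = none := by
  by_contra hall
  push_neg at hall
  set w : Fin (Fintype.card V + 1) → V := fun i => (aseq f g u i).getD u with hw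
  have hinj : Function.Injective w := by
    intro i j hij
    by_contra hne
    have hne' : (i : ℕ) ≠ (j : ℕ) := fun h => hne (Fin.ext h)
    obtain ⟨xi, hxi⟩ := Option.ne_none_iff_exists'.1 (hall i)
    obtain ⟨xj, hxj⟩ := Option.ne_none_iff_exists'.1 (hall j)
    have hwi : w i = xi := by rw [hw]; simp [hxi]
    have hwj : w j = xj := by rw [hw]; simp [hxj]
    have hxx : xi = xj := by rw [← hwi, ← hwj, hij]
    subst hxx
    rcases Nat.lt_or_ge (i : ℕ) (j : ℕ) with h | h
    · exact aseq_inj hfi hgi hfn hgn hu j i h xi hxi hxj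
    · exact aseq_inj hfi hgi hfn hgn hu i j (by omega) xi hxj hxi
  have := Fintype.card_le_of_injective w hinj
  simp at this

end AltPath

section AltPathStruct

variable {f g : V → Option V} {u : V} {L : ℕ}

/-- value of the alternating sequence -/
def vA (f g : V → Option V) (u : V) (i : ℕ) : V := (aseq f g u i).getD u

variable (hsome : ∀ i ≤ L, aseq f g u i ≠ none)
variable (hterm : aseq f g u (L + 1) = none)
variable (hfi : ∀ ⦃x y⦄, f x = some y → f y = some x)
variable (hgi : ∀ ⦃x y⦄, g x = some y → g y = some x)
variable (hfn : ∀ x, f x ≠ some x) (hgn : ∀ x, g x ≠ some x)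
variable (hu : f u = none)

lemma vA_zero : vA f g u 0 = u := by simp [vA, aseq_zero]

include hsome

lemma vA_spec {i : ℕ} (hi : i ≤ L) : aseq f g u i = some (vA f g u i) := by
  obtain ⟨x, hx⟩ := Option.ne_none_iff_exists'.1 (hsome i hi)
  rw [hx]; simp [vA, hx]

lemma st_out {i : ℕ} (hi : i < L) : stepFn f g i (vA f g u i) = some (vA f g u (i + 1)) := by
  have h1 := vA_spec (f := f) (g := g) (u := u) hsome (le_of_lt hi)
  have h2 := vA_spec (f := f) (g := g) (u := u) hsome (by omega : i + 1 ≤ L)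
  rw [aseq_succ, h1, Option.bind_some] at h2
  exact h2

include hterm

lemma st_term : stepFn f g L (vA f g u L) = none := by
  have h1 := vA_spec (f := f) (g := g) (u := u) hsome (le_refl L)
  rw [aseq_succ, h1, Option.bind_some] at hterm
  exact hterm

end AltPathStruct

section RangeCards

lemma card_filter_range₁ (n : ℕ) (cond : ℕ → Prop) (h : ∀ i, cond i ↔ 1 ≤ i) :
    ((Finset.range (n + 1)).filter cond).card = n := by
  have heq : ((Finset.range (n + 1)).filter cond) = Finset.Ico 1 (n + 1) := by
    ext i
    simp only [Finset.mem_filter, Finset.mem_range, Finset.mem_Ico, h]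
    omega
  rw [heq, Nat.card_Ico]; omega

lemma card_filter_range₂ (n : ℕ) (cond : ℕ → Prop) (h : ∀ i, cond i ↔ i ≠ n) :
    ((Finset.range (n + 1)).filter cond).card = n := by
  have heq : ((Finset.range (n + 1)).filter cond) = Finset.range n := by
    ext i
    simp only [Finset.mem_filter, Finset.mem_range, h]
    omega
  rw [heq, Finset.card_range]

lemma card_filter_range₃ (n : ℕ) (cond : ℕ → Prop) (h : ∀ i, cond i ↔ (1 ≤ i ∧ i ≠ n)) :
    ((Finset.range (n + 1)).filter cond).card = n - 1 := by
  have heq : ((Finset.range (n + 1)).filter cond) = Finset.Ico 1 n := by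
    ext i
    simp only [Finset.mem_filter, Finset.mem_range, Finset.mem_Ico, h]
    omega
  rw [heq, Nat.card_Ico]

lemma card_filter_range₄ (n : ℕ) (cond : ℕ → Prop) (h : ∀ i, cond i) :
    ((Finset.range (n + 1)).filter cond).card = n + 1 := by
  rw [Finset.filter_true_of_mem (fun i _ => h i), Finset.card_range]

end RangeCards

section SwapMatch

variable {R : V → V → Prop} {Df Dg : Finset V} {f g : V → Option V}

lemma swap_match (hf : IsMFun R Df f) (hg : IsMFun R Dg g) (P : Finset V)
    (hclf : ∀ x ∈ P, ∀ y, f x = some y → y ∈ P)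
    (hclg : ∀ x ∈ P, ∀ y, g x = some y → y ∈ P) :
    IsMFun R (Df ∪ Dg) (fun x => if x ∈ P then g x else f x) ∧
    (msupp (fun x => if x ∈ P then g x else f x)).card
      = (msupp f).card - (msupp f ∩ P).card + (msupp g ∩ P).card := by
  have hmf : msupp (fun x => if x ∈ P then g x else f x) = (msupp f \ P) ∪ (msupp g ∩ P) := by
    ext z
    simp only [mem_msupp, Finset.mem_union, Finset.mem_sdiff, Finset.mem_inter]
    by_cases hz : z ∈ P
    · simp only [if_pos hz]
      constructor
      · intro h; right; exact ⟨h, hz⟩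
      · rintro (⟨_, h2⟩ | ⟨h, _⟩)
        · exact absurd hz h2
        · exact h
    · simp only [if_neg hz]
      constructor
      · intro h; left; exact ⟨h, hz⟩
      · rintro (⟨h1, _⟩ | ⟨_, h2⟩)
        · exact h1
        · exact absurd h2 hz
  constructor
  · intro x y hxy
    dsimp only at hxy ⊢
    by_cases hx : x ∈ P
    · rw [if_pos hx] at hxy
      have hy : y ∈ P := hclg x hx y hxy
      obtain ⟨h1, h2, h3, h4, h5⟩ := hg hxy
      exact ⟨Finset.mem_union_right _ h1, Finset.mem_union_right _ h2, h3, h4,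
        by rw [if_pos hy]; exact h5⟩
    · rw [if_neg hx] at hxy
      obtain ⟨h1, h2, h3, h4, h5⟩ := hf hxy
      have hy : y ∉ P := fun hy => hx (hclf y hy x h5)
      exact ⟨Finset.mem_union_left _ h1, Finset.mem_union_left _ h2, h3, h4,
        by rw [if_neg hy]; exact h5⟩
  · rw [hmf, Finset.card_union_of_disjoint (by
      rw [Finset.disjoint_left]
      intro z hz hz'
      exact (Finset.mem_sdiff.1 hz).2 (Finset.mem_inter.1 hz').2)]
    congr 1
    have : msupp f \ P = msupp f \ (msupp f ∩ P) := by
      ext z; simp only [Finset.mem_sdiff, Finset.mem_inter]; tauto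
    rw [this, Finset.card_sdiff_of_subset Finset.inter_subset_left]

end SwapMatch

section AltPathFacts

variable {f g : V → Option V} {u : V} {L : ℕ}
variable (hsome : ∀ i ≤ L, aseq f g u i ≠ none)
variable (hterm : aseq f g u (L + 1) = none)
variable (hfi : ∀ ⦃x y⦄, f x = some y → f y = some x)
variable (hgi : ∀ ⦃x y⦄, g x = some y → g y = some x)
variable (hfn : ∀ x, f x ≠ some x) (hgn : ∀ x, g x ≠ some x)
variable (hu : f u = none)

/-- vertex set of the alternating path -/
noncomputable def PVset (f g : V → Option V) (u : V) (L : ℕ) : Finset V :=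
  (Finset.range (L + 1)).image (vA f g u)

lemma mem_PVset {x : V} : x ∈ PVset f g u L ↔ ∃ i, i ≤ L ∧ vA f g u i = x := by
  simp only [PVset, Finset.mem_image, Finset.mem_range, Nat.lt_succ_iff]

include hsome hfi hgi hfn hgn hu

lemma vA_injOn : ∀ i ≤ L, ∀ j ≤ L, vA f g u i = vA f g u j → i = j := by
  intro i hi j hj hij
  by_contra hne
  have h1 := vA_spec (f := f) (g := g) (u := u) hsome hi
  have h2 := vA_spec (f := f) (g := g) (u := u) hsome hj
  rw [hij] at h1
  rcases Nat.lt_or_ge i j with h | h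
  · exact aseq_inj hfi hgi hfn hgn hu j i h _ h1 h2
  · exact aseq_inj hfi hgi hfn hgn hu i j (by omega) _ h2 h1

lemma card_PVset : (PVset f g u L).card = L + 1 := by
  rw [PVset, Finset.card_image_of_injOn, Finset.card_range]
  intro i hi j hj hij
  rw [Finset.mem_coe, Finset.mem_range, Nat.lt_succ_iff] at hi hj
  exact vA_injOn hsome hfi hgi hfn hgn hu i hi j hj hij

lemma st_in {i : ℕ} (hi : i < L) :
    stepFn f g i (vA f g u (i + 1)) = some (vA f g u i) :=
  stepFn_invol hfi hgi i (st_out hsome hi)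


lemma pf_zero : f (vA f g u 0) = none := by rw [vA_zero]; exact hu

lemma pf_odd_lt {i : ℕ} (h2 : i % 2 = 1) (hi : i < L) :
    f (vA f g u i) = some (vA f g u (i + 1)) := by
  have h := st_out (f := f) (g := g) (u := u) hsome hi
  unfold stepFn at h; rw [if_neg (by omega)] at h; exact h

include hterm

lemma pf_term (h2 : L % 2 = 1) : f (vA f g u L) = none := by
  have h := st_term (f := f) (g := g) (u := u) hsome hterm
  unfold stepFn at h; rw [if_neg (by omega)] at h; exact h

lemma pg_term (h2 : L % 2 = 0) : g (vA f g u L) = none := by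
  have h := st_term (f := f) (g := g) (u := u) hsome hterm
  unfold stepFn at h; rw [if_pos (by omega)] at h; exact h

omit hterm

lemma pf_even {i : ℕ} (h2 : i % 2 = 0) (h1 : 1 ≤ i) (hiL : i ≤ L) :
    f (vA f g u i) = some (vA f g u (i - 1)) := by
  obtain ⟨i', rfl⟩ : ∃ i', i = i' + 1 := ⟨i - 1, by omega⟩
  have h := st_in (f := f) (g := g) (u := u) hsome hfi hgi hfn hgn hu (show i' < L by omega)
  unfold stepFn at h; rw [if_neg (by omega)] at h
  simpa using h

lemma pg_even_lt {i : ℕ} (h2 : i % 2 = 0) (hi : i < L) :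
    g (vA f g u i) = some (vA f g u (i + 1)) := by
  have h := st_out (f := f) (g := g) (u := u) hsome hi
  unfold stepFn at h; rw [if_pos (by omega)] at h; exact h

lemma pg_odd {i : ℕ} (h2 : i % 2 = 1) (hiL : i ≤ L) :
    g (vA f g u i) = some (vA f g u (i - 1)) := by
  obtain ⟨i', rfl⟩ : ∃ i', i = i' + 1 := ⟨i - 1, by omega⟩
  have h := st_in (f := f) (g := g) (u := u) hsome hfi hgi hfn hgn hu (show i' < L by omega)
  unfold stepFn at h; rw [if_pos (by omega)] at h
  simpa using h

include hterm

lemma pcl_f : ∀ x ∈ PVset f g u L, ∀ y, f x = some y → y ∈ PVset f g u L := by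
  intro x hx y hy
  obtain ⟨i, hi, rfl⟩ := mem_PVset.1 hx
  rcases Nat.eq_zero_or_pos i with rfl | hipos
  · rw [pf_zero (f := f) (g := g) (u := u) hsome hfi hgi hfn hgn hu] at hy
    exact absurd hy (by simp)
  rcases Nat.even_or_odd i with he | ho
  · have h2 : i % 2 = 0 := Nat.even_iff.1 he
    rw [pf_even hsome hfi hgi hfn hgn hu h2 hipos hi] at hy
    injection hy with hy'
    exact mem_PVset.2 ⟨i - 1, by omega, hy'⟩
  · have h2 : i % 2 = 1 := Nat.odd_iff.1 ho
    rcases Nat.lt_or_ge i L with hiL | hiL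
    · rw [pf_odd_lt hsome hfi hgi hfn hgn hu h2 hiL] at hy
      injection hy with hy'
      exact mem_PVset.2 ⟨i + 1, by omega, hy'⟩
    · have : i = L := by omega
      subst this
      rw [pf_term hsome hterm hfi hgi hfn hgn hu h2] at hy
      exact absurd hy (by simp)

lemma pcl_g : ∀ x ∈ PVset f g u L, ∀ y, g x = some y → y ∈ PVset f g u L := by
  intro x hx y hy
  obtain ⟨i, hi, rfl⟩ := mem_PVset.1 hx
  rcases Nat.even_or_odd i with he | ho
  · have h2 : i % 2 = 0 := Nat.even_iff.1 he
    rcases Nat.lt_or_ge i L with hiL | hiL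
    · rw [pg_even_lt hsome hfi hgi hfn hgn hu h2 hiL] at hy
      injection hy with hy'
      exact mem_PVset.2 ⟨i + 1, by omega, hy'⟩
    · have : i = L := by omega
      subst this
      rw [pg_term hsome hterm hfi hgi hfn hgn hu h2] at hy
      exact absurd hy (by simp)
  · have h2 : i % 2 = 1 := Nat.odd_iff.1 ho
    rw [pg_odd hsome hfi hgi hfn hgn hu h2 hi] at hy
    injection hy with hy'
    exact mem_PVset.2 ⟨i - 1, by omega, hy'⟩

omit hterm

lemma suppcap (h : V → Option V) (cond : ℕ → Prop)
    (hch : ∀ i ≤ L, ((h (vA f g u i)).isSome ↔ cond i)) :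
    (msupp h ∩ PVset f g u L).card = ((Finset.range (L + 1)).filter cond).card := by
  have hset : msupp h ∩ PVset f g u L
      = ((Finset.range (L + 1)).filter cond).image (vA f g u) := by
    ext z
    simp only [Finset.mem_inter, Finset.mem_image, Finset.mem_filter, Finset.mem_range,
      Nat.lt_succ_iff]
    constructor
    · rintro ⟨hz1, hz2⟩
      obtain ⟨i, hi, rfl⟩ := mem_PVset.1 hz2
      refine ⟨i, ⟨hi, ?_⟩, rfl⟩
      rw [← hch i hi]
      simpa [msupp] using hz1
    · rintro ⟨i, ⟨hi, hc⟩, rfl⟩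
      constructor
      · simp only [msupp, Finset.mem_filter, Finset.mem_univ, true_and]
        rw [hch i hi]; exact hc
      · exact mem_PVset.2 ⟨i, hi, rfl⟩
  rw [hset, Finset.card_image_of_injOn]
  intro i hi j hj hij
  simp only [Finset.coe_filter, Set.mem_setOf_eq, Finset.mem_range, Nat.lt_succ_iff] at hi hj
  exact vA_injOn hsome hfi hgi hfn hgn hu i hi.1 j hj.1 hij

include hterm

lemma cardF_even (hL2 : L % 2 = 0) : (msupp f ∩ PVset f g u L).card = L := by
  rw [suppcap hsome hfi hgi hfn hgn hu f (fun i => 1 ≤ i), card_filter_range₁ L _ (fun i => Iff.rfl)]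
  intro i hi
  rw [Option.isSome_iff_exists]
  constructor
  · rintro ⟨y, hy⟩
    by_contra h0
    have : i = 0 := by omega
    subst this
    rw [pf_zero (f := f) (g := g) (u := u) hsome hfi hgi hfn hgn hu] at hy
    exact absurd hy (by simp)
  · intro h1
    rcases Nat.even_or_odd i with he | ho
    · exact ⟨_, pf_even hsome hfi hgi hfn hgn hu (Nat.even_iff.1 he) h1 hi⟩
    · have h2 : i % 2 = 1 := Nat.odd_iff.1 ho
      have hiL : i < L := by omega
      exact ⟨_, pf_odd_lt hsome hfi hgi hfn hgn hu h2 hiL⟩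

lemma cardF_odd (hL2 : L % 2 = 1) : (msupp f ∩ PVset f g u L).card = L - 1 := by
  rw [suppcap hsome hfi hgi hfn hgn hu f (fun i => 1 ≤ i ∧ i ≠ L), card_filter_range₃ L _ (fun i => Iff.rfl)]
  intro i hi
  rw [Option.isSome_iff_exists]
  constructor
  · rintro ⟨y, hy⟩
    constructor
    · by_contra h0
      have : i = 0 := by omega
      subst this
      rw [pf_zero (f := f) (g := g) (u := u) hsome hfi hgi hfn hgn hu] at hy
      exact absurd hy (by simp)
    · rintro rfl
      rw [pf_term hsome hterm hfi hgi hfn hgn hu hL2] at hy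
      exact absurd hy (by simp)
  · rintro ⟨h1, hne⟩
    rcases Nat.even_or_odd i with he | ho
    · exact ⟨_, pf_even hsome hfi hgi hfn hgn hu (Nat.even_iff.1 he) h1 hi⟩
    · exact ⟨_, pf_odd_lt hsome hfi hgi hfn hgn hu (Nat.odd_iff.1 ho) (by omega)⟩

lemma cardG_even (hL2 : L % 2 = 0) : (msupp g ∩ PVset f g u L).card = L := by
  rw [suppcap hsome hfi hgi hfn hgn hu g (fun i => i ≠ L), card_filter_range₂ L _ (fun i => Iff.rfl)]
  intro i hi
  rw [Option.isSome_iff_exists]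
  constructor
  · rintro ⟨y, hy⟩
    rintro rfl
    rw [pg_term hsome hterm hfi hgi hfn hgn hu hL2] at hy
    exact absurd hy (by simp)
  · intro hne
    rcases Nat.even_or_odd i with he | ho
    · exact ⟨_, pg_even_lt hsome hfi hgi hfn hgn hu (Nat.even_iff.1 he) (by omega)⟩
    · exact ⟨_, pg_odd hsome hfi hgi hfn hgn hu (Nat.odd_iff.1 ho) hi⟩

omit hterm

lemma cardG_odd (hL2 : L % 2 = 1) : (msupp g ∩ PVset f g u L).card = L + 1 := by
  rw [suppcap hsome hfi hgi hfn hgn hu g (fun _ => True), card_filter_range₄ L _ (fun i => trivial)]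
  intro i hi
  rw [Option.isSome_iff_exists]
  simp only [iff_true]
  rcases Nat.even_or_odd i with he | ho
  · have h2 : i % 2 = 0 := Nat.even_iff.1 he
    exact ⟨_, pg_even_lt hsome hfi hgi hfn hgn hu h2 (by omega)⟩
  · exact ⟨_, pg_odd hsome hfi hgi hfn hgn hu (Nat.odd_iff.1 ho) hi⟩

include hterm

lemma fg_disagree : ∀ i ≤ L, ¬(g (vA f g u i) = f (vA f g u i) ∧ (f (vA f g u i)).isSome) := by
  rintro i hi ⟨heq, hs⟩
  obtain ⟨y, hy⟩ := Option.isSome_iff_exists.1 hs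
  rcases Nat.eq_zero_or_pos i with rfl | hipos
  · rw [pf_zero (f := f) (g := g) (u := u) hsome hfi hgi hfn hgn hu] at hy
    exact absurd hy (by simp)
  rcases Nat.even_or_odd i with he | ho
  · have h2 : i % 2 = 0 := Nat.even_iff.1 he
    have hf' := pf_even hsome hfi hgi hfn hgn hu h2 hipos hi
    rcases Nat.lt_or_ge i L with hiL | hiL
    · have hg' := pg_even_lt hsome hfi hgi hfn hgn hu h2 hiL
      rw [hf', hg'] at heq
      injection heq with h'
      have := vA_injOn hsome hfi hgi hfn hgn hu (i+1) (by omega) (i-1) (by omega) h'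
      omega
    · have hiL' : i = L := by omega
      subst hiL'
      have hg' := pg_term hsome hterm hfi hgi hfn hgn hu h2
      rw [hg', hy] at heq
      exact absurd heq (by simp)
  · have h2 : i % 2 = 1 := Nat.odd_iff.1 ho
    have hg' := pg_odd hsome hfi hgi hfn hgn hu h2 hi
    rcases Nat.lt_or_ge i L with hiL | hiL
    · have hf' := pf_odd_lt hsome hfi hgi hfn hgn hu h2 hiL
      rw [hf', hg'] at heq
      injection heq with h'
      have := vA_injOn hsome hfi hgi hfn hgn hu (i-1) (by omega) (i+1) (by omega) h'
      omega
    · have hiL' : i = L := by omega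
      subst hiL'
      have hf' := pf_term hsome hterm hfi hgi hfn hgn hu h2
      rw [hf'] at hy
      exact absurd hy (by simp)

end AltPathFacts

section Gallai

variable {R : V → V → Prop}

/-- Gallai's lemma: in a connected graph where every vertex is missed by some
maximum matching, the deficiency is at most 1. -/
lemma gallai (hRsym : Symmetric R) (C : Finset V)
    (hconn : ∀ x ∈ C, ∀ y ∈ C, ReachIn R C x y)
    (hmiss : ∀ v ∈ C, ∃ h, IsMFun R C h ∧
      (∀ h', IsMFun R C h' → (msupp h').card ≤ (msupp h).card) ∧ h v = none)
    (f0 : V → Option V) (hf0 : IsMFun R C f0)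
    (hmax0 : ∀ h', IsMFun R C h' → (msupp h').card ≤ (msupp f0).card) :
    C.card ≤ (msupp f0).card + 1 := by
  by_contra hbig
  push_neg at hbig
  -- minimal distance selection
  set P : ℕ → Prop := fun d => ∃ h u v, IsMFun R C h ∧
    (∀ h', IsMFun R C h' → (msupp h').card ≤ (msupp h).card) ∧
    h u = none ∧ h v = none ∧ u ∈ C ∧ v ∈ C ∧ u ≠ v ∧ WalkN R C d u v with hPdef
  have hPex : ∃ d, P d := by
    have hsub : msupp f0 ⊆ C := hf0.msupp_subset
    have hcard2 : 2 ≤ (C \ msupp f0).card := by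
      rw [Finset.card_sdiff_of_subset hsub]; omega
    obtain ⟨u, hu, v, hv, huv⟩ := Finset.one_lt_card.1 (by omega : 1 < (C \ msupp f0).card)
    have huC := (Finset.mem_sdiff.1 hu).1
    have hvC := (Finset.mem_sdiff.1 hv).1
    have hu0 : f0 u = none := not_mem_msupp.1 (Finset.mem_sdiff.1 hu).2
    have hv0 : f0 v = none := not_mem_msupp.1 (Finset.mem_sdiff.1 hv).2
    obtain ⟨n, hn⟩ := exists_walkN huC (hconn u huC v hvC)
    exact ⟨n, f0, u, v, hf0, hmax0, hu0, hv0, huC, hvC, huv, hn⟩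
  set d := Nat.find hPex with hd
  obtain ⟨h0, u, v, hh0, hh0max, hu0, hv0, huC, hvC, huv, hwalk⟩ := Nat.find_spec hPex
  rw [← hd] at hwalk
  have hfi : ∀ ⦃x y⦄, h0 x = some y → h0 y = some x := fun x y hxy => (hh0 hxy).2.2.2.2
  have hfn : ∀ x, h0 x ≠ some x := fun x hxx => (hh0 hxx).2.2.2.1 rfl
  -- d ≥ 2
  have hd0 : d ≠ 0 := by
    intro h
    rw [h] at hwalk
    exact huv (walkN_zero.1 hwalk).1
  have hextend_contra : ∀ {a b : V}, h0 a = none → h0 b = none → a ≠ b → R a b →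
      a ∈ C → b ∈ C → False := by
    intro a b ha hb hab hR haC hbC
    obtain ⟨hmf, hsupp⟩ := hh0.extend ha hb hab hR (hRsym hR) haC hbC
    have hle := hh0max _ hmf
    rw [hsupp] at hle
    have hbs : b ∉ msupp h0 := not_mem_msupp.2 hb
    have has : a ∉ insert b (msupp h0) := by
      rw [Finset.mem_insert]; push_neg
      exact ⟨hab, not_mem_msupp.2 ha⟩
    rw [Finset.card_insert_of_notMem has, Finset.card_insert_of_notMem hbs] at hle
    omega
  have hd1 : d ≠ 1 := by
    intro h
    rw [h] at hwalk
    obtain ⟨_, b, hRub, hw0⟩ := walkN_succ.1 hwalk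
    obtain ⟨rfl, _⟩ := walkN_zero.1 hw0
    exact hextend_contra hu0 hv0 huv hRub huC hvC
  have hd2 : 2 ≤ d := by omega
  -- midpoint
  obtain ⟨e, hde⟩ : ∃ e, d = e + 1 := ⟨d - 1, by omega⟩
  rw [hde] at hwalk
  obtain ⟨_, t, hRut, hwt⟩ := walkN_succ.1 hwalk
  have htC : t ∈ C := hwt.mem_left
  have htu : t ≠ u := by
    rintro rfl
    exact Nat.find_min hPex (by omega : e < d)
      ⟨h0, t, v, hh0, hh0max, hu0, hv0, huC, hvC, huv, hwt⟩
  have htv : t ≠ v := by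
    rintro rfl
    refine Nat.find_min hPex (by omega : 1 < d)
      ⟨h0, u, t, hh0, hh0max, hu0, hv0, huC, htC, Ne.symm htu,
        walkN_succ.2 ⟨huC, t, hRut, walkN_zero.2 ⟨rfl, htC⟩⟩⟩
  have ht0 : h0 t ≠ none := by
    intro ht0
    exact Nat.find_min hPex (by omega : 1 < d)
      ⟨h0, u, t, hh0, hh0max, hu0, ht0, huC, htC, Ne.symm htu,
        walkN_succ.2 ⟨huC, t, hRut, walkN_zero.2 ⟨rfl, htC⟩⟩⟩
  -- choose g : max matching missing t, maximizing agreement with h0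
  set Q : (V → Option V) → Prop := fun g => IsMFun R C g ∧
    (∀ h', IsMFun R C h' → (msupp h').card ≤ (msupp g).card) ∧ g t = none with hQdef
  have hQex : ∃ g, Q g := by
    obtain ⟨h, h1, h2, h3⟩ := hmiss t htC
    exact ⟨h, h1, h2, h3⟩
  obtain ⟨g, ⟨hg, hgmax, hgt⟩, hgagr⟩ :=
    exists_max_meas Q hQex (fun g => ((msupp h0).filter (fun x => g x = h0 x)).card)
      (Fintype.card V) (fun g _ => Finset.card_le_univ _)
  have hgi : ∀ ⦃x y⦄, g x = some y → g y = some x := fun x y hxy => (hg hxy).2.2.2.2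
  have hgn : ∀ x, g x ≠ some x := fun x hxx => (hg hxx).2.2.2.1 rfl
  have hgu : g u ≠ none := by
    intro hgu
    exact Nat.find_min hPex (by omega : 1 < d)
      ⟨g, u, t, hg, hgmax, hgu, hgt, huC, htC, Ne.symm htu,
        walkN_succ.2 ⟨huC, t, hRut, walkN_zero.2 ⟨rfl, htC⟩⟩⟩
  have hgv : g v ≠ none := by
    intro hgv
    exact Nat.find_min hPex (by omega : e < d)
      ⟨g, t, v, hg, hgmax, hgt, hgv, htC, hvC, htv, hwt⟩
  -- alternating path setup
  have hex := aseq_exists_none hfi hgi hfn hgn hu0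
  set Lp := Nat.find hex with hLp
  have hLp0 : Lp ≠ 0 := by
    intro h
    have := Nat.find_spec hex
    rw [← hLp, h, aseq_zero] at this
    exact absurd this (by simp)
  have hLp1 : Lp ≠ 1 := by
    intro h
    have := Nat.find_spec hex
    rw [← hLp, h] at this
    rw [aseq_succ, aseq_zero, Option.bind_some] at this
    have h00 : stepFn h0 g 0 u = g u := by unfold stepFn; rw [if_pos rfl]
    rw [h00] at this
    exact hgu this
  set L := Lp - 1 with hLdef
  have hL1 : 1 ≤ L := by omega
  have hterm : aseq h0 g u (L + 1) = none := by
    have := Nat.find_spec hex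
    rw [← hLp] at this
    have hLL : L + 1 = Lp := by omega
    rw [hLL]; exact this
  have hsome : ∀ i ≤ L, aseq h0 g u i ≠ none := by
    intro i hi
    exact Nat.find_min hex (by omega : i < Lp)
  -- abbreviations
  have hswap1 := swap_match hh0 hg (PVset h0 g u L)
    (pcl_f hsome hterm hfi hgi hfn hgn hu0) (pcl_g hsome hterm hfi hgi hfn hgn hu0)
  have hswap1mf : IsMFun R C (fun x => if x ∈ PVset h0 g u L then g x else h0 x) := by
    have := hswap1.1
    rwa [Finset.union_self] at this
  have hcapFle : (msupp h0 ∩ PVset h0 g u L).card ≤ (msupp h0).card :=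
    Finset.card_le_card Finset.inter_subset_left
  rcases Nat.even_or_odd L with hLev | hLod
  · -- L even : L ≥ 2
    have hL2 : L % 2 = 0 := Nat.even_iff.1 hLev
    have hcF := cardF_even hsome hterm hfi hgi hfn hgn hu0 hL2
    have hcG := cardG_even hsome hterm hfi hgi hfn hgn hu0 hL2
    have hcard1 : (msupp (fun x => if x ∈ PVset h0 g u L then g x else h0 x)).card
        = (msupp h0).card := by
      rw [hswap1.2, hcF, hcG]
      omega
    -- v ∉ PV
    have hvPV : v ∉ PVset h0 g u L := by
      intro hv
      obtain ⟨i, hi, hvi⟩ := mem_PVset.1 hv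
      rcases Nat.eq_zero_or_pos i with rfl | hipos
      · rw [vA_zero] at hvi; exact huv hvi
      rcases Nat.even_or_odd i with hie | hio
      · have := pf_even hsome hfi hgi hfn hgn hu0 (Nat.even_iff.1 hie) hipos hi
        rw [hvi, hv0] at this
        exact absurd this (by simp)
      · have hio2 : i % 2 = 1 := Nat.odd_iff.1 hio
        have hiL : i < L := by omega
        have := pf_odd_lt hsome hfi hgi hfn hgn hu0 hio2 hiL
        rw [hvi, hv0] at this
        exact absurd this (by simp)
    by_cases hzt : vA h0 g u L = t
    · -- end of path is t : new max matching missing t and v at distance e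
      set f' := fun x => if x ∈ PVset h0 g u L then g x else h0 x with hf'def
      have hf't : f' t = none := by
        rw [hf'def]
        have htPV : t ∈ PVset h0 g u L := mem_PVset.2 ⟨L, le_refl L, hzt⟩
        simp only [if_pos htPV]
        rw [← hzt]
        exact pg_term hsome hterm hfi hgi hfn hgn hu0 hL2
      have hf'v : f' v = none := by
        rw [hf'def]; simp only [if_neg hvPV]; exact hv0
      have hf'max : ∀ h', IsMFun R C h' → (msupp h').card ≤ (msupp f').card := by
        intro h' hh'
        rw [hcard1]; exact hh0max h' hh'
      exact Nat.find_min hPex (by omega : e < d)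
        ⟨f', t, v, hswap1mf, hf'max, hf't, hf'v, htC, hvC, htv, hwt⟩
    · -- end of path is not t : improve agreement
      have htPV : t ∉ PVset h0 g u L := by
        intro ht
        obtain ⟨i, hi, hti⟩ := mem_PVset.1 ht
        rcases Nat.lt_or_ge i L with hiL | hiL
        · rcases Nat.even_or_odd i with hie | hio
          · have := pg_even_lt hsome hfi hgi hfn hgn hu0 (Nat.even_iff.1 hie) hiL
            rw [hti, hgt] at this
            exact absurd this (by simp)
          · have := pg_odd hsome hfi hgi hfn hgn hu0 (Nat.odd_iff.1 hio) hi
            rw [hti, hgt] at this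
            exact absurd this (by simp)
        · have : i = L := by omega
          subst this
          exact hzt hti
      have hswap2 := swap_match hg hh0 (PVset h0 g u L)
        (pcl_g hsome hterm hfi hgi hfn hgn hu0) (pcl_f hsome hterm hfi hgi hfn hgn hu0)
      have hswap2mf : IsMFun R C (fun x => if x ∈ PVset h0 g u L then h0 x else g x) := by
        have := hswap2.1
        rwa [Finset.union_self] at this
      set g' := fun x => if x ∈ PVset h0 g u L then h0 x else g x with hg'def
      have hcapGle : (msupp g ∩ PVset h0 g u L).card ≤ (msupp g).card :=
        Finset.card_le_card Finset.inter_subset_left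
      have hcard2 : (msupp g').card = (msupp g).card := by
        rw [hg'def] at *
        rw [hswap2.2, hcF, hcG]
        omega
      have hg'max : ∀ h', IsMFun R C h' → (msupp h').card ≤ (msupp g').card := by
        intro h' hh'
        rw [hcard2]; exact hgmax h' hh'
      have hg't : g' t = none := by
        rw [hg'def]; simp only [if_neg htPV]; exact hgt
      have hg'Q : Q g' := ⟨hswap2mf, hg'max, hg't⟩
      -- agreement strictly increases : contradiction
      set A : Finset V := (msupp h0).filter (fun x => g x = h0 x) with hA
      set A' : Finset V := (msupp h0).filter (fun x => g' x = h0 x) with hA'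
      have hagrle : A'.card ≤ A.card := by
        have hh := hgagr g' hg'Q
        rw [hA, hA']
        exact hh
      have hAPV : ∀ x ∈ A, x ∉ PVset h0 g u L := by
        intro x hx hxPV
        obtain ⟨i, hi, rfl⟩ := mem_PVset.1 hxPV
        rw [hA, Finset.mem_filter] at hx
        refine fg_disagree hsome hterm hfi hgi hfn hgn hu0 i hi ⟨hx.2, ?_⟩
        have := hx.1
        simp only [msupp, Finset.mem_filter] at this
        exact this.2
      have hsub' : A ∪ (msupp h0 ∩ PVset h0 g u L) ⊆ A' := by
        intro x hx
        rcases Finset.mem_union.1 hx with hx | hx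
        · have hxPV := hAPV x hx
          rw [hA, Finset.mem_filter] at hx
          rw [hA', Finset.mem_filter]
          refine ⟨hx.1, ?_⟩
          rw [hg'def]
          simp only [if_neg hxPV]
          exact hx.2
        · rw [Finset.mem_inter] at hx
          rw [hA', Finset.mem_filter]
          refine ⟨hx.1, ?_⟩
          rw [hg'def]
          simp only [if_pos hx.2]
      have hdisj : Disjoint A (msupp h0 ∩ PVset h0 g u L) := by
        rw [Finset.disjoint_left]
        intro x hx hx'
        exact hAPV x hx (Finset.mem_inter.1 hx').2
      have hA'ge : A.card + L ≤ A'.card := by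
        have := Finset.card_le_card hsub'
        rw [Finset.card_union_of_disjoint hdisj, hcF] at this
        exact this
      omega
  · -- L odd : augmenting, contradiction with maximality of h0
    have hL2 : L % 2 = 1 := Nat.odd_iff.1 hLod
    have hcF := cardF_odd hsome hterm hfi hgi hfn hgn hu0 hL2
    have hcG := cardG_odd hsome hfi hgi hfn hgn hu0 hL2
    have hle := hh0max _ hswap1mf
    rw [hswap1.2, hcF, hcG] at hle
    omega

end Gallai

section BergeTutte

variable {R : V → V → Prop}

lemma IsMFun.remove_pair {Df : Finset V} {f : V → Option V} (hf : IsMFun R Df f)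
    {v w : V} (hvw : f v = some w) :
    IsMFun R (Df.erase v) (fun x => if x = v ∨ x = w then none else f x) ∧
    msupp (fun x => if x = v ∨ x = w then none else f x) = msupp f \ {v, w} := by
  have hwv : f w = some v := (hf hvw).2.2.2.2
  constructor
  · intro x y hxy
    dsimp only at hxy
    by_cases h : x = v ∨ x = w
    · rw [if_pos h] at hxy; exact absurd hxy (by simp)
    · rw [if_neg h] at hxy
      push_neg at h
      obtain ⟨h1, h2, h3, h4, h5⟩ := hf hxy
      have hyv : y ≠ v := by
        rintro rfl
        rw [hvw] at h5; injection h5 with h5'; exact h.2 h5'.symm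
      have hyw : y ≠ w := by
        rintro rfl
        rw [hwv] at h5; injection h5 with h5'; exact h.1 h5'.symm
      refine ⟨Finset.mem_erase.2 ⟨h.1, h1⟩, Finset.mem_erase.2 ⟨hyv, h2⟩, h3, h4, ?_⟩
      dsimp only
      rw [if_neg (by push_neg; exact ⟨hyv, hyw⟩)]
      exact h5
  · ext z
    simp only [mem_msupp, Finset.mem_sdiff, Finset.mem_insert, Finset.mem_singleton]
    by_cases h : z = v ∨ z = w
    · simp [h]
    · simp [h]

lemma berge_tutte (hRsym : Symmetric R) :
    ∀ (U : Finset V) (f0 : V → Option V), IsMFun R U f0 →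
    (∀ h', IsMFun R U h' → (msupp h').card ≤ (msupp f0).card) →
    ∃ S ⊆ U, U.card + S.card ≤ (oddComps R (U \ S)).card + (msupp f0).card := by
  suffices H : ∀ n (U : Finset V), U.card = n → ∀ f0 : V → Option V, IsMFun R U f0 →
      (∀ h', IsMFun R U h' → (msupp h').card ≤ (msupp f0).card) →
      ∃ S ⊆ U, U.card + S.card ≤ (oddComps R (U \ S)).card + (msupp f0).card by
    intro U f0 hf0 hmax0
    exact H U.card U rfl f0 hf0 hmax0
  intro n
  induction n using Nat.strong_induction_on with
  | _ n IH =>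
    intro U hUcard f0 hf0 hmax0
    by_cases hcaseA : ∃ v ∈ U, ∀ g, IsMFun R U g →
        (∀ h', IsMFun R U h' → (msupp h').card ≤ (msupp g).card) → g v ≠ none
    · -- Case A : some vertex covered by every maximum matching
      obtain ⟨v, hvU, hvall⟩ := hcaseA
      have hv0 : f0 v ≠ none := hvall f0 hf0 hmax0
      obtain ⟨w, hvw⟩ := Option.ne_none_iff_exists'.1 hv0
      have hrp := hf0.remove_pair hvw
      set f1 := fun x => if x = v ∨ x = w then none else f0 x with hf1def
      have hwv : f0 w = some v := (hf0 hvw).2.2.2.2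
      have hwvne : w ≠ v := (hf0 hvw).2.2.2.1
      have hvsupp : v ∈ msupp f0 := mem_msupp.2 ⟨w, hvw⟩
      have hwsupp : w ∈ msupp f0 := mem_msupp.2 ⟨v, hwv⟩
      have hvw_sub : ({v, w} : Finset V) ⊆ msupp f0 := by
        intro z hz
        rcases Finset.mem_insert.1 hz with rfl | hz
        · exact hvsupp
        · rcases Finset.mem_singleton.1 hz with rfl; exact hwsupp
      have hcard_f1 : (msupp f1).card = (msupp f0).card - 2 := by
        rw [hrp.2, Finset.card_sdiff_of_subset hvw_sub, Finset.card_pair (Ne.symm hwvne)]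
      have hcard_f0_2 : 2 ≤ (msupp f0).card := by
        calc 2 = ({v, w} : Finset V).card := (Finset.card_pair (Ne.symm hwvne)).symm
          _ ≤ _ := Finset.card_le_card hvw_sub
      have hf1max : ∀ h', IsMFun R (U.erase v) h' → (msupp h').card ≤ (msupp f1).card := by
        intro h' hh'
        by_contra hlt
        push_neg at hlt
        have hh'U : IsMFun R U h' := hh'.mono (Finset.erase_subset _ _)
        have hh'le := hmax0 h' hh'U
        have hev0 : Even (msupp f0).card := hf0.even_card
        have hev' : Even (msupp h').card := hh'U.even_card
        have heq : (msupp h').card = (msupp f0).card := by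
          rw [Nat.even_iff] at hev0 hev'
          omega
        have hh'max : ∀ g', IsMFun R U g' → (msupp g').card ≤ (msupp h').card := by
          intro g' hg'
          rw [heq]; exact hmax0 g' hg'
        have := hvall h' hh'U hh'max
        have hvn : h' v = none := by
          rw [← not_mem_msupp]
          intro hmem
          have := hh'.msupp_subset hmem
          exact (Finset.mem_erase.1 this).1 rfl
        exact this hvn
      have hUerase : (U.erase v).card = n - 1 := by
        rw [Finset.card_erase_of_mem hvU, hUcard]
      have hn1 : 1 ≤ n := by
        rw [← hUcard]
        exact Finset.card_pos.2 ⟨v, hvU⟩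
      obtain ⟨S', hS'sub, hS'⟩ := IH (n - 1) (by omega) (U.erase v) hUerase f1 hrp.1 hf1max
      refine ⟨insert v S', ?_, ?_⟩
      · intro z hz
        rcases Finset.mem_insert.1 hz with rfl | hz
        · exact hvU
        · exact Finset.erase_subset _ _ (hS'sub hz)
      · have hsdiff : U \ insert v S' = (U.erase v) \ S' := by
          ext z
          simp only [Finset.mem_sdiff, Finset.mem_insert, Finset.mem_erase]
          tauto
        have hvS' : v ∉ S' := fun h => (Finset.mem_erase.1 (hS'sub h)).1 rfl
        rw [hsdiff, Finset.card_insert_of_notMem hvS']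
        rw [hUerase] at hS'
        rw [hUcard]
        omega
    · -- Case B : every vertex missed by some maximum matching
      push_neg at hcaseA
      refine ⟨∅, Finset.empty_subset _, ?_⟩
      rw [Finset.sdiff_empty, Finset.card_empty]
      have hcl : ∀ (h : V → Option V), IsMFun R U h → ∀ (c : V), ∀ x y, h x = some y →
          x ∈ compFin R U c → y ∈ compFin R U c := by
        intro h hh c x y hxy hxC
        exact mem_compFin_of_adj hxC (hh hxy).2.1 (hh hxy).2.2.1
      have hrmax : ∀ (g0 : V → Option V), IsMFun R U g0 →
          (∀ h', IsMFun R U h' → (msupp h').card ≤ (msupp g0).card) →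
          ∀ c, ∀ h', IsMFun R (compFin R U c) h' →
          (msupp h').card ≤ (msupp g0 ∩ compFin R U c).card := by
        intro g0 hg0 hg0max c h' hh'
        by_contra hlt
        push_neg at hlt
        have hgc := glue_card hg0 hh' (hcl g0 hg0 c)
        have hmf2 : IsMFun R U (fun x => if x ∈ compFin R U c then h' x else g0 x) := by
          have := (hg0.glue hh' (hcl g0 hg0 c)).1
          rwa [Finset.union_eq_left.2 compFin_subset] at this
        have hle := hg0max _ hmf2
        rw [hgc] at hle
        have hle2 : (msupp g0 ∩ compFin R U c).card ≤ (msupp g0).card :=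
          Finset.card_le_card Finset.inter_subset_left
        omega
      have hcompbound : ∀ C ∈ compsOf R U,
          C.card ≤ (msupp f0 ∩ C).card + (if Odd C.card then 1 else 0) := by
        intro C hC
        obtain ⟨c, hcU, rfl⟩ := Finset.mem_image.1 hC
        have hconnC : ∀ x ∈ compFin R U c, ∀ y ∈ compFin R U c,
            ReachIn R (compFin R U c) x y := by
          intro x hx y hy
          have hxy : ReachIn R U x y :=
            ((reachIn_of_mem_compFin hx).symm hRsym).trans (reachIn_of_mem_compFin hy)
          have := reachIn_compFin_self hRsym (mem_compFin.1 hx).1 hxy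
          rwa [← compFin_eq_of_mem hRsym hx] at this
        have hmissC : ∀ v ∈ compFin R U c, ∃ h, IsMFun R (compFin R U c) h ∧
            (∀ h', IsMFun R (compFin R U c) h' → (msupp h').card ≤ (msupp h).card) ∧
            h v = none := by
          intro v hv
          obtain ⟨g0, hg0, hg0max, hg0v⟩ := hcaseA v (compFin_subset hv)
          refine ⟨fun x => if x ∈ compFin R U c then g0 x else none,
            (hg0.restrict (hcl g0 hg0 c)).1, ?_, ?_⟩
          · intro h' hh'
            rw [(hg0.restrict (hcl g0 hg0 c)).2]
            exact hrmax g0 hg0 hg0max c h' hh'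
          · dsimp only
            rw [if_pos hv]
            exact hg0v
        have hf0C := hf0.restrict (hcl f0 hf0 c)
        have hf0Cmax : ∀ h', IsMFun R (compFin R U c) h' → (msupp h').card ≤
            (msupp (fun x => if x ∈ compFin R U c then f0 x else none)).card := by
          intro h' hh'
          rw [hf0C.2]
          exact hrmax f0 hf0 hmax0 c h' hh'
        have hgal := gallai hRsym (compFin R U c) hconnC hmissC _ hf0C.1 hf0Cmax
        rw [hf0C.2] at hgal
        by_cases hodd : Odd (compFin R U c).card
        · rw [if_pos hodd]; exact hgal
        · rw [if_neg hodd]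
          have he1 : Even (compFin R U c).card := Nat.not_odd_iff_even.1 hodd
          have he2 : Even (msupp f0 ∩ compFin R U c).card := by
            rw [← hf0C.2]; exact hf0C.1.even_card
          rw [Nat.even_iff] at he1 he2; omega
      have hsum1 : ∑ C ∈ compsOf R U, C.card = U.card := compsOf_sum_card hRsym
      have hsum2 : ∑ C ∈ compsOf R U, (msupp f0 ∩ C).card = (msupp f0).card := by
        have hdisj : ∀ C ∈ compsOf R U, ∀ C' ∈ compsOf R U, C ≠ C' →
            Disjoint (msupp f0 ∩ C) (msupp f0 ∩ C') := by
          intro C hC C' hC' hne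
          exact Finset.disjoint_of_subset_left Finset.inter_subset_right
            (Finset.disjoint_of_subset_right Finset.inter_subset_right
              (compsOf_disjoint hRsym hC hC' hne))
        have hbicard := Finset.card_biUnion hdisj
        have hbi : (compsOf R U).biUnion (fun C => msupp f0 ∩ C) = msupp f0 := by
          ext z
          simp only [Finset.mem_biUnion, Finset.mem_inter]
          constructor
          · rintro ⟨C, _, hz, _⟩; exact hz
          · intro hz
            have hzU : z ∈ U := hf0.msupp_subset hz
            exact ⟨compFin R U z, Finset.mem_image.2 ⟨z, hzU, rfl⟩, hz, mem_compFin_self hzU⟩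
        rw [hbi] at hbicard
        exact hbicard.symm
      have hsum3 : ∑ C ∈ compsOf R U, (if Odd C.card then 1 else 0) = (oddComps R U).card := by
        rw [oddComps]
        exact (Finset.card_filter _ _).symm
      have hfinal := Finset.sum_le_sum hcompbound
      rw [Finset.sum_add_distrib, hsum1, hsum2, hsum3] at hfinal
      omega

end BergeTutte

section LemmaM

variable {α β : Type*}

lemma lemmaM [DecidableEq α] [DecidableEq β] (A : V → α) (B : V → β) :
    ∀ (k : ℕ) (T : Finset V),
    2 * k ≤ T.card →
    (∀ a, (T.filter (fun x => A x = a)).card + k ≤ T.card) →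
    (∀ b, (T.filter (fun x => B x = b)).card + k ≤ T.card) →
    ∃ f, IsMFun (fun x y => A x ≠ A y ∧ B x ≠ B y) T f ∧ 2 * k ≤ (msupp f).card := by
  intro k
  induction k with
  | zero =>
    intro T _ _ _
    exact ⟨fun _ => none, isMFun_none _ _, by simp [msupp_none]⟩
  | succ k IHk =>
    intro T hT hA hB
    have hTne : T.Nonempty := Finset.card_pos.1 (by omega)
    have hnoedge : ¬(∀ u ∈ T, ∀ v ∈ T, A u = A v ∨ B u = B v) := by
      intro hno
      obtain ⟨t0, ht0⟩ := hTne
      by_cases hallA : ∀ u ∈ T, A u = A t0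
      · have hfull : T.filter (fun x => A x = A t0) = T := Finset.filter_true_of_mem hallA
        have h3 := hA (A t0); rw [hfull] at h3; omega
      · push_neg at hallA
        obtain ⟨v, hv, hAv⟩ := hallA
        have hBv : B t0 = B v := (hno t0 ht0 v hv).resolve_left (fun h => hAv h.symm)
        have hall : ∀ w ∈ T, B w = B t0 := by
          intro w hw
          by_contra hBw
          have h1 := (hno w hw t0 ht0).resolve_right (fun h => hBw h)
          rcases hno w hw v hv with h2 | h2
          · exact hAv (h2.symm.trans h1)
          · exact hBw (h2.trans hBv.symm)
        have hfull : T.filter (fun x => B x = B t0) = T := Finset.filter_true_of_mem hall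
        have h3 := hB (B t0); rw [hfull] at h3; omega
    have htight2A : ∀ a a', (T.filter (fun x => A x = a)).card + (k + 1) = T.card →
        (T.filter (fun x => A x = a')).card + (k + 1) = T.card → a ≠ a' →
        ∀ x ∈ T, A x = a ∨ A x = a' := by
      intro a a' ha ha' hne x hx
      have hdisj : Disjoint (T.filter (fun x => A x = a)) (T.filter (fun x => A x = a')) := by
        rw [Finset.disjoint_left]
        intro z hz hz'
        exact hne ((Finset.mem_filter.1 hz).2.symm.trans (Finset.mem_filter.1 hz').2)
      have hsub : (T.filter (fun x => A x = a)) ∪ (T.filter (fun x => A x = a')) ⊆ T :=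
        Finset.union_subset (Finset.filter_subset _ _) (Finset.filter_subset _ _)
      have hcard := Finset.card_union_of_disjoint hdisj
      have hcard2 := Finset.card_le_card hsub
      have heq : (T.filter (fun x => A x = a)) ∪ (T.filter (fun x => A x = a')) = T :=
        Finset.eq_of_subset_of_card_le hsub (by omega)
      have : x ∈ (T.filter (fun x => A x = a)) ∪ (T.filter (fun x => A x = a')) := by
        rw [heq]; exact hx
      rcases Finset.mem_union.1 this with h | h
      · exact Or.inl (Finset.mem_filter.1 h).2
      · exact Or.inr (Finset.mem_filter.1 h).2
    have htight2B : ∀ b b', (T.filter (fun x => B x = b)).card + (k + 1) = T.card →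
        (T.filter (fun x => B x = b')).card + (k + 1) = T.card → b ≠ b' →
        ∀ x ∈ T, B x = b ∨ B x = b' := by
      intro b b' hb hb' hne x hx
      have hdisj : Disjoint (T.filter (fun x => B x = b)) (T.filter (fun x => B x = b')) := by
        rw [Finset.disjoint_left]
        intro z hz hz'
        exact hne ((Finset.mem_filter.1 hz).2.symm.trans (Finset.mem_filter.1 hz').2)
      have hsub : (T.filter (fun x => B x = b)) ∪ (T.filter (fun x => B x = b')) ⊆ T :=
        Finset.union_subset (Finset.filter_subset _ _) (Finset.filter_subset _ _)
      have hcard := Finset.card_union_of_disjoint hdisj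
      have hcard2 := Finset.card_le_card hsub
      have heq : (T.filter (fun x => B x = b)) ∪ (T.filter (fun x => B x = b')) = T :=
        Finset.eq_of_subset_of_card_le hsub (by omega)
      have : x ∈ (T.filter (fun x => B x = b)) ∪ (T.filter (fun x => B x = b')) := by
        rw [heq]; exact hx
      rcases Finset.mem_union.1 this with h | h
      · exact Or.inl (Finset.mem_filter.1 h).2
      · exact Or.inr (Finset.mem_filter.1 h).2
    have hpair : ∃ u ∈ T, ∃ v ∈ T, (A u ≠ A v ∧ B u ≠ B v) ∧
        (∀ a, (T.filter (fun x => A x = a)).card + (k + 1) = T.card → (A u = a ∨ A v = a)) ∧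
        (∀ b, (T.filter (fun x => B x = b)).card + (k + 1) = T.card →
          (B u = b ∨ B v = b)) := by
      by_cases hexA : ∃ a, (T.filter (fun x => A x = a)).card + (k + 1) = T.card
      · obtain ⟨a0, ha0⟩ := hexA
        have hDAne : (T.filter (fun x => A x = a0)).Nonempty := by
          rw [← Finset.card_pos]; omega
        have hDAlt : (T.filter (fun x => A x = a0)).card < T.card := by omega
        by_cases hexB : ∃ b, (T.filter (fun x => B x = b)).card + (k + 1) = T.card
        · obtain ⟨b0, hb0⟩ := hexB
          have hfinish : (T.filter (fun x => A x = a0)) = (T.filter (fun x => B x = b0)) →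
              ∃ u ∈ T, ∃ v ∈ T, (A u ≠ A v ∧ B u ≠ B v) ∧
              (∀ a, (T.filter (fun x => A x = a)).card + (k + 1) = T.card →
                (A u = a ∨ A v = a)) ∧
              (∀ b, (T.filter (fun x => B x = b)).card + (k + 1) = T.card →
                (B u = b ∨ B v = b)) := by
            intro heqD
            obtain ⟨u, hu⟩ := hDAne
            have huT := (Finset.mem_filter.1 hu).1
            have hAu : A u = a0 := (Finset.mem_filter.1 hu).2
            have hu' : u ∈ T.filter (fun x => B x = b0) := by rw [← heqD]; exact hu
            have hBu : B u = b0 := (Finset.mem_filter.1 hu').2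
            have hcompl : (T \ (T.filter (fun x => A x = a0))).Nonempty := by
              rw [← Finset.card_pos, Finset.card_sdiff_of_subset (Finset.filter_subset _ _)]
              omega
            obtain ⟨v, hv⟩ := hcompl
            have hvT := (Finset.mem_sdiff.1 hv).1
            have hvA : A v ≠ a0 := by
              intro h
              exact (Finset.mem_sdiff.1 hv).2 (Finset.mem_filter.2 ⟨hvT, h⟩)
            have hvB : B v ≠ b0 := by
              intro h
              exact (Finset.mem_sdiff.1 hv).2
                (by rw [heqD]; exact Finset.mem_filter.2 ⟨hvT, h⟩)
            refine ⟨u, huT, v, hvT, ⟨by rw [hAu]; exact fun h => hvA h.symm,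
              by rw [hBu]; exact fun h => hvB h.symm⟩, ?_, ?_⟩
            · intro a ha
              by_cases haa : a = a0
              · exact Or.inl (haa ▸ hAu)
              · rcases htight2A a0 a ha0 ha (fun h => haa h.symm) v hvT with h | h
                · exact absurd h hvA
                · exact Or.inr h
            · intro b hb
              by_cases hbb : b = b0
              · exact Or.inl (hbb ▸ hBu)
              · rcases htight2B b0 b hb0 hb (fun h => hbb h.symm) v hvT with h | h
                · exact absurd h hvB
                · exact Or.inr h
          by_cases h1 : ∃ u ∈ T.filter (fun x => A x = a0), u ∉ T.filter (fun x => B x = b0)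
          · by_cases h2 : ∃ v ∈ T.filter (fun x => B x = b0), v ∉ T.filter (fun x => A x = a0)
            · obtain ⟨u, hu, huB⟩ := h1
              obtain ⟨v, hv, hvA⟩ := h2
              have huT := (Finset.mem_filter.1 hu).1
              have hvT := (Finset.mem_filter.1 hv).1
              have hAu : A u = a0 := (Finset.mem_filter.1 hu).2
              have hBv : B v = b0 := (Finset.mem_filter.1 hv).2
              have hBu : B u ≠ b0 := fun h => huB (Finset.mem_filter.2 ⟨huT, h⟩)
              have hAv : A v ≠ a0 := fun h => hvA (Finset.mem_filter.2 ⟨hvT, h⟩)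
              refine ⟨u, huT, v, hvT, ⟨by rw [hAu]; exact fun h => hAv h.symm,
                by rw [hBv]; exact hBu⟩, ?_, ?_⟩
              · intro a ha
                by_cases haa : a = a0
                · exact Or.inl (haa ▸ hAu)
                · rcases htight2A a0 a ha0 ha (fun h => haa h.symm) v hvT with h | h
                  · exact absurd h hAv
                  · exact Or.inr h
              · intro b hb
                by_cases hbb : b = b0
                · exact Or.inr (hbb ▸ hBv)
                · rcases htight2B b0 b hb0 hb (fun h => hbb h.symm) u huT with h | h
                  · exact absurd h hBu
                  · exact Or.inl h
            · push_neg at h2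
              apply hfinish
              apply Finset.eq_of_subset_of_card_le h2 (by omega) |>.symm
          · push_neg at h1
            apply hfinish
            exact Finset.eq_of_subset_of_card_le h1 (by omega)
        · -- tight A only
          have hedge : ∃ u ∈ T.filter (fun x => A x = a0), ∃ v ∈ T,
              A u ≠ A v ∧ B u ≠ B v := by
            by_contra hno
            push_neg at hno
            obtain ⟨u0, hu0⟩ := hDAne
            have hu0T := (Finset.mem_filter.1 hu0).1
            have hAu0 : A u0 = a0 := (Finset.mem_filter.1 hu0).2
            have hcompl : (T \ (T.filter (fun x => A x = a0))).Nonempty := by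
              rw [← Finset.card_pos, Finset.card_sdiff_of_subset (Finset.filter_subset _ _)]
              omega
            obtain ⟨w0, hw0⟩ := hcompl
            have hw0T := (Finset.mem_sdiff.1 hw0).1
            have hw0A : A w0 ≠ a0 := fun h =>
              (Finset.mem_sdiff.1 hw0).2 (Finset.mem_filter.2 ⟨hw0T, h⟩)
            have hall : ∀ z ∈ T, B z = B w0 := by
              intro z hz
              by_cases hzA : A z = a0
              · exact hno z (Finset.mem_filter.2 ⟨hz, hzA⟩) w0 hw0T
                  (by rw [hzA]; exact fun h => hw0A h.symm)
              · have e1 : B u0 = B z := hno u0 hu0 z hz (by rw [hAu0]; exact fun h => hzA h.symm)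
                have e2 : B u0 = B w0 := hno u0 hu0 w0 hw0T
                  (by rw [hAu0]; exact fun h => hw0A h.symm)
                exact e1.symm.trans e2
            have hfull : T.filter (fun x => B x = B w0) = T := Finset.filter_true_of_mem hall
            have h3 := hB (B w0); rw [hfull] at h3; omega
          obtain ⟨u, hu, v, hvT, hR⟩ := hedge
          have huT := (Finset.mem_filter.1 hu).1
          have hAu : A u = a0 := (Finset.mem_filter.1 hu).2
          refine ⟨u, huT, v, hvT, hR, ?_, ?_⟩
          · intro a ha
            by_cases haa : a = a0
            · exact Or.inl (haa ▸ hAu)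
            · rcases htight2A a0 a ha0 ha (fun h => haa h.symm) v hvT with h | h
              · exact absurd h (by rw [← hAu]; exact fun hh => hR.1 hh.symm)
              · exact Or.inr h
          · intro b hb
            exact absurd ⟨b, hb⟩ hexB
      · by_cases hexB : ∃ b, (T.filter (fun x => B x = b)).card + (k + 1) = T.card
        · -- tight B only
          obtain ⟨b0, hb0⟩ := hexB
          have hDBne : (T.filter (fun x => B x = b0)).Nonempty := by
            rw [← Finset.card_pos]; omega
          have hDBlt : (T.filter (fun x => B x = b0)).card < T.card := by omega
          have hedge : ∃ u ∈ T.filter (fun x => B x = b0), ∃ v ∈ T,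
              A u ≠ A v ∧ B u ≠ B v := by
            by_contra hno
            push_neg at hno
            obtain ⟨u0, hu0⟩ := hDBne
            have hu0T := (Finset.mem_filter.1 hu0).1
            have hBu0 : B u0 = b0 := (Finset.mem_filter.1 hu0).2
            have hcompl : (T \ (T.filter (fun x => B x = b0))).Nonempty := by
              rw [← Finset.card_pos, Finset.card_sdiff_of_subset (Finset.filter_subset _ _)]
              omega
            obtain ⟨w0, hw0⟩ := hcompl
            have hw0T := (Finset.mem_sdiff.1 hw0).1
            have hw0B : B w0 ≠ b0 := fun h =>
              (Finset.mem_sdiff.1 hw0).2 (Finset.mem_filter.2 ⟨hw0T, h⟩)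
            have hall : ∀ z ∈ T, A z = A w0 := by
              intro z hz
              by_cases hzB : B z = b0
              · by_contra hzA
                exact (by rw [hzB]; exact fun h => hw0B h.symm : B z ≠ B w0)
                  (hno z (Finset.mem_filter.2 ⟨hz, hzB⟩) w0 hw0T hzA)
              · have e1 : A u0 = A z := by
                  by_contra hAz
                  exact (by rw [hBu0]; exact fun h => hzB h.symm : B u0 ≠ B z)
                    (hno u0 hu0 z hz hAz)
                have e2 : A u0 = A w0 := by
                  by_contra hAw
                  exact (by rw [hBu0]; exact fun h => hw0B h.symm : B u0 ≠ B w0)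
                    (hno u0 hu0 w0 hw0T hAw)
                exact e1.symm.trans e2
            have hfull : T.filter (fun x => A x = A w0) = T := Finset.filter_true_of_mem hall
            have h3 := hA (A w0); rw [hfull] at h3; omega
          obtain ⟨u, hu, v, hvT, hR⟩ := hedge
          have huT := (Finset.mem_filter.1 hu).1
          have hBu : B u = b0 := (Finset.mem_filter.1 hu).2
          refine ⟨u, huT, v, hvT, hR, ?_, ?_⟩
          · intro a ha
            exact absurd ⟨a, ha⟩ hexA
          · intro b hb
            by_cases hbb : b = b0
            · exact Or.inl (hbb ▸ hBu)
            · rcases htight2B b0 b hb0 hb (fun h => hbb h.symm) v hvT with h | h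
              · exact absurd h (by rw [← hBu]; exact fun hh => hR.2 hh.symm)
              · exact Or.inr h
        · -- no tight fibers : any edge
          have : ∃ u ∈ T, ∃ v ∈ T, ¬(A u = A v ∨ B u = B v) := by
            by_contra hno
            push_neg at hno
            exact hnoedge hno
          obtain ⟨u, huT, v, hvT, h⟩ := this
          push_neg at h
          refine ⟨u, huT, v, hvT, h, ?_, ?_⟩
          · intro a ha; exact absurd ⟨a, ha⟩ hexA
          · intro b hb; exact absurd ⟨b, hb⟩ hexB
    obtain ⟨u, huT, v, hvT, hR, hcovA, hcovB⟩ := hpair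
    have huv : u ≠ v := fun h => hR.1 (by rw [h])
    have hsub2 : ({u, v} : Finset V) ⊆ T := by
      intro z hz
      rcases Finset.mem_insert.1 hz with rfl | hz
      · exact huT
      · rcases Finset.mem_singleton.1 hz with rfl; exact hvT
    set T' := T \ {u, v} with hT'def
    have hT'card : T'.card = T.card - 2 := by
      rw [hT'def, Finset.card_sdiff_of_subset hsub2, Finset.card_pair huv]
    have hfibAeq : ∀ c, T'.filter (fun x => A x = c) = (T.filter (fun x => A x = c)) \ {u, v} := by
      intro c
      ext z
      simp only [hT'def, Finset.mem_filter, Finset.mem_sdiff]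
      tauto
    have hfibBeq : ∀ c, T'.filter (fun x => B x = c) = (T.filter (fun x => B x = c)) \ {u, v} := by
      intro c
      ext z
      simp only [hT'def, Finset.mem_filter, Finset.mem_sdiff]
      tauto
    have hfibA' : ∀ a, (T'.filter (fun x => A x = a)).card + k ≤ T'.card := by
      intro a
      rw [hfibAeq a, hT'card]
      by_cases hta : (T.filter (fun x => A x = a)).card + (k + 1) = T.card
      · have hhit : u ∈ T.filter (fun x => A x = a) ∨ v ∈ T.filter (fun x => A x = a) := by
          rcases hcovA a hta with h | h
          · exact Or.inl (Finset.mem_filter.2 ⟨huT, h⟩)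
          · exact Or.inr (Finset.mem_filter.2 ⟨hvT, h⟩)
        have hcle : ((T.filter (fun x => A x = a)) \ {u, v}).card
            ≤ (T.filter (fun x => A x = a)).card - 1 := by
          rcases hhit with h | h
          · calc ((T.filter (fun x => A x = a)) \ {u, v}).card
                ≤ ((T.filter (fun x => A x = a)).erase u).card := by
                  apply Finset.card_le_card
                  intro z hz
                  rw [Finset.mem_sdiff] at hz
                  rw [Finset.mem_erase]
                  refine ⟨fun hh => hz.2 (by rw [hh]; exact Finset.mem_insert_self _ _), hz.1⟩
              _ = (T.filter (fun x => A x = a)).card - 1 := Finset.card_erase_of_mem h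
          · calc ((T.filter (fun x => A x = a)) \ {u, v}).card
                ≤ ((T.filter (fun x => A x = a)).erase v).card := by
                  apply Finset.card_le_card
                  intro z hz
                  rw [Finset.mem_sdiff] at hz
                  rw [Finset.mem_erase]
                  refine ⟨fun hh => hz.2 (by rw [hh]; simp), hz.1⟩
              _ = (T.filter (fun x => A x = a)).card - 1 := Finset.card_erase_of_mem h
        omega
      · have h1 := hA a
        have h2 : ((T.filter (fun x => A x = a)) \ {u, v}).card
            ≤ (T.filter (fun x => A x = a)).card :=
          Finset.card_le_card (Finset.sdiff_subset)
        omega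
    have hfibB' : ∀ b, (T'.filter (fun x => B x = b)).card + k ≤ T'.card := by
      intro b
      rw [hfibBeq b, hT'card]
      by_cases htb : (T.filter (fun x => B x = b)).card + (k + 1) = T.card
      · have hhit : u ∈ T.filter (fun x => B x = b) ∨ v ∈ T.filter (fun x => B x = b) := by
          rcases hcovB b htb with h | h
          · exact Or.inl (Finset.mem_filter.2 ⟨huT, h⟩)
          · exact Or.inr (Finset.mem_filter.2 ⟨hvT, h⟩)
        have hcle : ((T.filter (fun x => B x = b)) \ {u, v}).card
            ≤ (T.filter (fun x => B x = b)).card - 1 := by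
          rcases hhit with h | h
          · calc ((T.filter (fun x => B x = b)) \ {u, v}).card
                ≤ ((T.filter (fun x => B x = b)).erase u).card := by
                  apply Finset.card_le_card
                  intro z hz
                  rw [Finset.mem_sdiff] at hz
                  rw [Finset.mem_erase]
                  refine ⟨fun hh => hz.2 (by rw [hh]; exact Finset.mem_insert_self _ _), hz.1⟩
              _ = (T.filter (fun x => B x = b)).card - 1 := Finset.card_erase_of_mem h
          · calc ((T.filter (fun x => B x = b)) \ {u, v}).card
                ≤ ((T.filter (fun x => B x = b)).erase v).card := by
                  apply Finset.card_le_card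
                  intro z hz
                  rw [Finset.mem_sdiff] at hz
                  rw [Finset.mem_erase]
                  refine ⟨fun hh => hz.2 (by rw [hh]; simp), hz.1⟩
              _ = (T.filter (fun x => B x = b)).card - 1 := Finset.card_erase_of_mem h
        omega
      · have h1 := hB b
        have h2 : ((T.filter (fun x => B x = b)) \ {u, v}).card
            ≤ (T.filter (fun x => B x = b)).card :=
          Finset.card_le_card (Finset.sdiff_subset)
        omega
    obtain ⟨f, hf, hcard⟩ := IHk T' (by omega) hfibA' hfibB'
    have hfu : f u = none := by
      rw [← not_mem_msupp]
      intro hmem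
      have := hf.msupp_subset hmem
      rw [hT'def, Finset.mem_sdiff] at this
      exact this.2 (Finset.mem_insert_self _ _)
    have hfv : f v = none := by
      rw [← not_mem_msupp]
      intro hmem
      have := hf.msupp_subset hmem
      rw [hT'def, Finset.mem_sdiff] at this
      exact this.2 (by simp)
    have hext := (hf.mono (by rw [hT'def]; exact Finset.sdiff_subset)).extend hfu hfv huv
      hR ⟨Ne.symm hR.1, Ne.symm hR.2⟩ huT hvT
    refine ⟨_, hext.1, ?_⟩
    rw [hext.2]
    have hun : u ∉ insert v (msupp f) := by
      rw [Finset.mem_insert]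
      push_neg
      exact ⟨huv, not_mem_msupp.2 hfu⟩
    have hvn : v ∉ msupp f := not_mem_msupp.2 hfv
    rw [Finset.card_insert_of_notMem hun, Finset.card_insert_of_notMem hvn]
    omega

end LemmaM

section LemmaM1

variable {α β : Type*}

lemma lemmaM1 (A : V → α) (B : V → β) (T : Finset V)
    {t1 t2 t3 : V} (ht1 : t1 ∈ T) (ht2 : t2 ∈ T) (ht3 : t3 ∈ T)
    (hA12 : A t1 ≠ A t2) (hA13 : A t1 ≠ A t3) (hA23 : A t2 ≠ A t3)
    {x fx y fy : V} (hx : x ∈ T) (hfx : fx ∈ T) (hy : y ∈ T) (hfy : fy ∈ T)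
    (hex : A x ≠ A fx ∧ B x ≠ B fx) (hey : A y ≠ A fy ∧ B y ≠ B fy) :
    ReachIn (fun a b => A a ≠ A b ∧ B a ≠ B b) T x y := by
  set R : V → V → Prop := fun a b => A a ≠ A b ∧ B a ≠ B b with hRdef
  have hRsym : Symmetric R := fun a b h => ⟨Ne.symm h.1, Ne.symm h.2⟩
  have hxC : x ∈ compFin R T x := mem_compFin_self hx
  have hfxC : fx ∈ compFin R T x := mem_compFin_of_adj hxC hfx hex
  by_cases hyC : y ∈ compFin R T x
  · exact reachIn_of_mem_compFin hyC
  by_cases hfyC : fy ∈ compFin R T x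
  · exact (reachIn_of_mem_compFin hfyC).tail ⟨hfy, hy, hRsym hey⟩
  · exfalso
    have hnon : ∀ w ∈ compFin R T x, ∀ z ∈ T, z ∉ compFin R T x →
        (A w = A z ∨ B w = B z) := by
      intro w hw z hzT hzC
      by_contra h
      push_neg at h
      exact hzC (mem_compFin_of_adj hw hzT h)
    have key1 : ∀ z ∈ T, z ∉ compFin R T x → (A z = A x ∨ A z = A fx) := by
      intro z hzT hzC
      rcases hnon x hxC z hzT hzC with h | h
      · exact Or.inl h.symm
      · rcases hnon fx hfxC z hzT hzC with h2 | h2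
        · exact Or.inr h2.symm
        · exact absurd (h.trans h2.symm) hex.2
    have key2 : ∀ w ∈ compFin R T x, (A w = A y ∨ A w = A fy) := by
      intro w hw
      rcases hnon w hw y hy hyC with h | h
      · exact Or.inl h
      · rcases hnon w hw fy hfy hfyC with h2 | h2
        · exact Or.inr h2
        · exact absurd (h.symm.trans h2) hey.2
    have hyk := key1 y hy hyC
    have hfyk := key1 fy hfy hfyC
    have hall : ∀ t ∈ T, A t = A x ∨ A t = A fx := by
      intro t htT
      by_cases htC : t ∈ compFin R T x
      · rcases key2 t htC with h | h
        · rcases hyk with h2 | h2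
          · exact Or.inl (h.trans h2)
          · exact Or.inr (h.trans h2)
        · rcases hfyk with h2 | h2
          · exact Or.inl (h.trans h2)
          · exact Or.inr (h.trans h2)
      · exact key1 t htT htC
    rcases hall t1 ht1 with h1 | h1 <;> rcases hall t2 ht2 with h2 | h2 <;>
      rcases hall t3 ht3 with h3' | h3' <;>
      first
      | exact hA12 (h1.trans h2.symm)
      | exact hA13 (h1.trans h3'.symm)
      | exact hA23 (h2.trans h3'.symm)

lemma reach_lift {R : V → V → Prop} {S : SimpleGraph V} {T : Finset V}
    (h : ∀ a ∈ T, ∀ b ∈ T, R a b → S.Adj a b) {x y : V} (hr : ReachIn R T x y) :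
    S.Reachable x y := by
  induction hr with
  | refl => exact SimpleGraph.Reachable.refl x
  | tail hab hbc ih =>
    exact ih.trans (h _ hbc.1 _ hbc.2.1 hbc.2.2).reachable

end LemmaM1

section Phase2

lemma fiber_compl {γ : Type*} [DecidableEq γ] (F : V → γ) (T : Finset V) (m : ℕ)
    (hm : m ≤ (T.image F).card) (a : γ) :
    m ≤ (T \ T.filter (fun x => F x = a)).card + 1 := by
  have hsub : T.image F ⊆ insert a ((T \ T.filter (fun x => F x = a)).image F) := by
    intro c hc
    obtain ⟨x, hx, rfl⟩ := Finset.mem_image.1 hc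
    by_cases hxa : F x = a
    · rw [hxa]; exact Finset.mem_insert_self _ _
    · exact Finset.mem_insert_of_mem (Finset.mem_image.2
        ⟨x, Finset.mem_sdiff.2 ⟨hx, fun h => hxa (Finset.mem_filter.1 h).2⟩, rfl⟩)
  calc m ≤ (T.image F).card := hm
    _ ≤ (insert a ((T \ T.filter (fun x => F x = a)).image F)).card :=
        Finset.card_le_card hsub
    _ ≤ ((T \ T.filter (fun x => F x = a)).image F).card + 1 := Finset.card_insert_le _ _
    _ ≤ (T \ T.filter (fun x => F x = a)).card + 1 := by
        exact Nat.add_le_add_right (Finset.card_image_le) 1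

lemma phase2 {s : ℕ} (Agr Bgr : SimpleGraph V) (p : V → Fin s) (yA yB : ℕ)
    (hdi : ∀ u v : V, p u ≠ p v → Agr.Adj u v ∨ Bgr.Adj u v)
    (hyA1 : 1 ≤ yA) (hyB2 : 2 ≤ yB)
    (hN1 : yA + 2 * yB ≤ Fintype.card V + 1)
    (hN2 : 2 * yA + yB ≤ Fintype.card V + 1)
    (hNi : ∀ i : Fin s,
      (Finset.univ.filter (fun v => p v = i)).card + yA + yB ≤ Fintype.card V + 1)
    (K : Finset V) (u0 : V) (iP : Fin s)
    (hK : K = compFin Agr.Adj Finset.univ u0)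
    (hdom : ∀ w, w ∉ K → p w = iP)
    (hnoA : ¬∃ M, ConnMatching Agr M ∧ yA ≤ M.card)
    (hnoB : ¬∃ M, ConnMatching Bgr M ∧ yB ≤ M.card) : False := by
  have hAsym : Symmetric Agr.Adj := fun a b h => h.symm
  have hKcl : ∀ a ∈ K, ∀ b, Agr.Adj a b → b ∈ K := by
    intro a ha b hab
    rw [hK] at ha ⊢
    exact mem_compFin_of_adj ha (Finset.mem_univ b) hab
  have hKreach : ∀ x ∈ K, ∀ y ∈ K, Agr.Reachable x y := by
    intro x hx y hy
    rw [hK, mem_compFin] at hx hy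
    exact reach_lift (S := Agr) (fun a _ b _ h => h) ((hx.2.symm hAsym).trans hy.2)
  -- maximum matching in color A on K
  obtain ⟨f0, hf0, hmax0⟩ := exists_maxMF Agr.Adj K
  have hsize : (msupp f0).card + 2 ≤ 2 * yA := by
    by_contra hbig
    push_neg at hbig
    have hev : Even (msupp f0).card := hf0.even_card
    have h2 : 2 * yA ≤ (msupp f0).card := by
      rw [Nat.even_iff] at hev; omega
    have hreach : ∀ x ∈ msupp f0, ∀ y ∈ msupp f0, Agr.Reachable x y := by
      intro x hx y hy
      exact hKreach x (hf0.msupp_subset hx) y (hf0.msupp_subset hy)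
    exact hnoA (exists_connMatching Agr hf0 hreach h2)
  obtain ⟨S, hSsub, hBT⟩ := berge_tutte hAsym K f0 hf0 hmax0
  set U := K \ S with hUdef
  have hUK : U ⊆ K := Finset.sdiff_subset
  have hUcard : U.card = K.card - S.card := Finset.card_sdiff_of_subset hSsub
  have hSK := Finset.card_le_card hSsub
  have hoddle := oddComps_card_le (R := Agr.Adj) (U := U) hAsym
  have hSyA : S.card + 1 ≤ yA := by
    rw [hUcard] at hoddle
    omega
  set T : Finset V := Finset.univ \ S with hTdef
  have hTcard : T.card = Fintype.card V - S.card := by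
    rw [hTdef, Finset.card_sdiff_of_subset (Finset.subset_univ S), Finset.card_univ]
  have hUT : U ⊆ T := by
    intro z hz
    rw [hTdef, Finset.mem_sdiff]
    exact ⟨Finset.mem_univ z, (Finset.mem_sdiff.1 hz).2⟩
  have hWT : ∀ w, w ∉ K → w ∈ T := by
    intro w hw
    rw [hTdef, Finset.mem_sdiff]
    exact ⟨Finset.mem_univ w, fun h => hw (hSsub h)⟩
  have hTsplit : ∀ z ∈ T, z ∈ U ∨ z ∉ K := by
    intro z hz
    rw [hTdef, Finset.mem_sdiff] at hz
    by_cases hzK : z ∈ K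
    · exact Or.inl (Finset.mem_sdiff.2 ⟨hzK, hz.2⟩)
    · exact Or.inr hzK
  set Af : V → Finset V := fun t => if t ∈ U then compFin Agr.Adj U t else {t} with hAfdef
  have hAfU : ∀ t ∈ U, Af t = compFin Agr.Adj U t := by
    intro t ht; rw [hAfdef]; dsimp only; rw [if_pos ht]
  have hAfW : ∀ t, t ∉ U → Af t = {t} := by
    intro t ht; rw [hAfdef]; dsimp only; rw [if_neg ht]
  -- the image of Af on T is large
  have hWeq : Finset.univ \ K = T \ U := by
    ext z
    simp only [Finset.mem_sdiff, hTdef, Finset.mem_univ, true_and, hUdef]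
    constructor
    · intro h; exact ⟨fun hS => h (hSsub hS), fun hh => h hh.1⟩
    · intro h
      intro hzK
      exact h.2 ⟨hzK, h.1⟩
  have hval_sub : oddComps Agr.Adj U ∪ (Finset.univ \ K).image (fun w => ({w} : Finset V))
      ⊆ T.image Af := by
    intro C hC
    rcases Finset.mem_union.1 hC with hC | hC
    · have hC' : C ∈ compsOf Agr.Adj U := (Finset.mem_filter.1 hC).1
      obtain ⟨c, hc, rfl⟩ := Finset.mem_image.1 hC'
      exact Finset.mem_image.2 ⟨c, hUT hc, hAfU c hc⟩
    · obtain ⟨w, hw, rfl⟩ := Finset.mem_image.1 hC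
      rw [hWeq] at hw
      have hwT := (Finset.mem_sdiff.1 hw).1
      have hwU := (Finset.mem_sdiff.1 hw).2
      exact Finset.mem_image.2 ⟨w, hwT, hAfW w hwU⟩
  have hval_card : (oddComps Agr.Adj U).card + (Finset.univ \ K).card
      ≤ (T.image Af).card := by
    have hdisj : Disjoint (oddComps Agr.Adj U)
        ((Finset.univ \ K).image (fun w => ({w} : Finset V))) := by
      rw [Finset.disjoint_left]
      intro C hC hC'
      obtain ⟨w, hw, hweq⟩ := Finset.mem_image.1 hC'
      have hC1 : C ∈ compsOf Agr.Adj U := (Finset.mem_filter.1 hC).1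
      obtain ⟨c, hc, hceq⟩ := Finset.mem_image.1 hC1
      have hcc : c ∈ C := by rw [← hceq]; exact mem_compFin_self hc
      rw [← hweq] at hcc
      have hcw : c = w := Finset.mem_singleton.1 hcc
      exact (Finset.mem_sdiff.1 hw).2 (hUK (hcw ▸ hc))
    have himg : ((Finset.univ \ K).image (fun w => ({w} : Finset V))).card
        = (Finset.univ \ K).card := by
      apply Finset.card_image_of_injOn
      intro a _ b _ hab
      exact Finset.singleton_injective hab
    calc (oddComps Agr.Adj U).card + (Finset.univ \ K).card
        = (oddComps Agr.Adj U ∪ (Finset.univ \ K).image (fun w => ({w} : Finset V))).card := by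
          rw [Finset.card_union_of_disjoint hdisj, himg]
      _ ≤ (T.image Af).card := Finset.card_le_card hval_sub
  have hKW : K.card + (Finset.univ \ K).card = Fintype.card V := by
    have h0 := Finset.card_le_univ K
    rw [Finset.card_sdiff_of_subset (Finset.subset_univ K), Finset.card_univ]
    omega
  have hSuniv := Finset.card_le_univ S
  have himg_big : yB + 1 ≤ (T.image Af).card := by
    have h1 : K.card + S.card ≤ (oddComps Agr.Adj U).card + (msupp f0).card := hBT
    omega
  -- hypotheses of lemmaM
  have hTcard2 : 2 * yB ≤ T.card := by omega
  have hAfib : ∀ a, (T.filter (fun x => Af x = a)).card + yB ≤ T.card := by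
    intro a
    have h1 := fiber_compl Af T (yB + 1) himg_big a
    have h2 : (T \ T.filter (fun x => Af x = a)).card
        = T.card - (T.filter (fun x => Af x = a)).card :=
      Finset.card_sdiff_of_subset (Finset.filter_subset _ _)
    have h3 := Finset.card_le_card (Finset.filter_subset (fun x => Af x = a) T)
    omega
  have hBfib : ∀ b, (T.filter (fun x => p x = b)).card + yB ≤ T.card := by
    intro b
    have h1 : T.filter (fun x => p x = b) ⊆ Finset.univ.filter (fun v => p v = b) := by
      intro z hz
      exact Finset.mem_filter.2 ⟨Finset.mem_univ z, (Finset.mem_filter.1 hz).2⟩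
    have h2 := Finset.card_le_card h1
    have h3 := hNi b
    omega
  obtain ⟨f, hf, hcard⟩ := lemmaM Af p yB T hTcard2 hAfib hBfib
  -- cross edges are B-edges
  have hsub : ∀ a ∈ T, ∀ b ∈ T, (Af a ≠ Af b ∧ p a ≠ p b) → Bgr.Adj a b := by
    intro a ha b hb hR
    rcases hdi a b hR.2 with hAB | hAB
    · exfalso
      rcases hTsplit a ha with haU | haK
      · rcases hTsplit b hb with hbU | hbK
        · apply hR.1
          rw [hAfU a haU, hAfU b hbU]
          exact compFin_eq_of_mem hAsym (mem_compFin_of_adj (mem_compFin_self haU) hbU hAB)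
        · exact hbK (hKcl a (hUK haU) b hAB)
      · rcases hTsplit b hb with hbU | hbK
        · exact haK (hKcl b (hUK hbU) a hAB.symm)
        · exact hR.2 ((hdom a haK).trans (hdom b hbK).symm)
    · exact hAB
  have hf' : IsMFun Bgr.Adj T f := by
    intro x y hxy
    obtain ⟨h1, h2, h3, h4, h5⟩ := hf hxy
    exact ⟨h1, h2, hsub x h1 y h2 h3, h4, h5⟩
  -- three distinct Af-values
  obtain ⟨t1, ht1, t2, ht2, t3, ht3, h12, h13, h23⟩ :
      ∃ t1 ∈ T, ∃ t2 ∈ T, ∃ t3 ∈ T, Af t1 ≠ Af t2 ∧ Af t1 ≠ Af t3 ∧ Af t2 ≠ Af t3 := by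
    have h3c : 3 ≤ (T.image Af).card := by omega
    obtain ⟨a1, ha1⟩ := Finset.card_pos.1 (by omega : 0 < (T.image Af).card)
    have h2c : 1 ≤ ((T.image Af).erase a1).card := by
      rw [Finset.card_erase_of_mem ha1]; omega
    obtain ⟨a2, ha2⟩ := Finset.card_pos.1
      (show 0 < ((T.image Af).erase a1).card by omega)
    have h1c : 1 ≤ (((T.image Af).erase a1).erase a2).card := by
      rw [Finset.card_erase_of_mem ha2, Finset.card_erase_of_mem ha1]; omega
    obtain ⟨a3, ha3⟩ := Finset.card_pos.1
      (show 0 < (((T.image Af).erase a1).erase a2).card by omega)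
    have ha2' := Finset.mem_erase.1 ha2
    have ha3' := Finset.mem_erase.1 ha3
    have ha3'' := Finset.mem_erase.1 ha3'.2
    obtain ⟨t1, ht1, he1⟩ := Finset.mem_image.1 ha1
    obtain ⟨t2, ht2, he2⟩ := Finset.mem_image.1 ha2'.2
    obtain ⟨t3, ht3, he3⟩ := Finset.mem_image.1 ha3''.2
    refine ⟨t1, ht1, t2, ht2, t3, ht3, ?_, ?_, ?_⟩
    · rw [he1, he2]; exact fun h => ha2'.1 (h.symm.trans rfl ▸ rfl)
    · rw [he1, he3]; exact fun h => ha3''.1 (h ▸ rfl)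
    · rw [he2, he3]; exact fun h => ha3'.1 (h ▸ rfl)
  -- reachability of matched vertices in B
  have hreach : ∀ x ∈ msupp f, ∀ y ∈ msupp f, Bgr.Reachable x y := by
    intro x hx y hy
    obtain ⟨fx, hfx⟩ := mem_msupp.1 hx
    obtain ⟨fy, hfy⟩ := mem_msupp.1 hy
    obtain ⟨hx1, hx2, hx3, _, _⟩ := hf hfx
    obtain ⟨hy1, hy2, hy3, _, _⟩ := hf hfy
    exact reach_lift hsub
      (lemmaM1 Af p T ht1 ht2 ht3 h12 h13 h23 hx1 hx2 hy1 hy2 hx3 hy3)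
  exact hnoB (exists_connMatching Bgr hf' hreach hcard)

end Phase2

section Phase1

lemma connMatching_empty (S : SimpleGraph V) : ConnMatching S (∅ : Finset (V × V)) := by
  refine ⟨⟨?_, ?_⟩, ?_⟩
  · intro e he; exact absurd he (Finset.notMem_empty e)
  · intro e he; exact absurd he (Finset.notMem_empty e)
  · intro e he; exact absurd he (Finset.notMem_empty e)

lemma bip_bound (S : SimpleGraph V) {X Y : Finset V} (hXY : ∀ x ∈ X, x ∉ Y)
    (hadj : ∀ x ∈ X, ∀ y ∈ Y, S.Adj x y) (hX : X.Nonempty) (hY : Y.Nonempty)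
    {y : ℕ} (hno : ¬∃ M, ConnMatching S M ∧ y ≤ M.card) :
    min X.card Y.card < y := by
  by_contra hge
  push_neg at hge
  obtain ⟨f, hf, hcard⟩ := bip_match S.Adj X Y hXY
    (fun a ha b hb => ⟨hadj a ha b hb, (hadj a ha b hb).symm⟩)
  obtain ⟨x0, hx0⟩ := hX
  obtain ⟨y0, hy0⟩ := hY
  have hreach : ∀ a ∈ msupp f, ∀ b ∈ msupp f, S.Reachable a b := by
    have hr : ∀ a ∈ X ∪ Y, ∀ b ∈ X ∪ Y, S.Reachable a b := by
      intro a ha b hb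
      rcases Finset.mem_union.1 ha with ha' | ha' <;> rcases Finset.mem_union.1 hb with hb' | hb'
      · exact ((hadj a ha' y0 hy0).reachable).trans ((hadj b hb' y0 hy0).symm.reachable)
      · exact (hadj a ha' b hb').reachable
      · exact ((hadj b hb' a ha').reachable).symm
      · exact ((hadj x0 hx0 a ha').symm.reachable).trans ((hadj x0 hx0 b hb').reachable)
    intro a ha b hb
    exact hr a (hf.msupp_subset ha) b (hf.msupp_subset hb)
  exact hno (exists_connMatching S hf hreach (le_trans (by omega) hcard))

lemma phase1 {s : ℕ} (Agr Bgr : SimpleGraph V) (p : V → Fin s) (yA yB : ℕ)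
    (hdi : ∀ u v : V, p u ≠ p v → Agr.Adj u v ∨ Bgr.Adj u v)
    (hadjA : ∀ u v, Agr.Adj u v → p u ≠ p v)
    (hNi : ∀ i : Fin s,
      (Finset.univ.filter (fun v => p v = i)).card + yA + yB ≤ Fintype.card V + 1)
    (hnoA : ¬∃ M, ConnMatching Agr M ∧ yA ≤ M.card)
    (hnoB : ¬∃ M, ConnMatching Bgr M ∧ yB ≤ M.card)
    {a0 b0 : V} (hab : Agr.Adj a0 b0) :
    (∃ K u0 iP, K = compFin Agr.Adj Finset.univ u0 ∧ ∀ w, w ∉ K → p w = iP) ∨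
    (∃ K u0 iP, K = compFin Bgr.Adj Finset.univ u0 ∧ ∀ w, w ∉ K → p w = iP) := by
  have hyA1 : 1 ≤ yA := by
    by_contra h
    exact hnoA ⟨∅, connMatching_empty Agr, by omega⟩
  have hyB1 : 1 ≤ yB := by
    by_contra h
    exact hnoB ⟨∅, connMatching_empty Bgr, by omega⟩
  have hASym : Symmetric Agr.Adj := fun a b h => h.symm
  have hBSym : Symmetric Bgr.Adj := fun a b h => h.symm
  set K := compFin Agr.Adj Finset.univ a0 with hKdef
  have hKcl : ∀ a ∈ K, ∀ b, Agr.Adj a b → b ∈ K := by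
    intro a ha b hadj
    exact mem_compFin_of_adj ha (Finset.mem_univ b) hadj
  have ha0K : a0 ∈ K := mem_compFin_self (Finset.mem_univ a0)
  have hb0K : b0 ∈ K := hKcl a0 ha0K b0 hab
  have hpab : p a0 ≠ p b0 := hadjA _ _ hab
  have hBedge : ∀ z ∈ K, ∀ w, w ∉ K → p z ≠ p w → Bgr.Adj z w := by
    intro z hz w hw hpzw
    rcases hdi z w hpzw with h | h
    · exact absurd (hKcl z hz w h) hw
    · exact h
  -- component of a vertex x in B-graph
  have hBcl : ∀ (x : V), ∀ a ∈ compFin Bgr.Adj Finset.univ x, ∀ b, Bgr.Adj a b →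
      b ∈ compFin Bgr.Adj Finset.univ x := by
    intro x a ha b hadj
    exact mem_compFin_of_adj ha (Finset.mem_univ b) hadj
  by_cases hdomK : ∃ i, ∀ w, w ∉ K → p w = i
  · obtain ⟨i, hi⟩ := hdomK
    exact Or.inl ⟨K, a0, i, rfl, hi⟩
  · push_neg at hdomK
    obtain ⟨w0, hw0K, _⟩ := hdomK (p a0)
    obtain ⟨w1, hw1K, hw1p⟩ := hdomK (p w0)
    have hw1p' : p w1 ≠ p w0 := hw1p
    by_cases hcase1 : ∃ w, w ∉ K ∧ p w ≠ p a0 ∧ p w ≠ p b0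
    · -- some external vertex sees both a0 and b0 in B
      obtain ⟨wx, hwxK, hwxa, hwxb⟩ := hcase1
      set L := compFin Bgr.Adj Finset.univ a0 with hLdef
      have ha0L : a0 ∈ L := mem_compFin_self (Finset.mem_univ a0)
      have hwxL : wx ∈ L := hBcl a0 a0 ha0L wx (hBedge a0 ha0K wx hwxK (Ne.symm hwxa))
      have hb0L : b0 ∈ L := hBcl a0 wx hwxL b0 ((hBedge b0 hb0K wx hwxK (Ne.symm hwxb)).symm)
      have hVKL : ∀ w, w ∉ K → w ∈ L := by
        intro w hw
        by_cases hpw : p w = p a0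
        · have : p w ≠ p b0 := by rw [hpw]; exact hpab
          exact hBcl a0 b0 hb0L w ((hBedge b0 hb0K w hw (Ne.symm this)))
        · exact hBcl a0 a0 ha0L w (hBedge a0 ha0K w hw (Ne.symm hpw))
      have hLall : ∀ z, z ∈ L := by
        intro z
        by_contra hzL
        have hzK : z ∈ K := by
          by_contra hzK
          exact hzL (hVKL z hzK)
        have hpz : ∀ w, w ∉ K → p z = p w := by
          intro w hw
          by_contra hpzw
          exact hzL (hBcl a0 w (hVKL w hw) z ((hBedge z hzK w hw hpzw).symm))
        exact hw1p' ((hpz w1 hw1K).symm.trans (hpz w0 hw0K))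
      exact Or.inr ⟨L, a0, p a0, rfl, fun w hw => absurd (hLall w) hw⟩
    · -- all external vertices lie in the two parts of a0, b0
      push_neg at hcase1
      set A' := Finset.univ.filter (fun w => w ∉ K ∧ p w = p a0) with hA'def
      set B' := Finset.univ.filter (fun w => w ∉ K ∧ p w = p b0) with hB'def
      have hmemA' : ∀ w, w ∈ A' ↔ (w ∉ K ∧ p w = p a0) := by
        intro w; rw [hA'def, Finset.mem_filter]; simp
      have hmemB' : ∀ w, w ∈ B' ↔ (w ∉ K ∧ p w = p b0) := by
        intro w; rw [hB'def, Finset.mem_filter]; simp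
      have hext : ∀ w, w ∉ K → p w = p a0 ∨ p w = p b0 := by
        intro w hw
        by_cases h : p w = p a0
        · exact Or.inl h
        · exact Or.inr (hcase1 w hw h)
      have hABne : A'.Nonempty ∧ B'.Nonempty := by
        rcases hext w0 hw0K with h0 | h0 <;> rcases hext w1 hw1K with h1 | h1
        · exact absurd (h1.trans h0.symm) hw1p'
        · exact ⟨⟨w0, (hmemA' w0).2 ⟨hw0K, h0⟩⟩, ⟨w1, (hmemB' w1).2 ⟨hw1K, h1⟩⟩⟩
        · exact ⟨⟨w1, (hmemA' w1).2 ⟨hw1K, h1⟩⟩, ⟨w0, (hmemB' w0).2 ⟨hw0K, h0⟩⟩⟩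
        · exact absurd (h1.trans h0.symm) hw1p'
      obtain ⟨hA'ne, hB'ne⟩ := hABne
      set Lu := compFin Bgr.Adj Finset.univ a0 with hLudef
      set Lv := compFin Bgr.Adj Finset.univ b0 with hLvdef
      have ha0Lu : a0 ∈ Lu := mem_compFin_self (Finset.mem_univ a0)
      have hb0Lv : b0 ∈ Lv := mem_compFin_self (Finset.mem_univ b0)
      have hA'Lv : ∀ a ∈ A', a ∈ Lv := by
        intro a ha
        obtain ⟨haK, hap⟩ := (hmemA' a).1 ha
        refine hBcl b0 b0 hb0Lv a (hBedge b0 hb0K a haK ?_)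
        rw [hap]; exact Ne.symm hpab
      have hB'Lu : ∀ b ∈ B', b ∈ Lu := by
        intro b hb
        obtain ⟨hbK, hbp⟩ := (hmemB' b).1 hb
        refine hBcl a0 a0 ha0Lu b (hBedge a0 ha0K b hbK ?_)
        rw [hbp]; exact hpab
      by_cases hLL : Lu = Lv
      · -- dominant B-component again
        have hLall : ∀ z, z ∈ Lu := by
          intro z
          by_contra hzL
          have hzK : z ∈ K := by
            by_contra hzK
            rcases hext z hzK with h | h
            · exact hzL (hLL ▸ hA'Lv z ((hmemA' z).2 ⟨hzK, h⟩))
            · exact hzL (hB'Lu z ((hmemB' z).2 ⟨hzK, h⟩))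
          by_cases hpz : p z = p a0
          · obtain ⟨b, hb⟩ := hB'ne
            obtain ⟨hbK, hbp⟩ := (hmemB' b).1 hb
            have : p z ≠ p b := by rw [hpz, hbp]; exact hpab
            exact hzL (hBcl a0 b (hB'Lu b hb) z ((hBedge z hzK b hbK this).symm))
          · obtain ⟨a, ha⟩ := hA'ne
            obtain ⟨haK, hap⟩ := (hmemA' a).1 ha
            have : p z ≠ p a := by rw [hap]; exact hpz
            exact hzL (hLL ▸ hBcl b0 a (hA'Lv a ha) z ((hBedge z hzK a haK this).symm))
        exact Or.inr ⟨Lu, a0, p a0, rfl, fun w hw => absurd (hLall w) hw⟩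
      · -- four-cell configuration : contradiction
        exfalso
        have hLdisj : ∀ z, z ∈ Lu → z ∈ Lv → False := by
          intro z hzu hzv
          exact hLL ((compFin_eq_of_mem hBSym hzu).trans (compFin_eq_of_mem hBSym hzv).symm)
        set V1 := K ∩ Lu with hV1def
        set V2 := K ∩ Lv with hV2def
        set V3 := (Finset.univ \ K) ∩ Lu with hV3def
        set V4 := (Finset.univ \ K) ∩ Lv with hV4def
        have ha0V1 : a0 ∈ V1 := Finset.mem_inter.2 ⟨ha0K, ha0Lu⟩
        have hb0V2 : b0 ∈ V2 := Finset.mem_inter.2 ⟨hb0K, hb0Lv⟩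
        obtain ⟨aa, haa⟩ := hA'ne
        obtain ⟨bb, hbb⟩ := hB'ne
        have haaK := ((hmemA' aa).1 haa).1
        have haap := ((hmemA' aa).1 haa).2
        have hbbK := ((hmemB' bb).1 hbb).1
        have hbbp := ((hmemB' bb).1 hbb).2
        have haaV4 : aa ∈ V4 := Finset.mem_inter.2
          ⟨Finset.mem_sdiff.2 ⟨Finset.mem_univ aa, haaK⟩, hA'Lv aa haa⟩
        have hbbV3 : bb ∈ V3 := Finset.mem_inter.2
          ⟨Finset.mem_sdiff.2 ⟨Finset.mem_univ bb, hbbK⟩, hB'Lu bb hbb⟩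
        -- part functions
        have hV1p : ∀ z ∈ V1, p z = p a0 := by
          intro z hz
          obtain ⟨hzK, hzLu⟩ := Finset.mem_inter.1 hz
          by_contra hpz
          have : p z ≠ p aa := by rw [haap]; exact hpz
          exact hLdisj z hzLu (hBcl b0 aa (hA'Lv aa haa) z ((hBedge z hzK aa haaK this).symm))
        have hV2p : ∀ z ∈ V2, p z = p b0 := by
          intro z hz
          obtain ⟨hzK, hzLv⟩ := Finset.mem_inter.1 hz
          by_contra hpz
          have : p z ≠ p bb := by rw [hbbp]; exact hpz
          exact hLdisj z (hBcl a0 bb (hB'Lu bb hbb) z ((hBedge z hzK bb hbbK this).symm)) hzLv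
        have hV3p : ∀ z ∈ V3, p z = p b0 := by
          intro z hz
          obtain ⟨hzK', hzLu⟩ := Finset.mem_inter.1 hz
          have hzK := (Finset.mem_sdiff.1 hzK').2
          rcases hext z hzK with h | h
          · exact absurd (hLdisj z hzLu (hA'Lv z ((hmemA' z).2 ⟨hzK, h⟩))) id
          · exact h
        have hV4p : ∀ z ∈ V4, p z = p a0 := by
          intro z hz
          obtain ⟨hzK', hzLv⟩ := Finset.mem_inter.1 hz
          have hzK := (Finset.mem_sdiff.1 hzK').2
          rcases hext z hzK with h | h
          · exact h
          · exact absurd (hLdisj z (hB'Lu z ((hmemB' z).2 ⟨hzK, h⟩)) hzLv) id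
        -- coverage
        have hcover : ∀ z : V, z ∈ V1 ∨ z ∈ V2 ∨ z ∈ V3 ∨ z ∈ V4 := by
          intro z
          by_cases hzK : z ∈ K
          · by_cases hpz : p z = p a0
            · left
              refine Finset.mem_inter.2 ⟨hzK, ?_⟩
              have : p z ≠ p bb := by rw [hpz, hbbp]; exact hpab
              exact hBcl a0 bb (hB'Lu bb hbb) z ((hBedge z hzK bb hbbK this).symm)
            · right; left
              refine Finset.mem_inter.2 ⟨hzK, ?_⟩
              have : p z ≠ p aa := by rw [haap]; exact hpz
              exact hBcl b0 aa (hA'Lv aa haa) z ((hBedge z hzK aa haaK this).symm)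
          · rcases hext z hzK with h | h
            · right; right; right
              exact Finset.mem_inter.2 ⟨Finset.mem_sdiff.2 ⟨Finset.mem_univ z, hzK⟩,
                hA'Lv z ((hmemA' z).2 ⟨hzK, h⟩)⟩
            · right; right; left
              exact Finset.mem_inter.2 ⟨Finset.mem_sdiff.2 ⟨Finset.mem_univ z, hzK⟩,
                hB'Lu z ((hmemB' z).2 ⟨hzK, h⟩)⟩
        -- adjacencies
        have h12 : ∀ x ∈ V1, ∀ y ∈ V2, Agr.Adj x y := by
          intro x hx y hy
          have hpxy : p x ≠ p y := by
            rw [hV1p x hx, hV2p y hy]; exact hpab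
          rcases hdi x y hpxy with h | h
          · exact h
          · exact absurd (hLdisj y (hBcl a0 x (Finset.mem_inter.1 hx).2 y h)
              (Finset.mem_inter.1 hy).2) id
        have h34 : ∀ x ∈ V3, ∀ y ∈ V4, Agr.Adj x y := by
          intro x hx y hy
          have hpxy : p x ≠ p y := by
            rw [hV3p x hx, hV4p y hy]; exact Ne.symm hpab
          rcases hdi x y hpxy with h | h
          · exact h
          · exact absurd (hLdisj y (hBcl a0 x (Finset.mem_inter.1 hx).2 y h)
              (Finset.mem_inter.1 hy).2) id
        have h13 : ∀ x ∈ V1, ∀ y ∈ V3, Bgr.Adj x y := by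
          intro x hx y hy
          have hpxy : p x ≠ p y := by
            rw [hV1p x hx, hV3p y hy]; exact hpab
          rcases hdi x y hpxy with h | h
          · exact absurd (hKcl x (Finset.mem_inter.1 hx).1 y h)
              (Finset.mem_sdiff.1 (Finset.mem_inter.1 hy).1).2
          · exact h
        have h24 : ∀ x ∈ V2, ∀ y ∈ V4, Bgr.Adj x y := by
          intro x hx y hy
          have hpxy : p x ≠ p y := by
            rw [hV2p x hx, hV4p y hy]; exact Ne.symm hpab
          rcases hdi x y hpxy with h | h
          · exact absurd (hKcl x (Finset.mem_inter.1 hx).1 y h)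
              (Finset.mem_sdiff.1 (Finset.mem_inter.1 hy).1).2
          · exact h
        -- disjointnesses
        have hd12 : ∀ x ∈ V1, x ∉ V2 := by
          intro x hx hx'
          exact hLdisj x (Finset.mem_inter.1 hx).2 (Finset.mem_inter.1 hx').2
        have hd34 : ∀ x ∈ V3, x ∉ V4 := by
          intro x hx hx'
          exact hLdisj x (Finset.mem_inter.1 hx).2 (Finset.mem_inter.1 hx').2
        have hd13 : ∀ x ∈ V1, x ∉ V3 := by
          intro x hx hx'
          exact (Finset.mem_sdiff.1 (Finset.mem_inter.1 hx').1).2 (Finset.mem_inter.1 hx).1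
        have hd24 : ∀ x ∈ V2, x ∉ V4 := by
          intro x hx hx'
          exact (Finset.mem_sdiff.1 (Finset.mem_inter.1 hx').1).2 (Finset.mem_inter.1 hx).1
        -- matching bounds
        have m12 := bip_bound Agr hd12 h12 ⟨a0, ha0V1⟩ ⟨b0, hb0V2⟩ hnoA
        have m34 := bip_bound Agr hd34 h34 ⟨bb, hbbV3⟩ ⟨aa, haaV4⟩ hnoA
        have m13 := bip_bound Bgr hd13 h13 ⟨a0, ha0V1⟩ ⟨bb, hbbV3⟩ hnoB
        have m24 := bip_bound Bgr hd24 h24 ⟨b0, hb0V2⟩ ⟨aa, haaV4⟩ hnoB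
        -- cardinalities
        have hPa : Finset.univ.filter (fun v => p v = p a0) = V1 ∪ V4 := by
          ext z
          simp only [Finset.mem_filter, Finset.mem_univ, true_and, Finset.mem_union]
          constructor
          · intro hz
            rcases hcover z with h | h | h | h
            · exact Or.inl h
            · exact absurd hz (by rw [hV2p z h]; exact Ne.symm hpab)
            · exact absurd hz (by rw [hV3p z h]; exact Ne.symm hpab)
            · exact Or.inr h
          · intro hz
            rcases hz with h | h
            · exact hV1p z h
            · exact hV4p z h
        have hPb : Finset.univ.filter (fun v => p v = p b0) = V2 ∪ V3 := by
          ext z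
          simp only [Finset.mem_filter, Finset.mem_univ, true_and, Finset.mem_union]
          constructor
          · intro hz
            rcases hcover z with h | h | h | h
            · exact absurd hz (by rw [hV1p z h]; exact hpab)
            · exact Or.inl h
            · exact Or.inr h
            · exact absurd hz (by rw [hV4p z h]; exact hpab)
          · intro hz
            rcases hz with h | h
            · exact hV2p z h
            · exact hV3p z h
        have hc14 : (V1 ∪ V4).card = V1.card + V4.card := by
          apply Finset.card_union_of_disjoint
          rw [Finset.disjoint_left]
          intro x hx hx'
          exact (Finset.mem_sdiff.1 (Finset.mem_inter.1 hx').1).2 (Finset.mem_inter.1 hx).1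
        have hc23 : (V2 ∪ V3).card = V2.card + V3.card := by
          apply Finset.card_union_of_disjoint
          rw [Finset.disjoint_left]
          intro x hx hx'
          exact (Finset.mem_sdiff.1 (Finset.mem_inter.1 hx').1).2 (Finset.mem_inter.1 hx).1
        have hNcover : Fintype.card V ≤ (V1 ∪ V4).card + (V2 ∪ V3).card := by
          have : (Finset.univ : Finset V) ⊆ (V1 ∪ V4) ∪ (V2 ∪ V3) := by
            intro z _
            rcases hcover z with h | h | h | h
            · exact Finset.mem_union_left _ (Finset.mem_union_left _ h)
            · exact Finset.mem_union_right _ (Finset.mem_union_left _ h)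
            · exact Finset.mem_union_right _ (Finset.mem_union_right _ h)
            · exact Finset.mem_union_left _ (Finset.mem_union_right _ h)
          calc Fintype.card V = (Finset.univ : Finset V).card := Finset.card_univ.symm
            _ ≤ ((V1 ∪ V4) ∪ (V2 ∪ V3)).card := Finset.card_le_card this
            _ ≤ _ := Finset.card_union_le _ _
        have hs1 : (V1 ∪ V4).card + yA + yB ≤ Fintype.card V + 1 := by
          rw [← hPa]; exact hNi (p a0)
        have hs2 : (V2 ∪ V3).card + yA + yB ≤ Fintype.card V + 1 := by
          rw [← hPb]; exact hNi (p b0)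
        rw [hc14] at hs1 hNcover
        rw [hc23] at hs2 hNcover
        omega

end Phase1

end CMProof

/-- Theorem 2.4 (2-colored complete multipartite graphs): if
`N ≥ 2x₁ + x₂ - 1` and `N - nᵢ ≥ x₁ + x₂ - 1` for every part, then every
2-edge-coloring yields a connected matching of size `x₁` in color 1 or of
size `x₂` in color 2. -/
theorem stmt2 {V : Type*} [Fintype V] (s x1 x2 : ℕ) (hs : 2 ≤ s)
    (hx12 : x2 ≤ x1) (hx2 : 1 ≤ x2)
    (p : V → Fin s) (hp : Function.Surjective p)
    (G : SimpleGraph V) (hG : G = SimpleGraph.fromRel (fun u v => p u ≠ p v))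
    (hN : 2 * x1 + x2 - 1 ≤ Fintype.card V)
    (hNi : ∀ i : Fin s,
      x1 + x2 - 1 ≤ Fintype.card V - Nat.card {v : V | p v = i})
    (c : Sym2 V → Fin 2) :
    (∃ M, ConnMatching (colorSub G c 0) M ∧ x1 ≤ M.card) ∨
    (∃ M, ConnMatching (colorSub G c 1) M ∧ x2 ≤ M.card) := by
  classical
  by_contra hcon
  obtain ⟨hnoA, hnoB⟩ := not_or.1 hcon
  set R0g := colorSub G c 0 with hR0def
  set R1g := colorSub G c 1 with hR1def
  have hGadj : ∀ u v, G.Adj u v ↔ p u ≠ p v := by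
    intro u v
    rw [hG, SimpleGraph.fromRel_adj]
    constructor
    · rintro ⟨h1, h2 | h2⟩
      · exact h2
      · exact Ne.symm h2
    · intro h
      exact ⟨fun he => h (he ▸ rfl), Or.inl h⟩
  have hcadj : ∀ (i : Fin 2) u v, (colorSub G c i).Adj u v ↔
      (p u ≠ p v ∧ c s(u, v) = i) := by
    intro i u v
    rw [colorSub, SimpleGraph.fromRel_adj]
    constructor
    · rintro ⟨h1, ⟨h2, h3⟩ | ⟨h2, h3⟩⟩
      · exact ⟨(hGadj u v).1 h2, h3⟩
      · refine ⟨Ne.symm ((hGadj v u).1 h2), ?_⟩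
        rwa [Sym2.eq_swap] at h3
    · rintro ⟨h1, h2⟩
      exact ⟨fun he => h1 (he ▸ rfl), Or.inl ⟨(hGadj u v).2 h1, h2⟩⟩
  have hdi : ∀ u v : V, p u ≠ p v → R0g.Adj u v ∨ R1g.Adj u v := by
    intro u v hpv
    by_cases h0 : c s(u, v) = 0
    · exact Or.inl ((hcadj 0 u v).2 ⟨hpv, h0⟩)
    · have hlt := (c s(u, v)).isLt
      have hne : (c s(u, v)).val ≠ 0 := fun h => h0 (Fin.ext h)
      have h1 : c s(u, v) = 1 := Fin.ext (by omega)
      exact Or.inr ((hcadj 1 u v).2 ⟨hpv, h1⟩)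
  have hadjA : ∀ u v, R0g.Adj u v → p u ≠ p v := fun u v h => ((hcadj 0 u v).1 h).1
  have hadjB : ∀ u v, R1g.Adj u v → p u ≠ p v := fun u v h => ((hcadj 1 u v).1 h).1
  have hN' : 2 * x1 + x2 ≤ Fintype.card V + 1 := by omega
  have hNi' : ∀ i : Fin s,
      (Finset.univ.filter (fun v => p v = i)).card + x1 + x2 ≤ Fintype.card V + 1 := by
    intro i
    have hni := hNi i
    have hcardeq : Nat.card {v : V | p v = i}
        = (Finset.univ.filter (fun v => p v = i)).card := by
      rw [Nat.card_eq_fintype_card]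
      exact Fintype.card_subtype _
    rw [hcardeq] at hni
    have hle : (Finset.univ.filter (fun v => p v = i)).card ≤ Fintype.card V :=
      Finset.card_le_univ _
    omega
  by_cases hBedge : ∃ u v, R1g.Adj u v
  · obtain ⟨ub, vb, hub⟩ := hBedge
    rcases Nat.lt_or_ge x2 2 with hx2' | hx2'
    · -- x2 = 1 : the blue edge alone is a connected matching
      apply hnoB
      refine ⟨{(ub, vb)}, ⟨⟨?_, ?_⟩, ?_⟩, ?_⟩
      · intro e he
        rw [Finset.mem_singleton] at he
        subst he
        exact hub
      · intro e he f hf hne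
        rw [Finset.mem_singleton] at he hf
        exact absurd (he.trans hf.symm) hne
      · intro e he f hf
        rw [Finset.mem_singleton] at he hf
        rw [he, hf]
      · rw [Finset.card_singleton]; omega
    · -- main case
      have hNi'' : ∀ i : Fin s,
          (Finset.univ.filter (fun v => p v = i)).card + x2 + x1
            ≤ Fintype.card V + 1 := by
        intro i; have := hNi' i; omega
      have hdi' : ∀ u v : V, p u ≠ p v → R1g.Adj u v ∨ R0g.Adj u v := by
        intro u v h
        exact (hdi u v h).symm
      rcases CMProof.phase1 R1g R0g p x2 x1 hdi' hadjB hNi'' hnoB hnoA hub with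
        ⟨K, u0, iP, hK, hdom⟩ | ⟨K, u0, iP, hK, hdom⟩
      · exact CMProof.phase2 R1g R0g p x2 x1 hdi' (by omega) (by omega)
          (by omega) (by omega) hNi'' K u0 iP hK hdom hnoB hnoA
      · exact CMProof.phase2 R0g R1g p x1 x2 hdi (by omega) (by omega)
          (by omega) (by omega) hNi' K u0 iP hK hdom hnoA hnoB
  · -- no blue edges at all : red contains a spanning complete multipartite graph
    push_neg at hBedge
    have hTcard : 2 * x1 ≤ (Finset.univ : Finset V).card := by
      rw [Finset.card_univ]; omega
    have hAfib : ∀ a, ((Finset.univ : Finset V).filter (fun x => p x = a)).card + x1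
        ≤ (Finset.univ : Finset V).card := by
      intro a
      have := hNi' a
      rw [Finset.card_univ]
      omega
    have hBfib : ∀ b, ((Finset.univ : Finset V).filter (fun x => x = b)).card + x1
        ≤ (Finset.univ : Finset V).card := by
      intro b
      have h1 : (Finset.univ : Finset V).filter (fun x => x = b) ⊆ {b} := by
        intro z hz
        rw [Finset.mem_singleton]
        exact (Finset.mem_filter.1 hz).2
      have h2 := Finset.card_le_card h1
      rw [Finset.card_singleton] at h2
      rw [Finset.card_univ]
      omega
    obtain ⟨f, hf, hcard⟩ := CMProof.lemmaM p (fun v : V => v) x1 Finset.univ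
      hTcard hAfib hBfib
    have hsub : ∀ x y : V, p x ≠ p y → R0g.Adj x y := by
      intro x y h
      rcases hdi x y h with h' | h'
      · exact h'
      · exact absurd h' (hBedge x y)
    have hf' : CMProof.IsMFun R0g.Adj Finset.univ f := by
      intro x y hxy
      obtain ⟨h1, h2, h3, h4, h5⟩ := hf hxy
      exact ⟨h1, h2, hsub x y h3.1, h4, h5⟩
    have hreach : ∀ x ∈ CMProof.msupp f, ∀ y ∈ CMProof.msupp f, R0g.Reachable x y := by
      have hr : ∀ x y : V, R0g.Reachable x y := by
        intro x y
        by_cases hxy : p x = p y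
        · -- go through a third part
          have hex : ∃ j : Fin s, j ≠ p x := by
            by_contra hall
            push_neg at hall
            have h0 := hall ⟨0, by omega⟩
            have h1 := hall ⟨1, by omega⟩
            rw [← h1] at h0
            have : (0 : ℕ) = 1 := congrArg Fin.val h0
            omega
          obtain ⟨j, hj⟩ := hex
          obtain ⟨w, hw⟩ := hp j
          have h1 : R0g.Adj x w := hsub x w (by rw [hw]; exact fun h => hj h.symm)
          have h2 : R0g.Adj w y := hsub w y (by rw [hw, ← hxy]; exact hj)
          exact h1.reachable.trans h2.reachable
        · exact (hsub x y hxy).reachable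
      intro x _ y _
      exact hr x y
    exact hnoA (CMProof.exists_connMatching R0g hf' hreach hcard)
end

section
/- In every 2-coloring of the edges of the complete graph K_{3n-1} (n ≥ 1), there is a monochromatic connected matching with at least n edges. -/
open SimpleGraph

variable {V : Type*}

/-- Pair up the elements of a finite set into `card / 2` disjoint pairs. -/
lemma exists_pairing {V : Type*} [DecidableEq V] (S : Finset V) :
    ∃ P : Finset (V × V),
      P.card = S.card / 2 ∧
      (∀ p ∈ P, p.1 ∈ S ∧ p.2 ∈ S ∧ p.1 ≠ p.2) ∧
      (∀ p ∈ P, ∀ q ∈ P, p ≠ q →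
        p.1 ≠ q.1 ∧ p.1 ≠ q.2 ∧ p.2 ≠ q.1 ∧ p.2 ≠ q.2) := by
  induction S using Finset.strongInductionOn with
  | _ S ih =>
    by_cases h1 : S.card ≤ 1
    · refine ⟨∅, ?_, by simp, by simp⟩
      simp only [Finset.card_empty]
      omega
    · push_neg at h1
      obtain ⟨a, ha, b, hb, hab⟩ := Finset.one_lt_card.mp h1
      set S' := (S.erase a).erase b with hS'
      have hsub : S' ⊂ S := by
        refine Finset.ssubset_iff_of_subset ?_ |>.mpr ⟨a, ha, ?_⟩
        · exact ((S.erase a).erase_subset b).trans (S.erase_subset a)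
        · simp [hS', Finset.mem_erase]
      have hbmem : b ∈ S.erase a := Finset.mem_erase.mpr ⟨hab.symm, hb⟩
      have hcard' : S'.card = S.card - 2 := by
        rw [hS', Finset.card_erase_of_mem hbmem, Finset.card_erase_of_mem ha]
        omega
      obtain ⟨P, hPc, hPin, hPdisj⟩ := ih S' hsub
      have hanot : a ∉ S' := by simp [hS', Finset.mem_erase]
      have hbnot : b ∉ S' := by simp [hS', Finset.mem_erase]
      refine ⟨insert (a, b) P, ?_, ?_, ?_⟩
      · have hnotmem : (a, b) ∉ P := fun h => hanot (hPin _ h).1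
        rw [Finset.card_insert_of_notMem hnotmem, hPc, hcard']
        omega
      · intro p hp
        rcases Finset.mem_insert.mp hp with h | h
        · subst h; exact ⟨ha, hb, hab⟩
        · obtain ⟨h1, h2, h3⟩ := hPin p h
          have hsubS : S' ⊆ S :=
            ((S.erase a).erase_subset b).trans (S.erase_subset a)
          exact ⟨hsubS h1, hsubS h2, h3⟩
      · intro p hp q hq hpq
        rcases Finset.mem_insert.mp hp with h | h <;>
          rcases Finset.mem_insert.mp hq with h' | h'
        · exact absurd (h.trans h'.symm) hpq
        · subst h
          obtain ⟨h1, h2, _⟩ := hPin q h'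
          exact ⟨fun e => hanot ((show a = q.1 from e).symm ▸ h1),
                 fun e => hanot ((show a = q.2 from e).symm ▸ h2),
                 fun e => hbnot ((show b = q.1 from e).symm ▸ h1),
                 fun e => hbnot ((show b = q.2 from e).symm ▸ h2)⟩
        · subst h'
          obtain ⟨h1, h2, _⟩ := hPin p h
          exact ⟨fun e => hanot ((show p.1 = a from e) ▸ h1),
                 fun e => hbnot ((show p.1 = b from e) ▸ h1),
                 fun e => hanot ((show p.2 = a from e) ▸ h2),
                 fun e => hbnot ((show p.2 = b from e) ▸ h2)⟩
        · exact hPdisj p h q h' hpq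

/-- In every 2-edge-coloring of `K_{3n-1}` there is a monochromatic connected
matching with at least `n` edges. -/
theorem stmt4 (n : ℕ) (hn : 1 ≤ n)
    (c : Sym2 (Fin (3 * n - 1)) → Fin 2) :
    ∃ i : Fin 2, ∃ M,
      ConnMatching (colorSub (⊤ : SimpleGraph (Fin (3 * n - 1))) c i) M ∧
      n ≤ M.card := by
  classical
  have htwo : ∀ x i' : Fin 2, x = i' ∨ x = (if i' = 0 then 1 else 0) := by decide
  set G : Fin 2 → SimpleGraph (Fin (3 * n - 1)) := fun i => colorSub ⊤ c i with hG
  -- adjacency in a color class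
  have hadj : ∀ (i : Fin 2) (u v : Fin (3 * n - 1)), (G i).Adj u v ↔ u ≠ v ∧ c s(u, v) = i := by
    intro i u v
    constructor
    · rintro ⟨hne, h | h⟩
      · exact ⟨hne, h.2⟩
      · exact ⟨hne, by rw [Sym2.eq_swap]; exact h.2⟩
    · rintro ⟨hne, h⟩
      exact ⟨hne, Or.inl ⟨by simp [hne], h⟩⟩
  have hcol : ∀ u v : Fin (3 * n - 1), u ≠ v → ∀ i : Fin 2,
      ¬(G i).Adj u v → (G (if i = 0 then 1 else 0)).Adj u v := by
    intro u v huv i hni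
    rw [hadj] at hni ⊢
    push_neg at hni
    refine ⟨huv, ?_⟩
    rcases htwo (c s(u, v)) i with h | h
    · exact absurd h (hni huv)
    · exact h
  -- Step A: one color class is preconnected
  have stepA : ∃ i : Fin 2, (G i).Preconnected := by
    by_cases h0 : (G 0).Preconnected
    · exact ⟨0, h0⟩
    · refine ⟨1, ?_⟩
      simp only [Preconnected] at h0
      push_neg at h0
      obtain ⟨u, v, huv⟩ := h0
      have hkey : ∀ a b : Fin (3 * n - 1), ¬(G 0).Reachable a b → (G 1).Adj a b := by
        intro a b hnr
        have hne : a ≠ b := fun h => hnr (h ▸ Reachable.refl a)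
        have hna : ¬(G 0).Adj a b := fun h => hnr h.reachable
        simpa using hcol a b hne 0 hna
      have huvadj : (G 1).Adj u v := hkey u v huv
      have hx : ∀ x : Fin (3 * n - 1), (G 1).Reachable x u ∨ (G 1).Reachable x v := by
        intro x
        by_cases hxu : (G 0).Reachable x u
        · right
          have hxv : ¬(G 0).Reachable x v := fun h => huv (hxu.symm.trans h)
          exact (hkey x v hxv).reachable
        · left
          exact (hkey x u hxu).reachable
      intro x y
      have hx' := hx x
      have hy' := hx y
      rcases hx' with h | h <;> rcases hy' with h' | h'
      · exact h.trans h'.symm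
      · exact h.trans (huvadj.reachable.trans h'.symm)
      · exact h.trans (huvadj.reachable.symm.trans h'.symm)
      · exact h.trans h'.symm
  obtain ⟨i, hprec⟩ := stepA
  set j : Fin 2 := if i = 0 then 1 else 0 with hj
  -- maximum matching in color i
  have hex : ∃ M ∈ Finset.univ.filter (fun M => IsMatchingSet (G i) M),
      ∀ M' ∈ Finset.univ.filter (fun M => IsMatchingSet (G i) M),
        M'.card ≤ M.card := by
    apply Finset.exists_max_image _ Finset.card
    exact ⟨∅, by simp [IsMatchingSet]⟩
  obtain ⟨M, hMmem, hmax⟩ := hex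
  have hM : IsMatchingSet (G i) M := (Finset.mem_filter.mp hMmem).2
  have hmax' : ∀ M', IsMatchingSet (G i) M' → M'.card ≤ M.card := by
    intro M' h
    exact hmax M' (Finset.mem_filter.mpr ⟨Finset.mem_univ _, h⟩)
  by_cases hle : n ≤ M.card
  · exact ⟨i, M, ⟨hM, fun e _ f _ => hprec e.1 f.1⟩, hle⟩
  push_neg at hle
  have hν : M.card ≤ n - 1 := by omega
  set ν := M.card with hνdef
  -- covered set and uncovered set
  set C : Finset (Fin (3 * n - 1)) := M.biUnion (fun e => {e.1, e.2}) with hC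
  have hmemC : ∀ v, v ∈ C ↔ Covers M v := by
    intro v
    simp [hC, Covers, Finset.mem_biUnion, eq_comm]
  have hCcard : C.card = 2 * ν := by
    rw [hC, Finset.card_biUnion]
    · rw [Finset.sum_congr rfl (fun e he => ?_), Finset.sum_const, smul_eq_mul,
        mul_comm]
      have hne : e.1 ≠ e.2 := (hM.1 e he).ne
      rw [Finset.card_insert_of_notMem (by simpa using hne), Finset.card_singleton]
    · intro e he f hf hef
      have h4 := hM.2 e he f hf hef
      obtain ⟨a1, a2, a3, a4⟩ := h4
      simp only [Finset.disjoint_left, Finset.mem_insert, Finset.mem_singleton]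
      rintro a (rfl | rfl) (h | h) <;> tauto
  set U : Finset (Fin (3 * n - 1)) := Finset.univ \ C with hU
  have hmemU : ∀ v, v ∈ U ↔ ¬Covers M v := by
    intro v; simp [hU, hmemC]
  have hcovmem : ∀ v, Covers M v → v ∉ U := fun v h => by simp [hmemU, h]
  have hNval : 2 * n ≤ 3 * n - 1 := by omega
  have hUcard : U.card = 3 * n - 1 - 2 * ν := by
    rw [hU, Finset.card_sdiff_of_subset (Finset.subset_univ _), hCcard]
    simp
  have hνsmall : 3 * ν + 1 ≤ 3 * n - 1 := by omega
  -- endpoints of matching edges are covered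
  have hcov1 : ∀ e ∈ M, Covers M e.1 := fun e he => ⟨e, he, Or.inl rfl⟩
  have hcov2 : ∀ e ∈ M, Covers M e.2 := fun e he => ⟨e, he, Or.inr rfl⟩
  -- U is a clique in color j
  have hUclique : ∀ u ∈ U, ∀ v ∈ U, u ≠ v → (G j).Adj u v := by
    intro u hu v hv huv
    by_contra hnadj
    have hiadj : (G i).Adj u v := by
      rcases htwo (c s(u, v)) i with hc' | hc'
      · exact (hadj i u v).mpr ⟨huv, hc'⟩
      · rw [← hj] at hc'
        exact absurd ((hadj j u v).mpr ⟨huv, hc'⟩) hnadj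
    -- extend the matching
    have hM' : IsMatchingSet (G i) (insert (u, v) M) := by
      constructor
      · intro e he
        rcases Finset.mem_insert.mp he with h | h
        · subst h; exact hiadj
        · exact hM.1 e h
      · intro e he f hf hef
        rcases Finset.mem_insert.mp he with h | h <;>
          rcases Finset.mem_insert.mp hf with h' | h'
        · exact absurd (h.trans h'.symm) hef
        · subst h
          simp only [hmemU] at hu hv
          dsimp only
          exact ⟨fun e' => hu (e' ▸ hcov1 f h'), fun e' => hu (e' ▸ hcov2 f h'),
                 fun e' => hv (e' ▸ hcov1 f h'), fun e' => hv (e' ▸ hcov2 f h')⟩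
        · subst h'
          simp only [hmemU] at hu hv
          dsimp only
          exact ⟨fun e' => hu (e'.symm ▸ hcov1 e h), fun e' => hv (e'.symm ▸ hcov1 e h),
                 fun e' => hu (e'.symm ▸ hcov2 e h), fun e' => hv (e'.symm ▸ hcov2 e h)⟩
        · exact hM.2 e h f h' hef
    have hnotmem : (u, v) ∉ M := fun h => (hmemU u).mp hu (hcov1 _ h)
    have := hmax' _ hM'
    rw [Finset.card_insert_of_notMem hnotmem] at this
    omega
  -- no augmenting path of length 3
  have hD : ∀ e ∈ M, ∀ u ∈ U, ∀ v ∈ U, u ≠ v →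
      ¬((G i).Adj e.1 u ∧ (G i).Adj e.2 v) := by
    rintro e he u hu v hv huv ⟨h1, h2⟩
    have hne12 : e.1 ≠ e.2 := (hM.1 e he).ne
    simp only [hmemU] at hu hv
    have hu1 : u ≠ e.1 := fun h => hu (h ▸ hcov1 e he)
    have hu2 : u ≠ e.2 := fun h => hu (h ▸ hcov2 e he)
    have hv1 : v ≠ e.1 := fun h => hv (h ▸ hcov1 e he)
    have hv2 : v ≠ e.2 := fun h => hv (h ▸ hcov2 e he)
    set M' : Finset (Fin (3 * n - 1) × Fin (3 * n - 1)) :=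
      insert (e.1, u) (insert (e.2, v) (M.erase e)) with hM'def
    have hdisjold : ∀ f ∈ M.erase e, f.1 ≠ e.1 ∧ f.1 ≠ e.2 ∧ f.2 ≠ e.1 ∧ f.2 ≠ e.2
        ∧ f.1 ≠ u ∧ f.2 ≠ u ∧ f.1 ≠ v ∧ f.2 ≠ v := by
      intro f hf
      obtain ⟨hfe, hfM⟩ := Finset.mem_erase.mp hf
      have h4 := hM.2 f hfM e he hfe
      exact ⟨h4.1, h4.2.1, h4.2.2.1, h4.2.2.2,
        fun h => hu (h ▸ hcov1 f hfM), fun h => hu (h ▸ hcov2 f hfM),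
        fun h => hv (h ▸ hcov1 f hfM), fun h => hv (h ▸ hcov2 f hfM)⟩
    have hM'match : IsMatchingSet (G i) M' := by
      constructor
      · intro f hf
        rcases Finset.mem_insert.mp hf with h | h
        · subst h; exact h1
        rcases Finset.mem_insert.mp h with h | h
        · subst h; exact h2
        · exact hM.1 f (Finset.mem_erase.mp h).2
      · intro p hp q hq hpq
        simp only [hM'def, Finset.mem_insert] at hp hq
        rcases hp with hp | hp | hp <;> rcases hq with hq | hq | hq
        all_goals try (exact absurd (hp.trans hq.symm) hpq)
        · subst hp; subst hq
          dsimp only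
          exact ⟨hne12, fun h => hv (h ▸ hcov1 e he), hu2, huv⟩
        · subst hp
          obtain ⟨a1, a2, a3, a4, a5, a6, a7, a8⟩ := hdisjold q hq
          dsimp only
          exact ⟨a1.symm, a3.symm, a5.symm, a6.symm⟩
        · subst hp; subst hq
          dsimp only
          exact ⟨hne12.symm, hu2.symm, hv1, huv.symm⟩
        · subst hp
          obtain ⟨a1, a2, a3, a4, a5, a6, a7, a8⟩ := hdisjold q hq
          dsimp only
          exact ⟨a2.symm, a4.symm, a7.symm, a8.symm⟩
        · subst hq
          obtain ⟨a1, a2, a3, a4, a5, a6, a7, a8⟩ := hdisjold p hp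
          dsimp only
          exact ⟨a1, a5, a3, a6⟩
        · subst hq
          obtain ⟨a1, a2, a3, a4, a5, a6, a7, a8⟩ := hdisjold p hp
          dsimp only
          exact ⟨a2, a7, a4, a8⟩
        · exact hM.2 p (Finset.mem_erase.mp hp).2 q (Finset.mem_erase.mp hq).2 hpq
    have hmem1 : (e.2, v) ∉ M.erase e := by
      intro h
      exact hv (hcov2 _ (Finset.mem_erase.mp h).2)
    have hmem2 : (e.1, u) ∉ insert (e.2, v) (M.erase e) := by
      intro h
      rcases Finset.mem_insert.mp h with h | h
      · exact hne12 (congrArg Prod.fst h)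
      · exact hu (hcov2 _ (Finset.mem_erase.mp h).2)
    have hcard' : M'.card = ν + 1 := by
      rw [hM'def, Finset.card_insert_of_notMem hmem2,
        Finset.card_insert_of_notMem hmem1,
        Finset.card_erase_of_mem he]
      have : 1 ≤ ν := Finset.card_pos.mpr ⟨e, he⟩
      omega
    have := hmax' _ hM'match
    omega
  -- each matching edge has an endpoint j-adjacent to all but one vertex of U
  have hY : ∀ e ∈ M, ∃ y, (y = e.1 ∨ y = e.2) ∧ ∃ u0,
      ∀ w ∈ U, w ≠ u0 → (G j).Adj y w := by
    intro e he
    by_cases hB : ∃ v ∈ U, (G i).Adj e.2 v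
    · obtain ⟨u0, hu0U, hu0adj⟩ := hB
      refine ⟨e.1, Or.inl rfl, u0, ?_⟩
      intro w hw hwu0
      have hwne : e.1 ≠ w := fun h => ((hmemU w).mp hw) (h ▸ hcov1 e he)
      by_contra hnadj
      have hiadj : (G i).Adj e.1 w := by
        rcases htwo (c s(e.1, w)) i with hc' | hc'
        · exact (hadj i _ _).mpr ⟨hwne, hc'⟩
        · rw [← hj] at hc'
          exact absurd ((hadj j _ _).mpr ⟨hwne, hc'⟩) hnadj
      exact hD e he w hw u0 hu0U hwu0 ⟨hiadj, hu0adj⟩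
    · push_neg at hB
      refine ⟨e.2, Or.inr rfl, e.2, ?_⟩
      intro w hw _
      have hwne : e.2 ≠ w := fun h => ((hmemU w).mp hw) (h ▸ hcov2 e he)
      by_contra hnadj
      have hiadj : (G i).Adj e.2 w := by
        rcases htwo (c s(e.2, w)) i with hc' | hc'
        · exact (hadj i _ _).mpr ⟨hwne, hc'⟩
        · rw [← hj] at hc'
          exact absurd ((hadj j _ _).mpr ⟨hwne, hc'⟩) hnadj
      exact hB w hw hiadj
  -- choice functions
  have hYc := fun (e : {e // e ∈ M}) => hY e.1 e.2
  choose y hy u0 hu0 using hYc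
  have hycov : ∀ e : {e // e ∈ M}, Covers M (y e) := by
    intro e
    rcases hy e with h | h
    · exact h ▸ hcov1 e.1 e.2
    · exact h ▸ hcov2 e.1 e.2
  -- Hall's condition for matching endpoints into U
  have hHall : ∀ s : Finset {e // e ∈ M},
      s.card ≤ (s.biUnion (fun e => U.erase (u0 e))).card := by
    intro s
    rcases s.eq_empty_or_nonempty with h | ⟨e, he⟩
    · simp [h]
    · have h1 : U.erase (u0 e) ⊆ s.biUnion (fun e => U.erase (u0 e)) :=
        Finset.subset_biUnion_of_mem (fun e => U.erase (u0 e)) he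
      have h2 : ν ≤ (U.erase (u0 e)).card := by
        have := Finset.card_erase_of_mem (a := u0 e) (s := U)
        have hle' : U.card - 1 ≤ (U.erase (u0 e)).card := by
          by_cases hm : u0 e ∈ U
          · rw [Finset.card_erase_of_mem hm]
          · rw [Finset.erase_eq_of_notMem hm]; omega
        omega
      have h3 : s.card ≤ ν := by
        calc s.card ≤ Finset.univ.card := Finset.card_le_univ s
        _ = ν := by rw [Finset.card_univ, Fintype.card_coe]
      exact h3.trans (h2.trans (Finset.card_le_card h1))
  obtain ⟨f, hfinj, hfmem⟩ :=
    (Finset.all_card_le_biUnion_card_iff_exists_injective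
      (fun e : {e // e ∈ M} => U.erase (u0 e))).mp hHall
  have hfU : ∀ e, f e ∈ U := fun e => Finset.mem_of_mem_erase (hfmem e)
  have hfne : ∀ e, f e ≠ u0 e := fun e => Finset.ne_of_mem_erase (hfmem e)
  have hfadj : ∀ e, (G j).Adj (y e) (f e) :=
    fun e => hu0 e (f e) (hfU e) (hfne e)
  -- cross edges
  set M1 : Finset (Fin (3 * n - 1) × Fin (3 * n - 1)) :=
    Finset.univ.image (fun e : {e // e ∈ M} => (y e, f e)) with hM1
  have hM1card : M1.card = ν := by
    rw [hM1, Finset.card_image_of_injective _ (fun a b hab => hfinj (congrArg Prod.snd hab)),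
      Finset.card_univ, Fintype.card_coe]
  set Uf : Finset (Fin (3 * n - 1)) := Finset.univ.image f with hUf
  have hUfcard : Uf.card = ν := by
    rw [hUf, Finset.card_image_of_injective _ hfinj, Finset.card_univ, Fintype.card_coe]
  have hUfsub : Uf ⊆ U := by
    intro v hv
    obtain ⟨e, _, he⟩ := Finset.mem_image.mp hv
    exact he ▸ hfU e
  set S : Finset (Fin (3 * n - 1)) := U \ Uf with hS
  have hScard : S.card = 3 * n - 1 - 3 * ν := by
    rw [hS, Finset.card_sdiff_of_subset hUfsub, hUfcard, hUcard]
    omega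
  obtain ⟨P, hPcard, hPin, hPdisj⟩ := exists_pairing S
  have hPU : ∀ p ∈ P, p.1 ∈ U ∧ p.2 ∈ U ∧ p.1 ∉ Uf ∧ p.2 ∉ Uf := by
    intro p hp
    obtain ⟨h1, h2, _⟩ := hPin p hp
    rw [hS, Finset.mem_sdiff] at h1 h2
    exact ⟨h1.1, h2.1, h1.2, h2.2⟩
  -- the final matching
  set T : Finset (Fin (3 * n - 1) × Fin (3 * n - 1)) := M1 ∪ P with hT
  -- helpers about M1 membership
  have hyne : ∀ a b : {e // e ∈ M}, a ≠ b → y a ≠ y b := by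
    intro a b hab
    have hab' : a.1 ≠ b.1 := fun h => hab (Subtype.ext h)
    have h4 := hM.2 a.1 a.2 b.1 b.2 hab'
    rcases hy a with h | h <;> rcases hy b with h' | h' <;> rw [h, h']
    · exact h4.1
    · exact h4.2.1
    · exact h4.2.2.1
    · exact h4.2.2.2
  have hynotU : ∀ a : {e // e ∈ M}, y a ∉ U := fun a => hcovmem _ (hycov a)
  have hTmatch : IsMatchingSet (G j) T := by
    constructor
    · intro e he
      rcases Finset.mem_union.mp he with h | h
      · obtain ⟨a, _, ha⟩ := Finset.mem_image.mp h
        rw [← ha]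
        exact hfadj a
      · obtain ⟨h1, h2, h3⟩ := hPin e h
        have h1' := (Finset.mem_sdiff.mp (hS ▸ h1)).1
        have h2' := (Finset.mem_sdiff.mp (hS ▸ h2)).1
        exact hUclique _ h1' _ h2' h3
    · intro p hp q hq hpq
      rcases Finset.mem_union.mp hp with h | h <;>
        rcases Finset.mem_union.mp hq with h' | h'
      · obtain ⟨a, _, ha⟩ := Finset.mem_image.mp h
        obtain ⟨b, _, hb⟩ := Finset.mem_image.mp h'
        have hab : a ≠ b := by
          intro e; apply hpq; rw [← ha, ← hb, e]
        subst ha; subst hb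
        dsimp only
        refine ⟨hyne a b hab, ?_, ?_, fun h => hab (hfinj h)⟩
        · exact fun h => (hynotU a) (h ▸ hfU b)
        · exact fun h => (hynotU b) (h.symm ▸ hfU a)
      · obtain ⟨a, _, ha⟩ := Finset.mem_image.mp h
        obtain ⟨q1U, q2U, q1f, q2f⟩ := hPU q h'
        subst ha
        dsimp only
        refine ⟨fun h => (hynotU a) (h ▸ q1U), fun h => (hynotU a) (h ▸ q2U), ?_, ?_⟩
        · exact fun h => q1f (h ▸ Finset.mem_image.mpr ⟨a, Finset.mem_univ a, rfl⟩)
        · exact fun h => q2f (h ▸ Finset.mem_image.mpr ⟨a, Finset.mem_univ a, rfl⟩)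
      · obtain ⟨b, _, hb⟩ := Finset.mem_image.mp h'
        obtain ⟨p1U, p2U, p1f, p2f⟩ := hPU p h
        subst hb
        dsimp only
        refine ⟨fun h => (hynotU b) (h.symm ▸ p1U), ?_,
                fun h => (hynotU b) (h.symm ▸ p2U), ?_⟩
        · exact fun h => p1f (h.symm ▸ Finset.mem_image.mpr ⟨b, Finset.mem_univ b, rfl⟩)
        · exact fun h => p2f (h.symm ▸ Finset.mem_image.mpr ⟨b, Finset.mem_univ b, rfl⟩)
      · exact hPdisj p h q h' hpq
  -- cardinality
  have hdisjMP : Disjoint M1 P := by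
    rw [Finset.disjoint_left]
    intro p hp hp'
    obtain ⟨a, _, ha⟩ := Finset.mem_image.mp hp
    obtain ⟨_, _, _, p2f⟩ := hPU p hp'
    exact p2f (ha ▸ Finset.mem_image.mpr ⟨a, Finset.mem_univ a, rfl⟩)
  have hTcard : T.card = ν + (3 * n - 1 - 3 * ν) / 2 := by
    rw [hT, Finset.card_union_of_disjoint hdisjMP, hM1card, hPcard, hScard]
  have hTge : n ≤ T.card := by
    rw [hTcard]
    omega
  -- connectivity
  have hUne : ∃ u, u ∈ U := by
    have : 0 < U.card := by omega
    obtain ⟨u, hu⟩ := Finset.card_pos.mp this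
    exact ⟨u, hu⟩
  obtain ⟨ustar, hustar⟩ := hUne
  have hreachU : ∀ w ∈ U, (G j).Reachable w ustar := by
    intro w hw
    by_cases h : w = ustar
    · exact h ▸ Reachable.refl _
    · exact (hUclique w hw ustar hustar h).reachable
  have hreach : ∀ p ∈ T, (G j).Reachable p.1 ustar := by
    intro p hp
    rcases Finset.mem_union.mp hp with h | h
    · obtain ⟨a, _, ha⟩ := Finset.mem_image.mp h
      subst ha
      exact (hfadj a).reachable.trans (hreachU _ (hfU a))
    · exact hreachU _ (hPU p h).1
  refine ⟨j, T, ⟨hTmatch, ?_⟩, hTge⟩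
  intro e he g hg
  exact (hreach e he).trans (hreach g hg).symm
end

section
/- Let G be the complete bipartite graph K_{m,m} with m = x1 + x2 - 1, where x1 ≥ x2 ≥ 1, and let E(G) = E1 ∪ E2 be a partition of its edges. If for some i ∈ {1,2} the graph G[E_i] has a maximum matching of size less than x_i, then G[E_{3-i}] contains a complete bipartite subgraph K_{x_{3-i}, x_{3-i}}, and in particular a connected matching of size x_{3-i}. -/
open SimpleGraph

variable {V : Type*}

/-- In a 2-edge-colored `K_{m,m}` with `m = x₁ + x₂ - 1`: if color `i` has no
matching of size `xᵢ`, then color `3-i` contains a complete bipartite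
`K_{x_{3-i},x_{3-i}}`, and in particular a connected matching of size
`x_{3-i}`. -/
theorem stmt6 (x : Fin 2 → ℕ) (hx : x 1 ≤ x 0) (hx1 : 1 ≤ x 1)
    (m : ℕ) (hm : m = x 0 + x 1 - 1)
    (G : SimpleGraph (Fin m ⊕ Fin m))
    (hG : G = SimpleGraph.fromRel
      (fun u v => u.isLeft = true ∧ v.isLeft = false))
    (c : Sym2 (Fin m ⊕ Fin m) → Fin 2)
    (i j : Fin 2) (hij : i ≠ j)
    (hmax : ∀ M, IsMatchingSet (colorSub G c i) M → M.card < x i) :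
    (∃ A B : Finset (Fin m ⊕ Fin m), Disjoint A B ∧
      A.card = x j ∧ B.card = x j ∧
      ∀ a ∈ A, ∀ b ∈ B, (colorSub G c j).Adj a b) ∧
    (∃ M, ConnMatching (colorSub G c j) M ∧ M.card = x j) := by
  classical
  -- adjacency characterizations
  have hGadj : ∀ u v : Fin m ⊕ Fin m, G.Adj u v ↔ u.isLeft ≠ v.isLeft := by
    intro u v
    subst hG
    constructor
    · rintro ⟨hne, h | h⟩ <;> simp [h.1, h.2]
    · intro h
      refine ⟨fun he => h (by rw [he]), ?_⟩
      cases u <;> cases v <;> simp_all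
  have hColAdj : ∀ (k : Fin 2) (u v : Fin m ⊕ Fin m), (colorSub G c k).Adj u v ↔
      (G.Adj u v ∧ c s(u, v) = k) := by
    intro k u v
    unfold colorSub
    rw [SimpleGraph.fromRel_adj]
    constructor
    · rintro ⟨hne, ⟨h1, h2⟩ | ⟨h1, h2⟩⟩
      · exact ⟨h1, h2⟩
      · exact ⟨h1.symm, by rwa [Sym2.eq_swap]⟩
    · rintro ⟨h1, h2⟩; exact ⟨h1.ne, Or.inl ⟨h1, h2⟩⟩
  -- numerics
  have hnum : x i + x j = x 0 + x 1 ∧ 1 ≤ x i ∧ 1 ≤ x j := by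
    fin_cases i <;> fin_cases j <;> simp_all <;> omega
  obtain ⟨hsum, hi1, hj1⟩ := hnum
  -- a maximum matching in color i
  obtain ⟨M, hM, hMmax⟩ : ∃ M, IsMatchingSet (colorSub G c i) M ∧
      ∀ M', IsMatchingSet (colorSub G c i) M' → M'.card ≤ M.card := by
    have hbdd : BddAbove {n | ∃ M : Finset ((Fin m ⊕ Fin m) × (Fin m ⊕ Fin m)),
        IsMatchingSet (colorSub G c i) M ∧ M.card = n} := by
      refine ⟨x i, fun n hn => ?_⟩
      obtain ⟨M, hM, rfl⟩ := hn
      exact (hmax M hM).le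
    have hne : {n | ∃ M : Finset ((Fin m ⊕ Fin m) × (Fin m ⊕ Fin m)),
        IsMatchingSet (colorSub G c i) M ∧ M.card = n}.Nonempty :=
      ⟨0, ∅, ⟨by simp, by simp⟩, rfl⟩
    obtain ⟨M, hM, hcard⟩ := Nat.sSup_mem hne hbdd
    exact ⟨M, hM, fun M' hM' => hcard ▸ le_csSup hbdd ⟨M', hM', rfl⟩⟩
  have hMside : ∀ e ∈ M, (e.1 : Fin m ⊕ Fin m).isLeft ≠ (e.2 : Fin m ⊕ Fin m).isLeft := by
    intro e he
    exact (hGadj _ _).mp ((hColAdj i e.1 e.2).mp (hM.1 e he)).1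
  -- covered vertices on one side are at most M.card
  have hcovcard : ∀ (ι : Fin m → Fin m ⊕ Fin m), Function.Injective ι →
      (∀ a b, (ι a).isLeft = (ι b).isLeft) →
      ∀ s : Finset (Fin m), (∀ v ∈ s, Covers M (ι v)) → s.card ≤ M.card := by
    intro ι hι hside s hs
    have hF : ∀ v : Fin m, ∃ e, (v ∈ s → e ∈ M ∧ (ι v = e.1 ∨ ι v = e.2)) := by
      intro v
      by_cases hv : v ∈ s
      · obtain ⟨e, he, hor⟩ := hs v hv
        exact ⟨e, fun _ => ⟨he, hor⟩⟩
      · exact ⟨(ι v, ι v), fun h => absurd h hv⟩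
    choose F hF using hF
    refine Finset.card_le_card_of_injOn F (fun v hv => (hF v hv).1) ?_
    intro a ha b hb hab
    obtain ⟨heM, hA⟩ := hF a ha
    obtain ⟨_, hB⟩ := hF b hb
    rw [hab] at hA
    have hne := hMside _ heM
    rw [hab] at hne
    have hs := hside a b
    rcases hA with h1 | h1 <;> rcases hB with h2 | h2
    · exact hι (h1.trans h2.symm)
    · rw [h1, h2] at hs; exact absurd hs hne
    · rw [h1, h2] at hs; exact absurd hs.symm hne
    · exact hι (h1.trans h2.symm)
  have hMlt : M.card < x i := hmax M hM
  -- uncovered vertices on each side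
  set CL : Finset (Fin m) := Finset.univ.filter (fun v => Covers M (Sum.inl v)) with hCLdef
  set CR : Finset (Fin m) := Finset.univ.filter (fun v => Covers M (Sum.inr v)) with hCRdef
  have hCL : CL.card ≤ M.card :=
    hcovcard Sum.inl Sum.inl_injective (by simp) CL
      (fun v hv => (Finset.mem_filter.mp hv).2)
  have hCR : CR.card ≤ M.card :=
    hcovcard Sum.inr Sum.inr_injective (by simp) CR
      (fun v hv => (Finset.mem_filter.mp hv).2)
  have hULcard : x j ≤ (Finset.univ \ CL).card := by
    rw [Finset.card_sdiff_of_subset (Finset.subset_univ _), Finset.card_univ, Fintype.card_fin]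
    omega
  have hURcard : x j ≤ (Finset.univ \ CR).card := by
    rw [Finset.card_sdiff_of_subset (Finset.subset_univ _), Finset.card_univ, Fintype.card_fin]
    omega
  obtain ⟨A', hA'sub, hA'card⟩ := Finset.exists_subset_card_eq hULcard
  obtain ⟨B', hB'sub, hB'card⟩ := Finset.exists_subset_card_eq hURcard
  have hAnc : ∀ a ∈ A', ¬ Covers M (Sum.inl a) := by
    intro a ha
    have := hA'sub ha
    rw [Finset.mem_sdiff, hCLdef] at this
    simpa using this.2
  have hBnc : ∀ b ∈ B', ¬ Covers M (Sum.inr b) := by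
    intro b hb
    have := hB'sub hb
    rw [Finset.mem_sdiff, hCRdef] at this
    simpa using this.2
  -- all edges between A' and B' get color j
  have hcolor : ∀ a ∈ A', ∀ b ∈ B',
      (colorSub G c j).Adj (Sum.inl a) (Sum.inr b) := by
    intro a ha b hb
    have hadjG : G.Adj (Sum.inl a) (Sum.inr b) := (hGadj _ _).mpr (by simp)
    rw [hColAdj]
    refine ⟨hadjG, ?_⟩
    by_contra hc
    have hci : c s(Sum.inl a, Sum.inr b) = i := by
      have h1 := (c s(Sum.inl a, Sum.inr b)).isLt
      have h2 := i.isLt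
      have h3 := j.isLt
      have h4 : (i : Fin 2).val ≠ j.val := fun h => hij (Fin.ext h)
      have h5 : (c s(Sum.inl a, Sum.inr b)).val ≠ j.val := fun h => hc (Fin.ext h)
      exact Fin.ext (by omega)
    set e0 : (Fin m ⊕ Fin m) × (Fin m ⊕ Fin m) := (Sum.inl a, Sum.inr b) with he0def
    have he0 : e0 ∉ M := fun h => hAnc a ha ⟨e0, h, Or.inl rfl⟩
    have hfree : ∀ f ∈ M, e0.1 ≠ f.1 ∧ e0.1 ≠ f.2 ∧ e0.2 ≠ f.1 ∧ e0.2 ≠ f.2 := by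
      intro f hf
      refine ⟨?_, ?_, ?_, ?_⟩ <;> intro h
      · exact hAnc a ha ⟨f, hf, Or.inl h⟩
      · exact hAnc a ha ⟨f, hf, Or.inr h⟩
      · exact hBnc b hb ⟨f, hf, Or.inl h⟩
      · exact hBnc b hb ⟨f, hf, Or.inr h⟩
    have hbig : IsMatchingSet (colorSub G c i) (insert e0 M) := by
      constructor
      · intro e he
        rcases Finset.mem_insert.mp he with rfl | he
        · rw [hColAdj]; exact ⟨hadjG, hci⟩
        · exact hM.1 e he
      · intro e he f hf hef
        rcases Finset.mem_insert.mp he with rfl | he <;>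
          rcases Finset.mem_insert.mp hf with rfl | hf
        · exact absurd rfl hef
        · exact hfree f hf
        · obtain ⟨h1, h2, h3, h4⟩ := hfree e he
          exact ⟨h1.symm, h3.symm, h2.symm, h4.symm⟩
        · exact hM.2 e he f hf hef
    have := hMmax _ hbig
    rw [Finset.card_insert_of_notMem he0] at this
    omega
  -- the complete bipartite subgraph
  have hB'ne : B'.Nonempty := Finset.card_pos.mp (by omega)
  obtain ⟨b0, hb0⟩ := hB'ne
  have hcardAB : A'.card = B'.card := by rw [hA'card, hB'card]
  refine ⟨⟨A'.image Sum.inl, B'.image Sum.inr, ?_, ?_, ?_, ?_⟩, ?_⟩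
  · rw [Finset.disjoint_left]
    rintro v hv hv'
    obtain ⟨a, _, rfl⟩ := Finset.mem_image.mp hv
    obtain ⟨b, _, hb⟩ := Finset.mem_image.mp hv'
    exact absurd hb (by simp)
  · rw [Finset.card_image_of_injective _ Sum.inl_injective, hA'card]
  · rw [Finset.card_image_of_injective _ Sum.inr_injective, hB'card]
  · rintro a ha b hb
    obtain ⟨a', ha', rfl⟩ := Finset.mem_image.mp ha
    obtain ⟨b', hb', rfl⟩ := Finset.mem_image.mp hb
    exact hcolor a' ha' b' hb'
  -- the connected matching
  · set eqv := Finset.equivOfCardEq hcardAB with heqv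
    set M' : Finset ((Fin m ⊕ Fin m) × (Fin m ⊕ Fin m)) :=
      A'.attach.image (fun a => (Sum.inl a.1, Sum.inr (eqv a).1)) with hM'def
    have hmem : ∀ e ∈ M', ∃ a : {v // v ∈ A'},
        e = (Sum.inl a.1, Sum.inr (eqv a).1) := by
      intro e he
      obtain ⟨a, _, rfl⟩ := Finset.mem_image.mp he
      exact ⟨a, rfl⟩
    have hadjM' : ∀ e ∈ M', (colorSub G c j).Adj e.1 e.2 := by
      intro e he
      obtain ⟨a, rfl⟩ := hmem e he
      exact hcolor a.1 a.2 (eqv a).1 (eqv a).2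
    refine ⟨M', ⟨⟨hadjM', ?_⟩, ?_⟩, ?_⟩
    · intro e he f hf hef
      obtain ⟨a, rfl⟩ := hmem e he
      obtain ⟨a', rfl⟩ := hmem f hf
      have hane : a ≠ a' := fun h => hef (by rw [h])
      refine ⟨?_, ?_, ?_, ?_⟩
      · simpa using fun h => hane (Subtype.ext h)
      · simp
      · simp
      · simpa using fun h => hane (eqv.injective (Subtype.ext h))
    · intro e he f hf
      obtain ⟨a, rfl⟩ := hmem e he
      obtain ⟨a', rfl⟩ := hmem f hf
      exact (hcolor a.1 a.2 b0 hb0).reachable.trans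
        (hcolor a'.1 a'.2 b0 hb0).symm.reachable
    · rw [hM'def, Finset.card_image_of_injective, Finset.card_attach, hA'card]
      intro a a' h
      exact Subtype.ext (Sum.inl_injective (congrArg Prod.fst h))
end

section
/- Let G be a complete multipartite graph with at least 3 parts, and let E(G) = E1 ∪ E2 be a partition of its edges, with Gi = G[Ei]. If G1 is disconnected, then all edges of G2 lie in a single connected component of G2; that is, the maximum size of a connected matching in G2 equals the maximum size of a matching in G2. -/
open SimpleGraph

variable {V : Type*}

private theorem stmt7_aux {V : Type*} (s : ℕ) (hs : 3 ≤ s)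
    (p : V → Fin s) (hp : Function.Surjective p)
    (G : SimpleGraph V) (hG : G = SimpleGraph.fromRel (fun u v => p u ≠ p v))
    (c : Sym2 V → Fin 2)
    (hdisc : ¬ (SimpleGraph.fromRel (fun u v => G.Adj u v ∧ c s(u, v) = 0)).Connected) :
    (∀ u v u' v', (SimpleGraph.fromRel (fun u v => G.Adj u v ∧ c s(u, v) = 1)).Adj u v →
      (SimpleGraph.fromRel (fun u v => G.Adj u v ∧ c s(u, v) = 1)).Adj u' v' →
      (SimpleGraph.fromRel (fun u v => G.Adj u v ∧ c s(u, v) = 1)).Reachable u u') := by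
  classical
  set G1 := SimpleGraph.fromRel (fun u v => G.Adj u v ∧ c s(u, v) = (0 : Fin 2)) with hG1
  set G2 := SimpleGraph.fromRel (fun u v => G.Adj u v ∧ c s(u, v) = (1 : Fin 2)) with hG2
  have hV : Nonempty V := ⟨(hp ⟨0, by omega⟩).choose⟩
  have hGadj : ∀ u v, G.Adj u v ↔ p u ≠ p v := by
    intro u v; subst hG
    rw [SimpleGraph.fromRel_adj]
    constructor
    · rintro ⟨_, h | h⟩
      · exact h
      · exact fun e => h e.symm
    · intro h; exact ⟨fun e => h (by rw [e]), Or.inl h⟩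
  have hCadj : ∀ (i : Fin 2) u v,
      (SimpleGraph.fromRel (fun u v => G.Adj u v ∧ c s(u, v) = i)).Adj u v ↔
        G.Adj u v ∧ c s(u,v) = i := by
    intro i u v
    rw [SimpleGraph.fromRel_adj]
    constructor
    · rintro ⟨hne, ⟨h1,h2⟩ | ⟨h1,h2⟩⟩
      · exact ⟨h1, h2⟩
      · exact ⟨h1.symm, by rwa [Sym2.eq_swap]⟩
    · rintro ⟨h1,h2⟩; exact ⟨h1.ne, Or.inl ⟨h1,h2⟩⟩
  have hpart : ∀ u v, G2.Adj u v → p u ≠ p v := by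
    intro u v h
    exact (hGadj u v).1 ((hCadj 1 u v).1 h).1
  obtain ⟨a, b, hab⟩ : ∃ a b, ¬ G1.Reachable a b := by
    by_contra h; push_neg at h
    haveI := hV
    exact hdisc (SimpleGraph.Connected.mk fun u v => h u v)
  set A : Set V := {x | G1.Reachable a x} with hA
  have haA : a ∈ A := SimpleGraph.Reachable.refl a
  have hbA : b ∉ A := hab
  have hclosed : ∀ x y, x ∈ A → G1.Adj x y → y ∈ A := by
    intro x y hx hxy
    exact SimpleGraph.Reachable.trans hx hxy.reachable
  have hfin2 : ∀ x : Fin 2, x = 0 ∨ x = 1 := by decide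
  have hcross : ∀ u v, u ∈ A → v ∉ A → p u ≠ p v → G2.Adj u v := by
    intro u v hu hv hpv
    have hg : G.Adj u v := (hGadj u v).2 hpv
    rcases hfin2 (c s(u,v)) with h0 | h1
    · exact absurd (hclosed u v hu ((hCadj 0 u v).2 ⟨hg, h0⟩)) hv
    · exact (hCadj 1 u v).2 ⟨hg, h1⟩
  have hthird : ∀ x y : Fin s, ∃ t : Fin s, t ≠ x ∧ t ≠ y := by
    intro x y
    by_contra h
    push_neg at h
    have hval : ∀ n : ℕ, (hn : n < s) → n = x.val ∨ n = y.val := by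
      intro n hn
      by_cases hx : (⟨n, hn⟩ : Fin s) = x
      · exact Or.inl (by rw [← hx])
      · exact Or.inr (by rw [← h _ hx])
    have e0 := hval 0 (by omega)
    have e1 := hval 1 (by omega)
    have e2 := hval 2 (by omega)
    omega
  have L1 : ∀ u v u' v', u ∈ A → v ∉ A → p u ≠ p v → u' ∈ A → v' ∉ A → p u' ≠ p v' →
      G2.Reachable u u' := by
    intro u v u' v' hu hv hpuv hu' hv' hpuv'
    have huv := hcross u v hu hv hpuv
    have huv' := hcross u' v' hu' hv' hpuv'
    by_cases h1 : p u ≠ p v'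
    · exact ((hcross u v' hu hv' h1).reachable).trans huv'.symm.reachable
    push_neg at h1
    by_cases h2 : p u' ≠ p v
    · exact huv.reachable.trans (hcross u' v hu' hv h2).symm.reachable
    push_neg at h2
    obtain ⟨t, htx, hty⟩ := hthird (p u) (p u')
    obtain ⟨w, hw⟩ := hp t
    by_cases hwA : w ∈ A
    · have e1 : G2.Adj w v := hcross w v hwA hv (by rw [hw, ← h2]; exact hty)
      have e2 : G2.Adj w v' := hcross w v' hwA hv' (by rw [hw, ← h1]; exact htx)
      exact huv.reachable.trans (e1.symm.reachable.trans (e2.reachable.trans huv'.symm.reachable))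
    · have e1 : G2.Adj u w := hcross u w hu hwA (by rw [hw]; exact fun e => htx e.symm)
      have e2 : G2.Adj u' w := hcross u' w hu' hwA (by rw [hw]; exact fun e => hty e.symm)
      exact e1.reachable.trans e2.symm.reachable
  -- L2 : every G2-edge reaches a cross pair
  have L2 : ∀ x y, G2.Adj x y → ∃ u v, u ∈ A ∧ v ∉ A ∧ p u ≠ p v ∧ G2.Reachable x u := by
    intro x y hxy
    have hpxy := hpart x y hxy
    by_cases hxA : x ∈ A
    · by_cases hyA : y ∈ A
      · -- both in A, use b ∉ A
        by_cases hb1 : p x ≠ p b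
        · exact ⟨x, b, hxA, hbA, hb1, SimpleGraph.Reachable.refl x⟩
        · push_neg at hb1
          exact ⟨y, b, hyA, hbA, by rw [← hb1]; exact fun e => hpxy e.symm,
            hxy.reachable⟩
      · exact ⟨x, y, hxA, hyA, hpxy, SimpleGraph.Reachable.refl x⟩
    · by_cases hyA : y ∈ A
      · exact ⟨y, x, hyA, hxA, fun e => hpxy e.symm, hxy.reachable⟩
      · -- both outside A, use a ∈ A
        by_cases ha1 : p a ≠ p x
        · exact ⟨a, x, haA, hxA, ha1, (hcross a x haA hxA ha1).symm.reachable⟩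
        · push_neg at ha1
          have ha2 : p a ≠ p y := by rw [ha1]; exact hpxy
          exact ⟨a, y, haA, hyA, ha2,
            hxy.reachable.trans (hcross a y haA hyA ha2).symm.reachable⟩
  intro u v u' v' h h'
  obtain ⟨x1, y1, hx1, hy1, hp1, hr1⟩ := L2 u v h
  obtain ⟨x2, y2, hx2, hy2, hp2, hr2⟩ := L2 u' v' h'
  exact hr1.trans ((L1 x1 y1 x2 y2 hx1 hy1 hp1 hx2 hy2 hp2).trans hr2.symm)

/-- In a 2-edge-colored complete multipartite graph with at least 3 parts, if
`G₁` is disconnected then all edges of `G₂` lie in a single component of `G₂`;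
in particular every matching of `G₂` yields a connected matching of `G₂` of
the same size. -/
theorem stmt7 {V : Type*} [Fintype V] (s : ℕ) (hs : 3 ≤ s)
    (p : V → Fin s) (hp : Function.Surjective p)
    (G : SimpleGraph V) (hG : G = SimpleGraph.fromRel (fun u v => p u ≠ p v))
    (c : Sym2 V → Fin 2)
    (hdisc : ¬ (colorSub G c 0).Connected) :
    (∀ u v u' v', (colorSub G c 1).Adj u v → (colorSub G c 1).Adj u' v' →
      (colorSub G c 1).Reachable u u') ∧
    (∀ M, IsMatchingSet (colorSub G c 1) M →
      ∃ M', ConnMatching (colorSub G c 1) M' ∧ M'.card = M.card) := by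
  have L := stmt7_aux s hs p hp G hG c hdisc
  refine ⟨L, fun M hM => ⟨M, ⟨hM, fun e he f hf => ?_⟩, rfl⟩⟩
  exact L e.1 e.2 f.1 f.2 (hM.1 e he) (hM.1 f hf)
end
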